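/- arXiv:2201.11419 — 8 statements merged into one kernel-verified Lean document; each statement's English description precedes it below -/
import Mathlib

section
/- For every T > 0, the function u(t,r) := (2/r) arctan(r/(√2 (T − t))) satisfies ∂_t² u(t,r) − ∂_r² u(t,r) − (5/r) ∂_r u(t,r) + (3 sin(2 r u(t,r)) − 6 r u(t,r))/(2 r³) = 0 for all t < T and all r > 0. -/
noncomputable section

/-- The radial profile of the self-similar blowup solution:
`u_*^T(t,r) = (2/r) · arctan(r / (√2 (T − t)))`. -/
def uBlowup (T t r : ℝ) : ℝ := (2 / r) * Real.arctan (r / (Real.sqrt 2 * (T - t)))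

lemma sin_four_arctan (x : ℝ) :
    Real.sin (4 * Real.arctan x) = 4*x*(1 - x^2) / (1 + x^2)^2 := by
  have hpos : (0:ℝ) < 1 + x^2 := by positivity
  have hs : Real.sqrt (1 + x^2) ≠ 0 := by positivity
  have h4 : (4:ℝ) * Real.arctan x = 2*(2*Real.arctan x) := by ring
  have hc2 : Real.cos (2 * Real.arctan x) = 2 * Real.cos (Real.arctan x) ^ 2 - 1 :=
    Real.cos_two_mul _
  rw [h4, Real.sin_two_mul, Real.sin_two_mul, hc2, Real.cos_sq_arctan,
    Real.sin_arctan, Real.cos_arctan]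
  field_simp
  rw [Real.sq_sqrt hpos.le]
  ring

lemma hasDerivAt_uTime (T r : ℝ) (hr : r ≠ 0) (s : ℝ) (hs : s ≠ T) :
    HasDerivAt (fun s => uBlowup T s r)
      (2 * Real.sqrt 2 / (2*(T-s)^2 + r^2)) s := by
  have h2 : (0:ℝ) < Real.sqrt 2 := by positivity
  have hw2 : Real.sqrt 2 ^ 2 = 2 := Real.sq_sqrt (by norm_num)
  have hTs : T - s ≠ 0 := sub_ne_zero.mpr (Ne.symm hs)
  have hd : Real.sqrt 2 * (T - s) ≠ 0 := mul_ne_zero h2.ne' hTs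
  have hden : HasDerivAt (fun s : ℝ => Real.sqrt 2 * (T - s)) (-Real.sqrt 2) s := by
    simpa using ((hasDerivAt_id s).const_sub T).const_mul (Real.sqrt 2)
  have hinner : HasDerivAt (fun s : ℝ => r / (Real.sqrt 2 * (T - s)))
      ((0 * (Real.sqrt 2 * (T - s)) - r * (-Real.sqrt 2)) / (Real.sqrt 2 * (T - s))^2) s :=
    (hasDerivAt_const s r).div hden hd
  have harc := (Real.hasDerivAt_arctan (r / (Real.sqrt 2 * (T - s)))).comp s hinner
  have := harc.const_mul (2 / r)
  refine HasDerivAt.congr_deriv this ?_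
  have hx2 : (r / (Real.sqrt 2 * (T - s)))^2 = r^2 / (2*(T-s)^2) := by
    rw [div_pow, mul_pow, hw2]
  have h3 : (Real.sqrt 2 * (T - s))^2 = 2*(T-s)^2 := by rw [mul_pow, hw2]
  rw [hx2, h3]
  have hp : 2*(T-s)^2 + r^2 ≠ 0 := by positivity
  field_simp
  ring

lemma hasDerivAt_uTime2 (T r : ℝ) (hr : r ≠ 0) (t : ℝ) :
    HasDerivAt (fun s : ℝ => 2 * Real.sqrt 2 / (2*(T-s)^2 + r^2))
      (8 * Real.sqrt 2 * (T-t) / (2*(T-t)^2 + r^2)^2) t := by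
  have hp : 2*(T-t)^2 + r^2 ≠ 0 := by positivity
  have hden : HasDerivAt (fun s : ℝ => 2*(T-s)^2 + r^2) (-4*(T-t)) t := by
    have h1 : HasDerivAt (fun s : ℝ => T - s) (-1) t := by
      simpa using (hasDerivAt_id t).const_sub T
    have h2 := ((h1.pow 2).const_mul 2).add_const (r^2)
    refine HasDerivAt.congr_deriv h2 ?_
    ring
  have := (hasDerivAt_const t (2 * Real.sqrt 2)).div hden hp
  refine HasDerivAt.congr_deriv this ?_
  field_simp
  ring

lemma hasDerivAt_uSpace1 (c : ℝ) (hc : c ≠ 0) (ρ : ℝ) (hρ : ρ ≠ 0) :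
    HasDerivAt (fun ρ : ℝ => 2/ρ * Real.arctan (ρ/c))
      (-2/ρ^2 * Real.arctan (ρ/c) + 2*c/(ρ*(c^2+ρ^2))) ρ := by
  have hcp : c^2 + ρ^2 ≠ 0 := by positivity
  have h1 : HasDerivAt (fun ρ : ℝ => 2/ρ) ((0 * ρ - 2 * 1)/ρ^2) ρ :=
    (hasDerivAt_const ρ 2).div (hasDerivAt_id ρ) hρ
  have h2 : HasDerivAt (fun ρ : ℝ => Real.arctan (ρ/c))
      (1/(1+(ρ/c)^2) * (1/c)) ρ :=
    by have := (Real.hasDerivAt_arctan (ρ/c)).comp ρ ((hasDerivAt_id ρ).div_const c); exact this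
  refine HasDerivAt.congr_deriv (h1.mul h2) ?_
  have hx : (1:ℝ)/(1+(ρ/c)^2) = c^2/(c^2+ρ^2) := by
    rw [div_pow]; field_simp
  rw [hx]
  field_simp
  ring

lemma hasDerivAt_uSpace2 (c : ℝ) (hc : c ≠ 0) (r : ℝ) (hr : r ≠ 0) :
    HasDerivAt (fun ρ : ℝ => -2/ρ^2 * Real.arctan (ρ/c) + 2*c/(ρ*(c^2+ρ^2)))
      (4/r^3 * Real.arctan (r/c) - 2*c/(r^2*(c^2+r^2))
        - 2*c*(c^2+3*r^2)/(r^2*(c^2+r^2)^2)) r := by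
  have hcp : c^2 + r^2 ≠ 0 := by positivity
  have hr2 : r^2 ≠ 0 := pow_ne_zero _ hr
  have h1 : HasDerivAt (fun ρ : ℝ => -2/ρ^2)
      ((0 * r^2 - (-2) * (2 * r^(2-1) * 1))/(r^2)^2) r :=
    (hasDerivAt_const r (-2)).div ((hasDerivAt_id r).pow 2) hr2
  have h2 : HasDerivAt (fun ρ : ℝ => Real.arctan (ρ/c))
      (1/(1+(r/c)^2) * (1/c)) r :=
    by have := (Real.hasDerivAt_arctan (r/c)).comp r ((hasDerivAt_id r).div_const c); exact this
  have hq : HasDerivAt (fun ρ : ℝ => ρ*(c^2+ρ^2)) (1*(c^2+r^2) + r*(0 + 2*r^(2-1)*1)) r :=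
    (hasDerivAt_id r).mul ((hasDerivAt_const r (c^2)).add ((hasDerivAt_id r).pow 2))
  have hqne : r*(c^2+r^2) ≠ 0 := mul_ne_zero hr hcp
  have h3 := (hasDerivAt_const r (2*c)).div hq hqne
  refine HasDerivAt.congr_deriv ((h1.mul h2).add h3) ?_
  have hx : (1:ℝ)/(1+(r/c)^2) = c^2/(c^2+r^2) := by
    rw [div_pow]; field_simp
  rw [hx]
  field_simp
  ring

lemma iteratedDeriv_two' (f : ℝ → ℝ) : iteratedDeriv 2 f = deriv (deriv f) := by
  have : (2:ℕ) = 1 + 1 := rfl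
  rw [this, iteratedDeriv_succ, iteratedDeriv_one]

/-- For every `T > 0`, the function `u(t,r) = (2/r) arctan(r/(√2 (T−t)))`
satisfies the reduced wave maps equation
`∂_t² u − ∂_r² u − (5/r) ∂_r u + (3 sin(2ru) − 6ru)/(2r³) = 0`
for all `t < T` and `r > 0`. -/
theorem blowup_solves_reduced_wave_maps (T : ℝ) (hT : 0 < T) (t r : ℝ) (ht : t < T)
    (hr : 0 < r) :
    iteratedDeriv 2 (fun s => uBlowup T s r) t
      - iteratedDeriv 2 (fun ρ => uBlowup T t ρ) r
      - (5 / r) * deriv (fun ρ => uBlowup T t ρ) r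
      + (3 * Real.sin (2 * r * uBlowup T t r) - 6 * r * uBlowup T t r) / (2 * r ^ 3) = 0 := by
  have hrne : r ≠ 0 := hr.ne'
  set c := Real.sqrt 2 * (T - t) with hcdef
  have hc : 0 < c := mul_pos (by positivity) (sub_pos.mpr ht)
  have hcp : c^2 + r^2 ≠ 0 := by positivity
  -- time second derivative
  have htime : iteratedDeriv 2 (fun s => uBlowup T s r) t
      = 8 * Real.sqrt 2 * (T-t) / (2*(T-t)^2 + r^2)^2 := by
    rw [iteratedDeriv_two']
    have hev : deriv (fun s => uBlowup T s r)
        =ᶠ[nhds t] fun s => 2 * Real.sqrt 2 / (2*(T-s)^2 + r^2) := by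
      filter_upwards [Iio_mem_nhds ht] with s hs
      exact (hasDerivAt_uTime T r hrne s (ne_of_lt hs)).deriv
    rw [hev.deriv_eq]
    exact (hasDerivAt_uTime2 T r hrne t).deriv
  -- space function
  have hfun : (fun ρ => uBlowup T t ρ) = fun ρ : ℝ => 2/ρ * Real.arctan (ρ/c) := by
    funext ρ; rw [uBlowup]
  have hsp1 : deriv (fun ρ => uBlowup T t ρ) r
      = -2/r^2 * Real.arctan (r/c) + 2*c/(r*(c^2+r^2)) := by
    rw [hfun]; exact (hasDerivAt_uSpace1 c hc.ne' r hrne).deriv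
  have hsp2 : iteratedDeriv 2 (fun ρ => uBlowup T t ρ) r
      = 4/r^3 * Real.arctan (r/c) - 2*c/(r^2*(c^2+r^2))
        - 2*c*(c^2+3*r^2)/(r^2*(c^2+r^2)^2) := by
    rw [iteratedDeriv_two', hfun]
    have hev : deriv (fun ρ : ℝ => 2/ρ * Real.arctan (ρ/c))
        =ᶠ[nhds r] fun ρ : ℝ => -2/ρ^2 * Real.arctan (ρ/c) + 2*c/(ρ*(c^2+ρ^2)) := by
      filter_upwards [compl_singleton_mem_nhds hrne] with ρ hρ
      exact (hasDerivAt_uSpace1 c hc.ne' ρ hρ).deriv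
    rw [hev.deriv_eq]
    exact (hasDerivAt_uSpace2 c hc.ne' r hrne).deriv
  -- nonlinearity
  have huval : uBlowup T t r = 2/r * Real.arctan (r/c) := by rw [uBlowup]
  have h4A : 2 * r * uBlowup T t r = 4 * Real.arctan (r/c) := by
    rw [huval]; field_simp; ring
  have hsin : Real.sin (2 * r * uBlowup T t r)
      = 4*(r/c)*(1 - (r/c)^2) / (1 + (r/c)^2)^2 := by
    rw [h4A]; exact sin_four_arctan (r/c)
  -- convert the time term to c
  have hc2 : 2*(T-t)^2 = c^2 := by rw [hcdef, mul_pow, Real.sq_sqrt] <;> norm_num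
  have h8 : 8 * Real.sqrt 2 * (T-t) = 8 * c := by rw [hcdef]; ring
  rw [htime, hsp2, hsp1, hsin, huval, hc2, h8]
  have h1x : (1:ℝ) + (r/c)^2 ≠ 0 := by positivity
  field_simp
  ring
end
end

section
/- Let R₀ > 0. Then there exists a constant C > 0 such that for all R ≥ R₀ and all twice continuously differentiable functions f : [0,R] → ℝ one has ∫₀^R |f(ρ)|² ρ dρ ≤ C ( ∫₀^R (|f(ρ)|² + |f′(ρ)|²) ρ⁵ dρ + ∫₀^R |f″(ρ) + 5 f′(ρ)/ρ|² ρ⁵ dρ ) and ∫₀^R |f′(ρ)|² ρ³ dρ ≤ C ( ∫₀^R (|f(ρ)|² + |f′(ρ)|²) ρ⁵ dρ + ∫₀^R |f″(ρ) + 5 f′(ρ)/ρ|² ρ⁵ dρ ). -/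
noncomputable section

open MeasureTheory Set


lemma radial_setup {R : ℝ} (hR : 0 < R) {f : ℝ → ℝ}
    (hf : ContDiffOn ℝ 2 f (Set.Icc 0 R)) {ρ : ℝ} (hρ : ρ ∈ Set.Ioo 0 R) :
    HasDerivAt f (derivWithin f (Set.Icc 0 R) ρ) ρ ∧
    deriv f ρ = derivWithin f (Set.Icc 0 R) ρ ∧
    HasDerivAt (derivWithin f (Set.Icc 0 R))
      (derivWithin (derivWithin f (Set.Icc 0 R)) (Set.Icc 0 R) ρ) ρ ∧
    deriv (deriv f) ρ = derivWithin (derivWithin f (Set.Icc 0 R)) (Set.Icc 0 R) ρ := by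
  have hu : UniqueDiffOn ℝ (Set.Icc (0:ℝ) R) := uniqueDiffOn_Icc hR
  have hnb : Set.Icc (0:ℝ) R ∈ nhds ρ := Icc_mem_nhds hρ.1 hρ.2
  have hf1 : ContDiffOn ℝ 1 (derivWithin f (Set.Icc 0 R)) (Set.Icc 0 R) :=
    hf.derivWithin hu (by norm_num)
  have hfd : DifferentiableAt ℝ f ρ :=
    ((hf.differentiableOn (by norm_num)) ρ ⟨hρ.1.le, hρ.2.le⟩).differentiableAt hnb
  have h1 : deriv f ρ = derivWithin f (Set.Icc 0 R) ρ := (derivWithin_of_mem_nhds hnb).symm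
  have hF1d : DifferentiableAt ℝ (derivWithin f (Set.Icc 0 R)) ρ :=
    ((hf1.differentiableOn (by norm_num)) ρ ⟨hρ.1.le, hρ.2.le⟩).differentiableAt hnb
  have h2 : deriv (derivWithin f (Set.Icc 0 R)) ρ
      = derivWithin (derivWithin f (Set.Icc 0 R)) (Set.Icc 0 R) ρ :=
    (derivWithin_of_mem_nhds hnb).symm
  refine ⟨h1 ▸ hfd.hasDerivAt, h1, h2 ▸ hF1d.hasDerivAt, ?_⟩
  have heq : deriv f =ᶠ[nhds ρ] derivWithin f (Set.Icc 0 R) := by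
    filter_upwards [Ioo_mem_nhds hρ.1 hρ.2] with x hx
    exact (derivWithin_of_mem_nhds (Icc_mem_nhds hx.1 hx.2)).symm
  rw [heq.deriv_eq, h2]

/-- FTC on `Ioo` with continuous derivative up to the boundary. -/
lemma ftc_Ioo {g g' : ℝ → ℝ} {a b : ℝ} (hab : a ≤ b) (hg : ContinuousOn g (Set.Icc a b))
    (hder : ∀ x ∈ Set.Ioo a b, HasDerivAt g (g' x) x) (hg' : ContinuousOn g' (Set.Icc a b)) :
    ∫ x in Set.Ioo a b, g' x = g b - g a := by
  have hint : IntervalIntegrable g' volume a b := by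
    apply ContinuousOn.intervalIntegrable
    rwa [uIcc_of_le hab]
  rw [← MeasureTheory.integral_Ioc_eq_integral_Ioo, ← intervalIntegral.integral_of_le hab]
  exact intervalIntegral.integral_eq_sub_of_hasDerivAt_of_le hab hg hder hint

set_option maxHeartbeats 2000000 in
/-- Radial Hardy-type inequalities on `B⁶_R`, uniform over `R ≥ R₀`:
for all `R ≥ R₀` and all twice continuously differentiable `f : [0,R] → ℝ`,
`∫₀^R |f|² ρ dρ` and `∫₀^R |f′|² ρ³ dρ` are bounded by a constant times the squared
radial `H²(B⁶_R)`-norm `∫₀^R (|f|²+|f′|²) ρ⁵ dρ + ∫₀^R |f″ + 5f′/ρ|² ρ⁵ dρ`. -/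
theorem radial_hardy_dim6 (R₀ : ℝ) (hR₀ : 0 < R₀) :
    ∃ C > (0:ℝ), ∀ R ≥ R₀, ∀ f : ℝ → ℝ, ContDiffOn ℝ 2 f (Set.Icc 0 R) →
      ((∫ ρ in Set.Ioo 0 R, |f ρ| ^ 2 * ρ) ≤
        C * ((∫ ρ in Set.Ioo 0 R, (|f ρ| ^ 2 + |deriv f ρ| ^ 2) * ρ ^ 5)
          + ∫ ρ in Set.Ioo 0 R, |deriv (deriv f) ρ + 5 * deriv f ρ / ρ| ^ 2 * ρ ^ 5))
      ∧ ((∫ ρ in Set.Ioo 0 R, |deriv f ρ| ^ 2 * ρ ^ 3) ≤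
        C * ((∫ ρ in Set.Ioo 0 R, (|f ρ| ^ 2 + |deriv f ρ| ^ 2) * ρ ^ 5)
          + ∫ ρ in Set.Ioo 0 R, |deriv (deriv f) ρ + 5 * deriv f ρ / ρ| ^ 2 * ρ ^ 5)) := by
  set C₁ : ℝ := (2 / R₀ + 1) * 32 / R₀ ^ 3 with hC₁
  have hC₁pos : 0 < C₁ := by positivity
  refine ⟨1 + C₁, by positivity, ?_⟩
  intro R hR f hf
  have hR0 : 0 < R := hR₀.trans_le hR
  set F1 : ℝ → ℝ := derivWithin f (Set.Icc 0 R) with hF1def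
  set F2 : ℝ → ℝ := derivWithin F1 (Set.Icc 0 R) with hF2def
  have hu : UniqueDiffOn ℝ (Set.Icc (0:ℝ) R) := uniqueDiffOn_Icc hR0
  have hfc : ContinuousOn f (Set.Icc 0 R) := hf.continuousOn
  have hf1 : ContDiffOn ℝ 1 F1 (Set.Icc 0 R) := hf.derivWithin hu (by norm_num)
  have hF1c : ContinuousOn F1 (Set.Icc 0 R) := hf1.continuousOn
  have hF2c : ContinuousOn F2 (Set.Icc 0 R) := hf1.continuousOn_derivWithin hu le_rfl
  have hder : ∀ ρ ∈ Set.Ioo (0:ℝ) R, HasDerivAt f (F1 ρ) ρ :=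
    fun ρ hρ => (radial_setup hR0 hf hρ).1
  have hd1 : ∀ ρ ∈ Set.Ioo (0:ℝ) R, deriv f ρ = F1 ρ :=
    fun ρ hρ => (radial_setup hR0 hf hρ).2.1
  have hderF1 : ∀ ρ ∈ Set.Ioo (0:ℝ) R, HasDerivAt F1 (F2 ρ) ρ :=
    fun ρ hρ => (radial_setup hR0 hf hρ).2.2.1
  have hd2 : ∀ ρ ∈ Set.Ioo (0:ℝ) R, deriv (deriv f) ρ = F2 ρ :=
    fun ρ hρ => (radial_setup hR0 hf hρ).2.2.2
  -- the clean integrands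
  set Q : ℝ → ℝ := fun ρ => (f ρ) ^ 2 * ρ with hQdef
  set P : ℝ → ℝ := fun ρ => (F1 ρ) ^ 2 * ρ ^ 3 with hPdef
  set A : ℝ → ℝ := fun ρ => ((f ρ) ^ 2 + (F1 ρ) ^ 2) * ρ ^ 5 with hAdef
  set B : ℝ → ℝ := fun ρ => (F2 ρ * ρ + 5 * F1 ρ) ^ 2 * ρ ^ 3 with hBdef
  -- rewrite the statement integrals
  have hQeq : (∫ ρ in Set.Ioo 0 R, |f ρ| ^ 2 * ρ) = ∫ ρ in Set.Ioo 0 R, Q ρ := by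
    refine setIntegral_congr_fun measurableSet_Ioo fun ρ hρ => ?_
    simp [hQdef, sq_abs]
  have hAeq : (∫ ρ in Set.Ioo 0 R, (|f ρ| ^ 2 + |deriv f ρ| ^ 2) * ρ ^ 5)
      = ∫ ρ in Set.Ioo 0 R, A ρ := by
    refine setIntegral_congr_fun measurableSet_Ioo fun ρ hρ => ?_
    simp [hAdef, sq_abs, hd1 ρ hρ]
  have hBeq : (∫ ρ in Set.Ioo 0 R, |deriv (deriv f) ρ + 5 * deriv f ρ / ρ| ^ 2 * ρ ^ 5)
      = ∫ ρ in Set.Ioo 0 R, B ρ := by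
    refine setIntegral_congr_fun measurableSet_Ioo fun ρ hρ => ?_
    have hρ0 : ρ ≠ 0 := ne_of_gt hρ.1
    rw [hd1 ρ hρ, hd2 ρ hρ, sq_abs]
    simp only [hBdef]
    field_simp
  have hPeq : (∫ ρ in Set.Ioo 0 R, |deriv f ρ| ^ 2 * ρ ^ 3) = ∫ ρ in Set.Ioo 0 R, P ρ := by
    refine setIntegral_congr_fun measurableSet_Ioo fun ρ hρ => ?_
    simp [hPdef, sq_abs, hd1 ρ hρ]
  rw [hQeq, hAeq, hBeq, hPeq]
  -- continuity of the integrands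
  have hQc : ContinuousOn Q (Set.Icc 0 R) := by
    simp only [hQdef]; exact (hfc.pow 2).mul continuousOn_id
  have hPc : ContinuousOn P (Set.Icc 0 R) := by
    simp only [hPdef]; exact (hF1c.pow 2).mul (continuousOn_id.pow 3)
  have hAc : ContinuousOn A (Set.Icc 0 R) := by
    simp only [hAdef]; exact ((hfc.pow 2).add (hF1c.pow 2)).mul (continuousOn_id.pow 5)
  have hBc : ContinuousOn B (Set.Icc 0 R) := by
    simp only [hBdef]
    exact (((hF2c.mul continuousOn_id).add (continuousOn_const.mul hF1c)).pow 2).mul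
      (continuousOn_id.pow 3)
  have mkInt : ∀ {g : ℝ → ℝ}, ContinuousOn g (Set.Icc 0 R) →
      IntegrableOn g (Set.Ioo 0 R) := fun hg =>
    hg.integrableOn_Icc.mono_set Set.Ioo_subset_Icc_self
  have hQi := mkInt hQc
  have hPi := mkInt hPc
  have hAi := mkInt hAc
  have hBi := mkInt hBc
  have hAnn : (0:ℝ) ≤ ∫ ρ in Set.Ioo 0 R, A ρ := by
    refine setIntegral_nonneg measurableSet_Ioo fun ρ hρ => ?_
    have := hρ.1.le; positivity
  have hBnn : (0:ℝ) ≤ ∫ ρ in Set.Ioo 0 R, B ρ := by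
    refine setIntegral_nonneg measurableSet_Ioo fun ρ hρ => ?_
    have := hρ.1.le; positivity
  -- KEY INEQUALITY 2 : 5 ∫ P ≤ ∫ B
  have key2 : 5 * (∫ ρ in Set.Ioo 0 R, P ρ) ≤ ∫ ρ in Set.Ioo 0 R, B ρ := by
    set G : ℝ → ℝ := fun ρ => 5 * (F1 ρ) ^ 2 * ρ ^ 4 with hGdef
    set G' : ℝ → ℝ := fun ρ => 10 * F1 ρ * F2 ρ * ρ ^ 4 + 20 * (F1 ρ) ^ 2 * ρ ^ 3 with hG'def
    have hGc : ContinuousOn G (Set.Icc 0 R) := by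
      simp only [hGdef]
      exact (continuousOn_const.mul (hF1c.pow 2)).mul (continuousOn_id.pow 4)
    have hG'c : ContinuousOn G' (Set.Icc 0 R) := by
      simp only [hG'def]
      exact (((continuousOn_const.mul hF1c).mul hF2c).mul (continuousOn_id.pow 4)).add
        ((continuousOn_const.mul (hF1c.pow 2)).mul (continuousOn_id.pow 3))
    have hGder : ∀ x ∈ Set.Ioo (0:ℝ) R, HasDerivAt G (G' x) x := by
      intro x hx
      have h := (((hderF1 x hx).fun_pow 2).const_mul 5).mul (hasDerivAt_pow 4 x)
      refine h.congr_deriv ?_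
      simp only [hG'def]; push_cast; ring
    have hftcG : ∫ x in Set.Ioo 0 R, G' x = G R - G 0 := ftc_Ioo hR0.le hGc hGder hG'c
    have hsplit : ∫ ρ in Set.Ioo 0 R, B ρ
        = (∫ ρ in Set.Ioo 0 R, (F2 ρ) ^ 2 * ρ ^ 5)
          + ((∫ ρ in Set.Ioo 0 R, G' ρ) + ∫ ρ in Set.Ioo 0 R, 5 * P ρ) := by
      have hF2i : IntegrableOn (fun ρ => (F2 ρ) ^ 2 * ρ ^ 5) (Set.Ioo 0 R) :=
        mkInt ((hF2c.pow 2).mul (continuousOn_id.pow 5))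
      have hG'i : IntegrableOn G' (Set.Ioo 0 R) := mkInt hG'c
      have h5Pi : IntegrableOn (fun ρ => 5 * P ρ) (Set.Ioo 0 R) := hPi.const_mul 5
      have e1 : ∫ ρ in Set.Ioo 0 R, B ρ
          = ∫ ρ in Set.Ioo 0 R, ((F2 ρ) ^ 2 * ρ ^ 5 + (G' ρ + 5 * P ρ)) := by
        refine setIntegral_congr_fun measurableSet_Ioo fun ρ hρ => ?_
        simp only [hBdef, hG'def, hPdef]
        ring
      have hsum_i : IntegrableOn (fun ρ => G' ρ + 5 * P ρ) (Set.Ioo 0 R) := hG'i.add h5Pi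
      rw [e1, integral_add hF2i hsum_i, integral_add hG'i h5Pi]
    have hF2nn : (0:ℝ) ≤ ∫ ρ in Set.Ioo 0 R, (F2 ρ) ^ 2 * ρ ^ 5 := by
      refine setIntegral_nonneg measurableSet_Ioo fun ρ hρ => ?_
      have := hρ.1.le; positivity
    have hGRnn : 0 ≤ G R - G 0 := by
      simp only [hGdef]
      have : (0:ℝ) ≤ 5 * (F1 R) ^ 2 * R ^ 4 := by positivity
      simpa using this
    have h5P : ∫ ρ in Set.Ioo 0 R, 5 * P ρ = 5 * ∫ ρ in Set.Ioo 0 R, P ρ :=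
      integral_const_mul 5 P
    linarith [hsplit, hftcG, hF2nn, hGRnn, h5P.symm.le, h5P.le]
  -- KEY INEQUALITY 1a : ∫ Q ≤ ∫ P + f(R)² R²
  have key1a : (∫ ρ in Set.Ioo 0 R, Q ρ)
      ≤ (∫ ρ in Set.Ioo 0 R, P ρ) + (f R) ^ 2 * R ^ 2 := by
    set W' : ℝ → ℝ := fun ρ => 2 * f ρ * F1 ρ * ρ ^ 2 + 2 * (f ρ) ^ 2 * ρ with hW'def
    have hW'c : ContinuousOn W' (Set.Icc 0 R) := by
      simp only [hW'def]
      exact (((continuousOn_const.mul hfc).mul hF1c).mul (continuousOn_id.pow 2)).add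
        ((continuousOn_const.mul (hfc.pow 2)).mul continuousOn_id)
    have hWder : ∀ x ∈ Set.Ioo (0:ℝ) R, HasDerivAt (fun ρ => (f ρ) ^ 2 * ρ ^ 2) (W' x) x := by
      intro x hx
      have h := ((hder x hx).fun_pow 2).mul (hasDerivAt_pow 2 x)
      refine h.congr_deriv ?_
      simp only [hW'def]; push_cast; ring
    have hftcW : ∫ x in Set.Ioo 0 R, W' x = (f R) ^ 2 * R ^ 2 - (f 0) ^ 2 * 0 ^ 2 :=
      ftc_Ioo hR0.le ((hfc.pow 2).mul (continuousOn_id.pow 2)) hWder hW'c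
    have hmono : (∫ ρ in Set.Ioo 0 R, Q ρ)
        ≤ ∫ ρ in Set.Ioo 0 R, (P ρ + W' ρ) := by
      refine setIntegral_mono_on hQi (hPi.add (mkInt hW'c)) measurableSet_Ioo fun ρ hρ => ?_
      have h0 : 0 ≤ ρ := hρ.1.le
      have hsq : 0 ≤ (F1 ρ * ρ + f ρ) ^ 2 * ρ := by positivity
      simp only [hQdef, hPdef, hW'def]
      nlinarith [hsq]
    have hadd : ∫ ρ in Set.Ioo 0 R, (P ρ + W' ρ)
        = (∫ ρ in Set.Ioo 0 R, P ρ) + ∫ ρ in Set.Ioo 0 R, W' ρ :=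
      integral_add hPi (mkInt hW'c)
    have : (f 0) ^ 2 * (0:ℝ) ^ 2 = 0 := by ring
    rw [hadd, hftcW] at hmono
    linarith
  -- KEY INEQUALITY 1b : trace bound  f(R)² R² ≤ C₁ ∫ A
  have intInt : ∀ {g : ℝ → ℝ}, ContinuousOn g (Set.Icc 0 R) → ∀ {u v : ℝ}, 0 ≤ u → u ≤ v →
      v ≤ R → IntervalIntegrable g volume u v := by
    intro g hg u v hu huv hv
    apply ContinuousOn.intervalIntegrable
    rw [uIcc_of_le huv]
    exact hg.mono (Set.Icc_subset_Icc hu hv)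
  have key1b : (f R) ^ 2 * R ^ 2 ≤ C₁ * ∫ ρ in Set.Ioo 0 R, A ρ := by
    set δ : ℝ := R₀ / 2 with hδdef
    have hδpos : 0 < δ := by positivity
    set a : ℝ := R - δ with hadef
    have ha0 : 0 < a := by simp only [hadef, hδdef]; linarith
    have haR : a < R := by simp only [hadef]; linarith
    have hhalf : R / 2 ≤ a := by simp only [hadef, hδdef]; linarith
    set g2 : ℝ → ℝ := fun t => (f t) ^ 2 + (F1 t) ^ 2 with hg2def
    have hg2c : ContinuousOn g2 (Set.Icc 0 R) := by
      simp only [hg2def]; exact (hfc.pow 2).add (hF1c.pow 2)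
    have h2fc : ContinuousOn (fun t => 2 * f t * F1 t) (Set.Icc 0 R) :=
      (continuousOn_const.mul hfc).mul hF1c
    set K : ℝ := ∫ t in a..R, g2 t with hKdef
    -- step i
    have hstep : ∀ s ∈ Set.Icc a R, (f R) ^ 2 ≤ (f s) ^ 2 + K := by
      intro s hs
      have hs0 : 0 < s := ha0.trans_le hs.1
      have hftc : ∫ t in s..R, (2 * f t * F1 t) = (f R) ^ 2 - (f s) ^ 2 := by
        apply intervalIntegral.integral_eq_sub_of_hasDerivAt_of_le hs.2
        · exact (hfc.mono (Set.Icc_subset_Icc hs0.le le_rfl)).pow 2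
        · intro x hx
          have hx' : x ∈ Set.Ioo (0:ℝ) R := ⟨hs0.trans hx.1, hx.2⟩
          have h := (hder x hx').fun_pow 2
          refine h.congr_deriv ?_; push_cast; ring
        · exact intInt h2fc hs0.le hs.2 le_rfl
      have hmono1 : ∫ t in s..R, (2 * f t * F1 t) ≤ ∫ t in s..R, g2 t := by
        refine intervalIntegral.integral_mono_on hs.2 (intInt h2fc hs0.le hs.2 le_rfl)
          (intInt hg2c hs0.le hs.2 le_rfl) fun x hx => ?_
        simp only [hg2def]
        nlinarith [sq_nonneg (f x - F1 x)]
      have hsplit : (∫ t in a..s, g2 t) + ∫ t in s..R, g2 t = K :=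
        intervalIntegral.integral_add_adjacent_intervals
          (intInt hg2c ha0.le hs.1 hs.2) (intInt hg2c hs0.le hs.2 le_rfl)
      have hnn : 0 ≤ ∫ t in a..s, g2 t := by
        refine intervalIntegral.integral_nonneg hs.1 fun x hx => ?_
        simp only [hg2def]; positivity
      linarith
    -- step ii
    have hstep2 : δ * (f R) ^ 2 ≤ K + δ * K := by
      have hfsq : ContinuousOn (fun s => (f s) ^ 2) (Set.Icc 0 R) := hfc.pow 2
      have hmono2 : ∫ s in a..R, (f R) ^ 2 ≤ ∫ s in a..R, ((f s) ^ 2 + K) := by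
        refine intervalIntegral.integral_mono_on haR.le intervalIntegrable_const
          ((intInt hfsq ha0.le haR.le le_rfl).add intervalIntegrable_const) hstep
      have hconst : ∫ s in a..R, (f R) ^ 2 = (R - a) * (f R) ^ 2 := by
        rw [intervalIntegral.integral_const]; simp [smul_eq_mul]
      have hsum : ∫ s in a..R, ((f s) ^ 2 + K)
          = (∫ s in a..R, (f s) ^ 2) + (R - a) * K := by
        rw [intervalIntegral.integral_add (intInt hfsq ha0.le haR.le le_rfl)
          intervalIntegrable_const, intervalIntegral.integral_const]
        simp [smul_eq_mul]
      have hfK : ∫ s in a..R, (f s) ^ 2 ≤ K := by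
        refine intervalIntegral.integral_mono_on haR.le
          (intInt hfsq ha0.le haR.le le_rfl) (intInt hg2c ha0.le haR.le le_rfl) fun x hx => ?_
        simp only [hg2def]
        nlinarith [sq_nonneg (F1 x)]
      have hRa : R - a = δ := by simp only [hadef]; ring
      have hfin : (R - a) * (f R) ^ 2 ≤ (∫ s in a..R, (f s) ^ 2) + (R - a) * K := by
        rw [← hconst, ← hsum]; exact hmono2
      rw [hRa] at hfin
      linarith
    -- step iii
    have hK3 : K ≤ (32 / R ^ 5) * ∫ ρ in Set.Ioo 0 R, A ρ := by
      have hAc' : ContinuousOn (fun t => (32 / R ^ 5) * A t) (Set.Icc 0 R) :=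
        continuousOn_const.mul hAc
      have hm3 : K ≤ ∫ t in a..R, (32 / R ^ 5) * A t := by
        refine intervalIntegral.integral_mono_on haR.le
          (intInt hg2c ha0.le haR.le le_rfl) (intInt hAc' ha0.le haR.le le_rfl) fun x hx => ?_
        have hx0 : R / 2 ≤ x := hhalf.trans hx.1
        have hx0' : 0 < x := lt_of_lt_of_le (by positivity) hx0
        have h5 : (R / 2) ^ 5 ≤ x ^ 5 := pow_le_pow_left₀ (by positivity) hx0 5
        have hg2nn : 0 ≤ g2 x := by simp only [hg2def]; positivity
        simp only [hg2def, hAdef]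
        calc (f x) ^ 2 + (F1 x) ^ 2
            = 32 / R ^ 5 * ((f x) ^ 2 + (F1 x) ^ 2) * (R / 2) ^ 5 := by
              field_simp; ring
          _ ≤ 32 / R ^ 5 * ((f x) ^ 2 + (F1 x) ^ 2) * x ^ 5 := by
              refine mul_le_mul_of_nonneg_left h5 ?_
              positivity
          _ = 32 / R ^ 5 * (((f x) ^ 2 + (F1 x) ^ 2) * x ^ 5) := by ring
      have hIoo : ∫ t in a..R, A t ≤ ∫ ρ in Set.Ioo 0 R, A ρ := by
        rw [intervalIntegral.integral_of_le haR.le, integral_Ioc_eq_integral_Ioo]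
        refine setIntegral_mono_set hAi ?_ ?_
        · refine (ae_restrict_iff' measurableSet_Ioo).mpr (Filter.Eventually.of_forall ?_)
          intro x hx
          have := hx.1.le
          simp only [hAdef]
          positivity
        · exact (Set.Ioo_subset_Ioo ha0.le le_rfl).eventuallyLE
      calc K ≤ ∫ t in a..R, (32 / R ^ 5) * A t := hm3
        _ = (32 / R ^ 5) * ∫ t in a..R, A t := intervalIntegral.integral_const_mul _ _
        _ ≤ (32 / R ^ 5) * ∫ ρ in Set.Ioo 0 R, A ρ := by
            refine mul_le_mul_of_nonneg_left hIoo ?_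
            positivity
    -- combine
    set IA : ℝ := ∫ ρ in Set.Ioo 0 R, A ρ with hIAdef
    set M : ℝ := (32 / R ^ 5) * IA with hMdef
    have h0 : δ * (f R) ^ 2 ≤ (1 + δ) * M := by
      have h := mul_le_mul_of_nonneg_left hK3 hδpos.le
      linarith
    have h1 : (f R) ^ 2 ≤ ((1 + δ) * M) / δ := (le_div_iff₀' hδpos).mpr (by linarith)
    have h2 : (f R) ^ 2 * R ^ 2 ≤ (((1 + δ) * M) / δ) * R ^ 2 :=
      mul_le_mul_of_nonneg_right h1 (by positivity)
    have h3 : (((1 + δ) * M) / δ) * R ^ 2 = ((2 / R₀ + 1) * 32 / R ^ 3) * IA := by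
      simp only [hMdef, hδdef]
      field_simp
    have h4 : ((2 / R₀ + 1) * 32 / R ^ 3) * IA ≤ C₁ * IA := by
      refine mul_le_mul_of_nonneg_right ?_ hAnn
      rw [hC₁]
      gcongr
    linarith
  -- conclusion
  have hP5 : (∫ ρ in Set.Ioo 0 R, P ρ) ≤ (1/5) * ∫ ρ in Set.Ioo 0 R, B ρ := by linarith
  constructor
  · calc (∫ ρ in Set.Ioo 0 R, Q ρ)
        ≤ (∫ ρ in Set.Ioo 0 R, P ρ) + (f R) ^ 2 * R ^ 2 := key1a
      _ ≤ (1/5) * (∫ ρ in Set.Ioo 0 R, B ρ) + C₁ * ∫ ρ in Set.Ioo 0 R, A ρ := by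
          linarith
      _ ≤ (1 + C₁) * ((∫ ρ in Set.Ioo 0 R, A ρ) + ∫ ρ in Set.Ioo 0 R, B ρ) := by
          nlinarith [hAnn, hBnn, hC₁pos]
  · calc (∫ ρ in Set.Ioo 0 R, P ρ)
        ≤ (1/5) * (∫ ρ in Set.Ioo 0 R, B ρ) := hP5
      _ ≤ (1 + C₁) * ((∫ ρ in Set.Ioo 0 R, A ρ) + ∫ ρ in Set.Ioo 0 R, B ρ) := by
          nlinarith [hAnn, hBnn, hC₁pos]
end
end

section
/- Let u₁ ∈ C³([0,1], ℂ) with u₁′(0) = 0 and u₂ ∈ C²([0,1], ℂ) with u₂′(0) = 0, and define on (0,1] the functions v₁(ρ) := −ρ u₁′(ρ) − u₁(ρ) + u₂(ρ) and v₂(ρ) := u₁″(ρ) + (5/ρ) u₁′(ρ) − ρ u₂′(ρ) − 2 u₂(ρ). Then Re [ 2 ∫₀¹ v₁″(ρ) conj(u₁″(ρ)) ρ⁵ dρ + 10 ∫₀¹ v₁′(ρ) conj(u₁′(ρ)) ρ³ dρ + 2 ∫₀¹ v₂′(ρ) conj(u₂′(ρ)) ρ⁵ dρ + v₁(1) conj(u₁(1))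 + v₂(1) conj(u₂(1)) ] ≤ 0. -/
/-! With `a = u₁′`, `b = u₁″`, `d = u₂′`, the real part of the combined integrand is an exact
derivative `G′`, where `G ρ = -ρ⁶‖b‖² - 5ρ⁴‖a‖² - ρ⁶‖d‖² + 2ρ⁵⟪b, d⟫_ℝ`: the cross terms in `a d̄`
of the second and third integrals cancel, and the singular term `5/ρ` of `v₂` is absorbed by the
weight `ρ⁵`. As `G 0 = 0`, the integrals contribute `G 1`, and `G 1` plus the boundary terms at
`ρ = 1` is a negative semidefinite quadratic form in `(u₁′(1), u₁″(1), u₂′(1), u₁(1), u₂(1))`, as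
completing squares shows. -/

open MeasureTheory Set
open scoped RealInnerProductSpace ComplexConjugate

section BoundaryForm

variable {E : Type*} [NormedAddCommGroup E] [InnerProductSpace ℝ E]

theorem boundary_form_nonpos (a b d p q : E) :
    -‖b‖ ^ 2 - 5 * ‖a‖ ^ 2 - ‖d‖ ^ 2 + 2 * ⟪b, d⟫ + ⟪p, -a - p + q⟫
      + ⟪q, b + (5 : ℝ) • a - d - (2 : ℝ) • q⟫ ≤ 0 := by
  have sos : -‖b‖ ^ 2 - 5 * ‖a‖ ^ 2 - ‖d‖ ^ 2 + 2 * ⟪b, d⟫ + ⟪p, -a - p + q⟫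
      + ⟪q, b + (5 : ℝ) • a - d - (2 : ℝ) • q⟫
      = -(‖b - d - (2⁻¹ : ℝ) • q‖ ^ 2 + 5 * ‖a + (10⁻¹ : ℝ) • p - (2⁻¹ : ℝ) • q‖ ^ 2
          + 19 / 20 * ‖p - (5 / 19 : ℝ) • q‖ ^ 2 + 33 / 76 * ‖q‖ ^ 2) := by
    simp only [← real_inner_self_eq_norm_sq, inner_add_left, inner_add_right, inner_sub_left,
      inner_sub_right, inner_neg_right, real_inner_smul_left, real_inner_smul_right]
    rw [real_inner_comm b d, real_inner_comm q b, real_inner_comm q d, real_inner_comm p a,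
      real_inner_comm q a, real_inner_comm q p]
    ring
  rw [sos, neg_nonpos]
  positivity

end BoundaryForm

theorem hasDerivAt_ofReal (x : ℝ) : HasDerivAt (fun ρ : ℝ => (ρ : ℂ)) 1 x := by
  simpa using (hasDerivAt_id x).ofReal_comp

theorem HasDerivAt.neg_ofReal_mul {f : ℝ → ℂ} {f' : ℂ} {x : ℝ} (hf : HasDerivAt f f' x) :
    HasDerivAt (fun ρ : ℝ => -(ρ : ℂ) * f ρ) (-(x : ℂ) * f' - f x) x :=
  ((hasDerivAt_ofReal x).fun_neg.fun_mul hf).congr_deriv (by ring)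

section Derivatives

variable {f g : ℝ → ℂ}

theorem deriv_neg_ofReal_mul_deriv_sub_add (hf : Differentiable ℝ f)
    (hf' : Differentiable ℝ (deriv f)) (hg : Differentiable ℝ g) :
    deriv (fun ρ : ℝ => -(ρ : ℂ) * deriv f ρ - f ρ + g ρ)
      = fun ρ : ℝ => -(ρ : ℂ) * deriv (deriv f) ρ - 2 * deriv f ρ + deriv g ρ := by
  funext x
  have hv : HasDerivAt (fun ρ : ℝ => -(ρ : ℂ) * deriv f ρ - f ρ + g ρ) _ x :=
    ((hf' x).hasDerivAt.neg_ofReal_mul.sub (hf x).hasDerivAt).add (hg x).hasDerivAt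
  rw [hv.deriv]
  ring

theorem deriv_neg_ofReal_mul_deriv_sub_two_mul_add (hf : Differentiable ℝ f)
    (hf' : Differentiable ℝ (deriv f)) (hg : Differentiable ℝ g) :
    deriv (fun ρ : ℝ => -(ρ : ℂ) * deriv f ρ - 2 * f ρ + g ρ)
      = fun ρ : ℝ => -(ρ : ℂ) * deriv (deriv f) ρ - 3 * deriv f ρ + deriv g ρ := by
  funext x
  have hv : HasDerivAt (fun ρ : ℝ => -(ρ : ℂ) * deriv f ρ - 2 * f ρ + g ρ) _ x :=
    ((hf' x).hasDerivAt.neg_ofReal_mul.sub ((hf x).hasDerivAt.const_mul 2)).add (hg x).hasDerivAt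
  rw [hv.deriv]
  ring

theorem deriv_add_five_div_mul_sub_mul_sub_two_mul {x : ℝ} (hx : x ≠ 0)
    (hf : DifferentiableAt ℝ f x) (hf' : DifferentiableAt ℝ (deriv f) x)
    (hg : DifferentiableAt ℝ g x) (hg' : DifferentiableAt ℝ (deriv g) x) :
    deriv (fun ρ : ℝ => deriv f ρ + 5 / (ρ : ℂ) * f ρ - (ρ : ℂ) * deriv g ρ - 2 * g ρ) x
        * conj (deriv g x) * (x : ℂ) ^ 5
      = (deriv (deriv f) x * (x : ℂ) ^ 5 + 5 * deriv f x * (x : ℂ) ^ 4 - 5 * f x * (x : ℂ) ^ 3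
        - deriv (deriv g) x * (x : ℂ) ^ 6 - 3 * deriv g x * (x : ℂ) ^ 5) * conj (deriv g x) := by
  have hx' : (x : ℂ) ≠ 0 := Complex.ofReal_ne_zero.mpr hx
  have hv : HasDerivAt
      (fun ρ : ℝ => deriv f ρ + 5 / (ρ : ℂ) * f ρ - (ρ : ℂ) * deriv g ρ - 2 * g ρ) _ x :=
    ((hf'.hasDerivAt.add (((hasDerivAt_const x (5 : ℂ)).fun_div (hasDerivAt_ofReal x)
      hx').fun_mul hf.hasDerivAt)).sub ((hasDerivAt_ofReal x).fun_mul hg'.hasDerivAt)).sub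
      (hg.hasDerivAt.const_mul 2)
  rw [hv.deriv]
  field_simp
  ring

end Derivatives

noncomputable def dissipationPotential (a b d : ℝ → ℂ) (ρ : ℝ) : ℝ :=
  -ρ ^ 6 * ‖b ρ‖ ^ 2 - 5 * ρ ^ 4 * ‖a ρ‖ ^ 2 - ρ ^ 6 * ‖d ρ‖ ^ 2 + 2 * ρ ^ 5 * ⟪b ρ, d ρ⟫

theorem hasDerivAt_dissipationPotential {a b d : ℝ → ℂ} {c e : ℂ} {x : ℝ}
    (ha : HasDerivAt a (b x) x) (hb : HasDerivAt b c x) (hd : HasDerivAt d e x) :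
    HasDerivAt (dissipationPotential a b d)
      (2 * ((-(x : ℂ) * c - 3 * b x + e) * conj (b x) * (x : ℂ) ^ 5)
        + 10 * ((-(x : ℂ) * b x - 2 * a x + d x) * conj (a x) * (x : ℂ) ^ 3)
        + 2 * ((c * (x : ℂ) ^ 5 + 5 * b x * (x : ℂ) ^ 4 - 5 * a x * (x : ℂ) ^ 3
          - e * (x : ℂ) ^ 6 - 3 * d x * (x : ℂ) ^ 5) * conj (d x))).re x := by
  have hpow (n : ℕ) := hasDerivAt_pow n x
  have hG : HasDerivAt (dissipationPotential a b d) _ x :=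
    ((((hpow 6).fun_neg.fun_mul hb.norm_sq).sub (((hpow 4).const_mul 5).fun_mul ha.norm_sq)).sub
      ((hpow 6).fun_mul hd.norm_sq)).add (((hpow 5).const_mul 2).fun_mul (hb.inner ℝ hd))
  convert hG using 1
  simp only [Complex.inner, Complex.sq_norm, Complex.normSq_apply, ← Complex.ofReal_pow,
    Complex.add_re, Complex.add_im, Complex.sub_re, Complex.sub_im, Complex.mul_re, Complex.mul_im,
    Complex.neg_re, Complex.neg_im, Complex.conj_re, Complex.conj_im, Complex.ofReal_re,
    Complex.ofReal_im, Complex.re_ofNat, Complex.im_ofNat, Nat.cast_ofNat]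
  ring

theorem re_setIntegral_Ioo_eq_sub {f : ℝ → ℂ} {G : ℝ → ℝ} {a b : ℝ} (hab : a ≤ b)
    (hf : Continuous f) (hG : ∀ x, HasDerivAt G (f x).re x) :
    (∫ x in Ioo a b, f x).re = G b - G a := by
  rw [← integral_Ioc_eq_integral_Ioo, ← intervalIntegral.integral_of_le hab, ← Complex.reCLM_apply,
    ← ContinuousLinearMap.intervalIntegral_comp_comm _ (hf.intervalIntegrable a b)]
  exact intervalIntegral.integral_eq_sub_of_hasDerivAt (fun x _ => hG x)
    ((Complex.continuous_re.comp hf).intervalIntegrable a b)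

theorem free_operator_dissipative_general (u₁ u₂ : ℝ → ℂ)
    (hu₁ : ContDiff ℝ 3 u₁) (hu₂ : ContDiff ℝ 2 u₂) :
    (2 * (∫ ρ in Set.Ioo (0:ℝ) 1,
        deriv (deriv (fun ρ : ℝ => -(ρ:ℂ) * deriv u₁ ρ - u₁ ρ + u₂ ρ)) ρ
          * (starRingEnd ℂ) (deriv (deriv u₁) ρ) * (ρ:ℂ) ^ 5)
      + 10 * (∫ ρ in Set.Ioo (0:ℝ) 1,
          deriv (fun ρ : ℝ => -(ρ:ℂ) * deriv u₁ ρ - u₁ ρ + u₂ ρ) ρ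
            * (starRingEnd ℂ) (deriv u₁ ρ) * (ρ:ℂ) ^ 3)
      + 2 * (∫ ρ in Set.Ioo (0:ℝ) 1,
          deriv (fun ρ : ℝ =>
              deriv (deriv u₁) ρ + (5 / (ρ:ℂ)) * deriv u₁ ρ - (ρ:ℂ) * deriv u₂ ρ - 2 * u₂ ρ) ρ
            * (starRingEnd ℂ) (deriv u₂ ρ) * (ρ:ℂ) ^ 5)
      + (-(1:ℂ) * deriv u₁ 1 - u₁ 1 + u₂ 1) * (starRingEnd ℂ) (u₁ 1)
      + (deriv (deriv u₁) 1 + 5 * deriv u₁ 1 - deriv u₂ 1 - 2 * u₂ 1)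
          * (starRingEnd ℂ) (u₂ 1)).re ≤ 0 := by
  have hu₁' : ContDiff ℝ 2 (deriv u₁) := hu₁.deriv'
  have hu₁'' : ContDiff ℝ 1 (deriv (deriv u₁)) := hu₁'.deriv'
  have hu₂' : ContDiff ℝ 1 (deriv u₂) := hu₂.deriv'
  have hd₀ : Differentiable ℝ u₁ := hu₁.differentiable (by simp)
  have hd₁ : Differentiable ℝ (deriv u₁) := hu₁'.differentiable (by simp)
  have hd₂ : Differentiable ℝ (deriv (deriv u₁)) := hu₁''.differentiable one_ne_zero
  have he₀ : Differentiable ℝ u₂ := hu₂.differentiable (by simp)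
  have he₁ : Differentiable ℝ (deriv u₂) := hu₂'.differentiable one_ne_zero
  have hc₁ := hd₁.continuous
  have hc₂ := hd₂.continuous
  have hc₃ := hu₁''.continuous_deriv le_rfl
  have hc₁' := he₁.continuous
  have hc₂' := hu₂'.continuous_deriv le_rfl
  rw [deriv_neg_ofReal_mul_deriv_sub_add hd₀ hd₁ he₀,
    deriv_neg_ofReal_mul_deriv_sub_two_mul_add hd₁ hd₂ he₁,
    setIntegral_congr_fun measurableSet_Ioo fun x hx =>
      deriv_add_five_div_mul_sub_mul_sub_two_mul hx.1.ne' (hd₁ x) (hd₂ x) (he₀ x) (he₁ x),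
    ← integral_const_mul, ← integral_const_mul, ← integral_const_mul,
    ← integral_add, ← integral_add, Complex.add_re, Complex.add_re,
    re_setIntegral_Ioo_eq_sub zero_le_one (by fun_prop) fun x =>
      hasDerivAt_dissipationPotential (hd₁ x).hasDerivAt (hd₂ x).hasDerivAt (he₁ x).hasDerivAt]
  · convert boundary_form_nonpos (deriv u₁ 1) (deriv (deriv u₁) 1) (deriv u₂ 1) (u₁ 1) (u₂ 1)
      using 1
    simp [dissipationPotential, Complex.inner, Complex.real_smul]
  all_goals exact (Continuous.integrableOn_Icc (by fun_prop)).mono_set Ioo_subset_Icc_self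

/-- Dissipativity of the free evolution operator `L̃` of the corotational wave
maps equation in similarity coordinates with respect to the inner product `(·,·)_{H̃}`:
for `u₁ ∈ C³`, `u₂ ∈ C²` with `u₁′(0) = u₂′(0) = 0`, setting
`v₁ = −ρu₁′ − u₁ + u₂` and `v₂ = u₁″ + (5/ρ)u₁′ − ρu₂′ − 2u₂` on `(0,1]`, one has
`Re (L̃u, u)_{H̃} ≤ 0`. -/
theorem free_operator_dissipative (u₁ u₂ : ℝ → ℂ)
    (hu₁ : ContDiff ℝ 3 u₁) (hu₂ : ContDiff ℝ 2 u₂)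
    (hu₁0 : deriv u₁ 0 = 0) (hu₂0 : deriv u₂ 0 = 0) :
    (2 * (∫ ρ in Set.Ioo (0:ℝ) 1,
        deriv (deriv (fun ρ : ℝ => -(ρ:ℂ) * deriv u₁ ρ - u₁ ρ + u₂ ρ)) ρ
          * (starRingEnd ℂ) (deriv (deriv u₁) ρ) * (ρ:ℂ) ^ 5)
      + 10 * (∫ ρ in Set.Ioo (0:ℝ) 1,
          deriv (fun ρ : ℝ => -(ρ:ℂ) * deriv u₁ ρ - u₁ ρ + u₂ ρ) ρ
            * (starRingEnd ℂ) (deriv u₁ ρ) * (ρ:ℂ) ^ 3)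
      + 2 * (∫ ρ in Set.Ioo (0:ℝ) 1,
          deriv (fun ρ : ℝ =>
              deriv (deriv u₁) ρ + (5 / (ρ:ℂ)) * deriv u₁ ρ - (ρ:ℂ) * deriv u₂ ρ - 2 * u₂ ρ) ρ
            * (starRingEnd ℂ) (deriv u₂ ρ) * (ρ:ℂ) ^ 5)
      + (-(1:ℂ) * deriv u₁ 1 - u₁ 1 + u₂ 1) * (starRingEnd ℂ) (u₁ 1)
      + (deriv (deriv u₁) 1 + 5 * deriv u₁ 1 - deriv u₂ 1 - 2 * u₂ 1)
          * (starRingEnd ℂ) (u₂ 1)).re ≤ 0 :=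
  free_operator_dissipative_general u₁ u₂ hu₁ hu₂
end

section
/- Let λ ∈ ℂ with λ ≠ 3/2 and set a(λ) := i(3 − 2λ)/2. Define on (0,1) the functions w₁(ρ) := a(λ)^{−1/2} (1−ρ)^{5/4 − λ/2} (1+ρ)^{−1/4 + λ/2} and w₂(ρ) := a(λ)^{−1/2} (1−ρ)^{−1/4 + λ/2} (1+ρ)^{5/4 − λ/2}. Then both w₁ and w₂ satisfy the equation w″(ρ) + ((−5 + 12λ − 4λ²)/(4(1−ρ²)²)) w(ρ) = 0 on (0,1), and their Wronskian is constant: w₁(ρ) w₂′(ρ) − w₁′(ρ) w₂(ρ) = 2/i = −2i for all ρ ∈ (0,1). -/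
/-!
Write `w = b (1-ρ)^μ (1+ρ)^ν`. Its logarithmic derivative is `g = ν/(1+ρ) - μ/(1-ρ)`, so
`w'' = (g² + g') w`, and when `μ + ν = 1` the factor `g² + g'` collapses to `-4μν/(1-ρ²)²`.
Both `w₁` and `w₂` are of this form, with `(μ, ν)` and `(ν, μ)` for `μ = 5/4 - λ/2`,
`ν = -1/4 + λ/2`, and `4μν = (-5 + 12λ - 4λ²)/4`. The Wronskian of the swapped pair is
`(g₂ - g₁) w₁ w₂ = 2(μ - ν) b²`, and `2(μ - ν) = 3 - 2λ` is cancelled by `b² = a(λ)⁻¹`.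
-/

open Set

theorem Complex.ofReal_one_sub_ne_zero {ρ : ℝ} (h : ρ < 1) : ((1 - ρ : ℝ) : ℂ) ≠ 0 :=
  Complex.ofReal_ne_zero.2 (by linarith)

theorem Complex.ofReal_one_add_ne_zero {ρ : ℝ} (h : -1 < ρ) : ((1 + ρ : ℝ) : ℂ) ≠ 0 :=
  Complex.ofReal_ne_zero.2 (by linarith)

noncomputable def scaledJacobiWeight (b μ ν : ℂ) (ρ : ℝ) : ℂ :=
  b * ((1 - ρ : ℝ) : ℂ) ^ μ * ((1 + ρ : ℝ) : ℂ) ^ ν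

theorem HasDerivAt.ofReal_cpow_const {f : ℝ → ℝ} {f' x : ℝ} (hf : HasDerivAt f f' x)
    (hx : 0 < f x) (μ : ℂ) :
    HasDerivAt (fun y => (f y : ℂ) ^ μ) (μ * f' / f x * (f x : ℂ) ^ μ) x := by
  have hx' : (f x : ℂ) ≠ 0 := Complex.ofReal_ne_zero.2 hx.ne'
  refine ((Complex.hasStrictDerivAt_cpow_const (c := μ)
    (Complex.ofReal_mem_slitPlane.2 hx)).hasDerivAt.comp x hf.ofReal_comp).congr_deriv ?_
  rw [Complex.cpow_sub _ _ hx', Complex.cpow_one]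
  field_simp

section JacobiWeight

variable (b μ ν : ℂ) {ρ : ℝ}

theorem hasDerivAt_scaledJacobiWeight (hρ : ρ ∈ Ioo (-1 : ℝ) 1) :
    HasDerivAt (scaledJacobiWeight b μ ν)
      ((ν / ((1 + ρ : ℝ) : ℂ) - μ / ((1 - ρ : ℝ) : ℂ)) * scaledJacobiWeight b μ ν ρ) ρ := by
  have hu := ((hasDerivAt_id' ρ).const_sub 1).ofReal_cpow_const (by linarith [hρ.2]) μ
  have hv := ((hasDerivAt_id' ρ).const_add 1).ofReal_cpow_const (by linarith [hρ.1]) ν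
  refine ((hu.const_mul b).fun_mul hv).congr_deriv ?_
  simp only [scaledJacobiWeight]
  push_cast
  ring

theorem deriv_scaledJacobiWeight (hρ : ρ ∈ Ioo (-1 : ℝ) 1) :
    deriv (scaledJacobiWeight b μ ν) ρ
      = (ν / ((1 + ρ : ℝ) : ℂ) - μ / ((1 - ρ : ℝ) : ℂ)) * scaledJacobiWeight b μ ν ρ :=
  (hasDerivAt_scaledJacobiWeight b μ ν hρ).deriv

theorem deriv_deriv_scaledJacobiWeight (hρ : ρ ∈ Ioo (-1 : ℝ) 1) :
    deriv (deriv (scaledJacobiWeight b μ ν)) ρ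
      = ((ν / ((1 + ρ : ℝ) : ℂ) - μ / ((1 - ρ : ℝ) : ℂ)) ^ 2
          - ν / ((1 + ρ : ℝ) : ℂ) ^ 2 - μ / ((1 - ρ : ℝ) : ℂ) ^ 2) * scaledJacobiWeight b μ ν ρ := by
  have hderiv : deriv (scaledJacobiWeight b μ ν) =ᶠ[nhds ρ]
      fun x => (ν / ((1 + x : ℝ) : ℂ) - μ / ((1 - x : ℝ) : ℂ)) * scaledJacobiWeight b μ ν x :=
    Filter.eventually_of_mem (isOpen_Ioo.mem_nhds hρ) fun x hx => deriv_scaledJacobiWeight b μ ν hx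
  have hu := Complex.ofReal_one_sub_ne_zero hρ.2
  have hv := Complex.ofReal_one_add_ne_zero hρ.1
  have hu' := ((hasDerivAt_id' ρ).const_sub 1).ofReal_comp
  have hv' := ((hasDerivAt_id' ρ).const_add 1).ofReal_comp
  have hcoeff : HasDerivAt (fun x : ℝ => ν / ((1 + x : ℝ) : ℂ) - μ / ((1 - x : ℝ) : ℂ)) _ ρ :=
    ((hasDerivAt_const ρ ν).fun_div hv' hv).fun_sub ((hasDerivAt_const ρ μ).fun_div hu' hu)
  rw [hderiv.deriv_eq, (hcoeff.fun_mul (hasDerivAt_scaledJacobiWeight b μ ν hρ)).deriv]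
  field_simp
  push_cast
  ring

theorem deriv_deriv_scaledJacobiWeight_add_mul_eq_zero (hμν : μ + ν = 1)
    (hρ : ρ ∈ Ioo (-1 : ℝ) 1) :
    deriv (deriv (scaledJacobiWeight b μ ν)) ρ
      + 4 * μ * ν / (1 - (ρ : ℂ) ^ 2) ^ 2 * scaledJacobiWeight b μ ν ρ = 0 := by
  have hu := Complex.ofReal_one_sub_ne_zero hρ.2
  have hv := Complex.ofReal_one_add_ne_zero hρ.1
  have hsq : (1 : ℂ) - (ρ : ℂ) ^ 2 = ((1 - ρ : ℝ) : ℂ) * ((1 + ρ : ℝ) : ℂ) := by push_cast; ring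
  rw [deriv_deriv_scaledJacobiWeight b μ ν hρ, hsq, ← add_mul]
  obtain rfl : ν = 1 - μ := by linear_combination hμν
  field_simp
  push_cast
  ring

theorem wronskian_scaledJacobiWeight_swap (hμν : μ + ν = 1) (hρ : ρ ∈ Ioo (-1 : ℝ) 1) :
    scaledJacobiWeight b μ ν ρ * deriv (scaledJacobiWeight b ν μ) ρ
      - deriv (scaledJacobiWeight b μ ν) ρ * scaledJacobiWeight b ν μ ρ = 2 * (μ - ν) * b ^ 2 := by
  have hu := Complex.ofReal_one_sub_ne_zero hρ.2
  have hv := Complex.ofReal_one_add_ne_zero hρ.1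
  have hprod : scaledJacobiWeight b μ ν ρ * scaledJacobiWeight b ν μ ρ
      = b ^ 2 * (((1 - ρ : ℝ) : ℂ) * ((1 + ρ : ℝ) : ℂ)) := by
    calc _ = b ^ 2 * (((1 - ρ : ℝ) : ℂ) ^ μ * ((1 - ρ : ℝ) : ℂ) ^ ν)
          * (((1 + ρ : ℝ) : ℂ) ^ μ * ((1 + ρ : ℝ) : ℂ) ^ ν) := by
          simp only [scaledJacobiWeight]; ring
      _ = _ := by
          rw [← Complex.cpow_add _ _ hu, ← Complex.cpow_add _ _ hv, hμν, Complex.cpow_one,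
            Complex.cpow_one]
          ring
  rw [deriv_scaledJacobiWeight b ν μ hρ, deriv_scaledJacobiWeight b μ ν hρ]
  calc _ = ((μ - ν) / ((1 + ρ : ℝ) : ℂ) + (μ - ν) / ((1 - ρ : ℝ) : ℂ))
        * (scaledJacobiWeight b μ ν ρ * scaledJacobiWeight b ν μ ρ) := by ring
    _ = _ := by
      rw [hprod]
      field_simp
      push_cast
      ring

end JacobiWeight

/-- With `a(λ) = i(3−2λ)/2` (λ ≠ 3/2) and `b` a fixed complex square root of
`a(λ)⁻¹`, the functions `w₁(ρ) = b (1−ρ)^{5/4−λ/2} (1+ρ)^{−1/4+λ/2}` and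
`w₂(ρ) = b (1−ρ)^{−1/4+λ/2} (1+ρ)^{5/4−λ/2}` solve
`w″ + ((−5+12λ−4λ²)/(4(1−ρ²)²)) w = 0` on `(0,1)` with constant Wronskian
`w₁w₂′ − w₁′w₂ = 2/i = −2i`. -/
theorem hankel_type_fundamental_system (lam : ℂ) (hlam : lam ≠ 3/2) (b : ℂ)
    (hb : b ^ 2 = (Complex.I * (3 - 2 * lam) / 2)⁻¹) (ρ : ℝ) (hρ : ρ ∈ Set.Ioo (0:ℝ) 1) :
    (deriv (deriv (fun ρ : ℝ =>
        b * ((1 - ρ : ℝ) : ℂ) ^ ((5:ℂ)/4 - lam/2) * ((1 + ρ : ℝ) : ℂ) ^ (-(1:ℂ)/4 + lam/2))) ρ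
      + ((-5 + 12 * lam - 4 * lam ^ 2) / (4 * (1 - (ρ:ℂ) ^ 2) ^ 2))
        * (b * ((1 - ρ : ℝ) : ℂ) ^ ((5:ℂ)/4 - lam/2) * ((1 + ρ : ℝ) : ℂ) ^ (-(1:ℂ)/4 + lam/2))
      = 0)
    ∧ (deriv (deriv (fun ρ : ℝ =>
        b * ((1 - ρ : ℝ) : ℂ) ^ (-(1:ℂ)/4 + lam/2) * ((1 + ρ : ℝ) : ℂ) ^ ((5:ℂ)/4 - lam/2))) ρ
      + ((-5 + 12 * lam - 4 * lam ^ 2) / (4 * (1 - (ρ:ℂ) ^ 2) ^ 2))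
        * (b * ((1 - ρ : ℝ) : ℂ) ^ (-(1:ℂ)/4 + lam/2) * ((1 + ρ : ℝ) : ℂ) ^ ((5:ℂ)/4 - lam/2))
      = 0)
    ∧ ((b * ((1 - ρ : ℝ) : ℂ) ^ ((5:ℂ)/4 - lam/2) * ((1 + ρ : ℝ) : ℂ) ^ (-(1:ℂ)/4 + lam/2))
        * deriv (fun ρ : ℝ =>
            b * ((1 - ρ : ℝ) : ℂ) ^ (-(1:ℂ)/4 + lam/2) * ((1 + ρ : ℝ) : ℂ) ^ ((5:ℂ)/4 - lam/2)) ρ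
      - deriv (fun ρ : ℝ =>
            b * ((1 - ρ : ℝ) : ℂ) ^ ((5:ℂ)/4 - lam/2) * ((1 + ρ : ℝ) : ℂ) ^ (-(1:ℂ)/4 + lam/2)) ρ
        * (b * ((1 - ρ : ℝ) : ℂ) ^ (-(1:ℂ)/4 + lam/2) * ((1 + ρ : ℝ) : ℂ) ^ ((5:ℂ)/4 - lam/2))
      = -2 * Complex.I) := by
  set μ : ℂ := 5 / 4 - lam / 2
  set ν : ℂ := -1 / 4 + lam / 2
  have hμν : μ + ν = 1 := by ring
  have hρ' : ρ ∈ Ioo (-1 : ℝ) 1 := Ioo_subset_Ioo_left (by norm_num) hρ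
  have hpotential : (-5 + 12 * lam - 4 * lam ^ 2) / (4 * (1 - (ρ : ℂ) ^ 2) ^ 2)
      = 4 * μ * ν / (1 - (ρ : ℂ) ^ 2) ^ 2 := by
    generalize (1 - (ρ : ℂ) ^ 2) ^ 2 = X
    simp only [μ, ν]
    ring
  have hnormalization : 2 * (μ - ν) * b ^ 2 = -2 * Complex.I := by
    have hne : (3 : ℂ) - 2 * lam ≠ 0 := fun h => hlam (by linear_combination (-1 / 2 : ℂ) * h)
    rw [hb]
    field_simp
    linear_combination (3 - 2 * lam) * Complex.I_sq
  refine ⟨?_, ?_, ?_⟩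
  · rw [hpotential]
    exact deriv_deriv_scaledJacobiWeight_add_mul_eq_zero b μ ν hμν hρ'
  · rw [hpotential, mul_right_comm]
    exact deriv_deriv_scaledJacobiWeight_add_mul_eq_zero b ν μ (by rw [add_comm, hμν]) hρ'
  · exact (wronskian_scaledJacobiWeight_swap b μ ν hμν hρ').trans hnormalization
end

section
/- Let α ∈ (0,1). Then there exists a constant C > 0 such that for every a ∈ ℝ \ {0}: ∫₀¹ s^{α−1} |a + log(1−s)|^{−α} ds ≤ C |a|^{−α} and ∫₀¹ s^{α−1} |a + log(1+s)|^{−α} ds ≤ C |a|^{−α}. -/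
/-!
Substituting `u = -log (1 - s)`, resp. `u = log (1 + s)`, bounds both integrals by (four times)
`∫₀^∞ u^{α-1} e^{-αu} |b - u|^{-α} du` with `b = a`, resp. `b = -a`. Put `r = |b|/2`. Where
`|b - u| ≥ r` the singular factor is at most `r^{-α}` and the rest integrates to a Gamma value.
On the window `|b - u| < r` one has `u ≥ r`, so `u^{α-1} e^{-αu} ≤ r⁻¹`, while
`∫_{|b-u|<r} |b - u|^{-α} du = 2 r^{1-α} / (1 - α)`.
-/

open MeasureTheory Real Set

lemma lintegral_Ioo_rpow {r δ : ℝ} (hr : -1 < r) (hδ : 0 ≤ δ) :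
    ∫⁻ x in Ioo 0 δ, ENNReal.ofReal (x ^ r) = ENNReal.ofReal (δ ^ (r + 1) / (r + 1)) := by
  have hint : IntegrableOn (fun x : ℝ => x ^ r) (Ioo 0 δ) :=
    (intervalIntegrable_iff_integrableOn_Ioo_of_le hδ).1
      (intervalIntegral.intervalIntegrable_rpow' hr)
  rw [← ofReal_integral_eq_lintegral_ofReal hint
    ((ae_restrict_iff' measurableSet_Ioo).2 (ae_of_all _ fun x hx => rpow_nonneg hx.1.le r)),
    ← integral_Ioc_eq_integral_Ioo, ← intervalIntegral.integral_of_le hδ,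
    integral_rpow (Or.inl hr), zero_rpow (by linarith), sub_zero]

lemma lintegral_Ioo_abs_sub_rpow_le {r δ : ℝ} (hr : -1 < r) (hδ : 0 ≤ δ) (a : ℝ) :
    ∫⁻ x in Ioo (a - δ) (a + δ), ENNReal.ofReal (|a - x| ^ r) ≤
      ENNReal.ofReal (2 * (δ ^ (r + 1) / (r + 1))) := by
  have hleft : ∫⁻ x in (fun y => a - y) '' Ioo 0 δ, ENNReal.ofReal (|a - x| ^ r) =
      ENNReal.ofReal (δ ^ (r + 1) / (r + 1)) := by
    rw [← (volume.measurePreserving_sub_left a).setLIntegral_comp_emb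
      (MeasurableEquiv.subLeft a).measurableEmbedding, ← lintegral_Ioo_rpow hr hδ]
    refine setLIntegral_congr_fun measurableSet_Ioo fun y hy => ?_
    rw [sub_sub_cancel, abs_of_pos hy.1]
  have hright : ∫⁻ x in (fun y => a + y) '' Ioo 0 δ, ENNReal.ofReal (|a - x| ^ r) =
      ENNReal.ofReal (δ ^ (r + 1) / (r + 1)) := by
    rw [← (measurePreserving_add_left volume a).setLIntegral_comp_emb
      (measurableEmbedding_addLeft a), ← lintegral_Ioo_rpow hr hδ]
    refine setLIntegral_congr_fun measurableSet_Ioo fun y hy => ?_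
    rw [sub_add_cancel_left, abs_neg, abs_of_pos hy.1]
  have hcover : Ioo (a - δ) (a + δ) ⊆
      ((fun y => a - y) '' Ioo 0 δ ∪ (fun y => a + y) '' Ioo 0 δ) ∪ {a} := by
    rw [image_const_sub_Ioo, image_const_add_Ioo, sub_zero, add_zero]
    intro x hx
    rcases lt_trichotomy x a with h | rfl | h
    · exact Or.inl (Or.inl ⟨hx.1, h⟩)
    · exact Or.inr rfl
    · exact Or.inl (Or.inr ⟨h, hx.2⟩)
  have hI : 0 ≤ δ ^ (r + 1) / (r + 1) := div_nonneg (rpow_nonneg hδ _) (by linarith)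
  calc _ ≤ _ := lintegral_mono_set hcover
    _ ≤ _ := (lintegral_union_le _ _ _).trans (add_le_add_left (lintegral_union_le _ _ _) _)
    _ = _ := by
      rw [hleft, hright, setLIntegral_measure_zero _ _ (Real.volume_singleton), add_zero,
        ← ENNReal.ofReal_add hI hI, two_mul]

lemma lintegral_Ioi_rpow_mul_exp_neg_mul {a r : ℝ} (ha : 0 < a) (hr : 0 < r) :
    ∫⁻ t in Ioi 0, ENNReal.ofReal (t ^ (a - 1) * exp (-(r * t))) =
      ENNReal.ofReal ((1 / r) ^ a * Gamma a) := by
  have hint : IntegrableOn (fun t : ℝ => t ^ (a - 1) * exp (-(r * t))) (Ioi 0) := by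
    simpa [rpow_one, neg_mul] using
      integrableOn_rpow_mul_exp_neg_mul_rpow (p := 1) (s := a - 1) (b := r) (by linarith)
        zero_lt_one hr
  rw [← ofReal_integral_eq_lintegral_ofReal hint
    ((ae_restrict_iff' measurableSet_Ioi).2 (ae_of_all _ fun t (ht : 0 < t) => by positivity)),
    integral_rpow_mul_exp_neg_mul_Ioi ha hr]

lemma exp_neg_mul_le_rpow_neg {α r : ℝ} (hα : 0 ≤ α) (hr : 0 < r) :
    exp (-(α * r)) ≤ r ^ (-α) := by
  have hpow : r ^ α ≤ exp (α * r) := by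
    rw [mul_comm, exp_mul]
    exact rpow_le_rpow hr.le ((le_add_of_nonneg_right zero_le_one).trans (add_one_le_exp r)) hα
  rw [exp_neg, rpow_neg hr.le]
  exact inv_anti₀ (rpow_pos_of_pos hr α) hpow

lemma rpow_mul_exp_neg_mul_le_inv {α r u : ℝ} (hα0 : 0 ≤ α) (hα1 : α ≤ 1) (hr : 0 < r)
    (hru : r ≤ u) : u ^ (α - 1) * exp (-(α * u)) ≤ r⁻¹ :=
  calc u ^ (α - 1) * exp (-(α * u)) ≤ r ^ (α - 1) * r ^ (-α) := by
        gcongr ?_ * ?_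
        · exact rpow_le_rpow_of_nonpos hr hru (by linarith)
        · exact (exp_le_exp.2 (by nlinarith)).trans (exp_neg_mul_le_rpow_neg hα0 hr)
    _ = r⁻¹ := by rw [← rpow_add hr, sub_add_eq_add_sub, add_neg_cancel, zero_sub, rpow_neg_one]

lemma ofReal_rpow_mul_exp_neg_mul_abs_sub_rpow_le_add_indicator {α a r u : ℝ} (hα0 : 0 ≤ α)
    (hα1 : α ≤ 1) (hr : 0 < r) (hra : 2 * r ≤ |a|) (hu : 0 < u) :
    ENNReal.ofReal (u ^ (α - 1) * exp (-(α * u)) * |a - u| ^ (-α)) ≤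
      ENNReal.ofReal (r ^ (-α)) * ENNReal.ofReal (u ^ (α - 1) * exp (-(α * u))) +
      (Ioo (a - r) (a + r)).indicator
        (fun u => ENNReal.ofReal r⁻¹ * ENNReal.ofReal (|a - u| ^ (-α))) u := by
  have hw : 0 ≤ u ^ (α - 1) * exp (-(α * u)) := by positivity
  by_cases hnear : u ∈ Ioo (a - r) (a + r)
  · rw [indicator_of_mem hnear, ENNReal.ofReal_mul hw]
    refine le_add_left (mul_le_mul_left (ENNReal.ofReal_le_ofReal ?_) _)
    refine rpow_mul_exp_neg_mul_le_inv hα0 hα1 hr ?_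
    have hau : |a - u| < r := abs_sub_lt_iff.2 ⟨by linarith [hnear.1], by linarith [hnear.2]⟩
    have := abs_sub_abs_le_abs_sub a u
    rw [abs_of_pos hu] at this
    linarith
  · rw [indicator_of_notMem hnear, add_zero, ← ENNReal.ofReal_mul (by positivity), mul_comm]
    refine ENNReal.ofReal_le_ofReal (mul_le_mul_of_nonneg_right
      (rpow_le_rpow_of_nonpos hr ?_ (by linarith)) hw)
    rw [mem_Ioo, not_and_or, not_lt, not_lt] at hnear
    exact le_abs.2 (hnear.imp (fun h => by linarith) (fun h => by linarith))

lemma exists_lintegral_Ioi_rpow_mul_exp_neg_mul_abs_sub_rpow_le {α : ℝ} (hα0 : 0 < α)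
    (hα1 : α < 1) :
    ∃ C > 0, ∀ a : ℝ, a ≠ 0 →
      ∫⁻ u in Ioi 0, ENNReal.ofReal (u ^ (α - 1) * exp (-(α * u)) * |a - u| ^ (-α)) ≤
        ENNReal.ofReal (C * |a| ^ (-α)) := by
  set G := (1 / α) ^ α * Gamma α
  have hG : 0 < G := by have := Gamma_pos_of_pos hα0; positivity
  have h1α : 0 < 1 - α := by linarith
  refine ⟨2 ^ α * (G + 2 / (1 - α)), by positivity, fun a ha => ?_⟩
  set r := |a| / 2
  have hr : 0 < r := by positivity
  have hr_pow : r ^ (-α) = 2 ^ α * |a| ^ (-α) := by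
    rw [div_rpow (abs_nonneg a) zero_le_two, rpow_neg zero_le_two, div_inv_eq_mul, mul_comm]
  have hr_mass : r⁻¹ * (2 * (r ^ (-α + 1) / (-α + 1))) = 2 / (1 - α) * r ^ (-α) := by
    rw [rpow_add_one hr.ne', neg_add_eq_sub]
    field_simp
  calc _ ≤ ∫⁻ u in Ioi 0, (ENNReal.ofReal (r ^ (-α)) *
          ENNReal.ofReal (u ^ (α - 1) * exp (-(α * u))) + (Ioo (a - r) (a + r)).indicator
            (fun u => ENNReal.ofReal r⁻¹ * ENNReal.ofReal (|a - u| ^ (-α))) u) :=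
        setLIntegral_mono' measurableSet_Ioi fun u hu =>
          ofReal_rpow_mul_exp_neg_mul_abs_sub_rpow_le_add_indicator hα0.le hα1.le hr
            (mul_div_cancel₀ _ two_ne_zero).le hu
    _ = ENNReal.ofReal (r ^ (-α)) *
          (∫⁻ u in Ioi 0, ENNReal.ofReal (u ^ (α - 1) * exp (-(α * u)))) +
          ∫⁻ u in Ioi 0, (Ioo (a - r) (a + r)).indicator
            (fun u => ENNReal.ofReal r⁻¹ * ENNReal.ofReal (|a - u| ^ (-α))) u := by
        rw [lintegral_add_left (by fun_prop), lintegral_const_mul _ (by fun_prop)]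
    _ ≤ ENNReal.ofReal (r ^ (-α)) * ENNReal.ofReal G + ENNReal.ofReal r⁻¹ *
          ∫⁻ u in Ioo (a - r) (a + r), ENNReal.ofReal (|a - u| ^ (-α)) := by
        rw [lintegral_Ioi_rpow_mul_exp_neg_mul hα0 hα0, ← lintegral_const_mul _ (by fun_prop),
          ← lintegral_indicator measurableSet_Ioo]
        gcongr
        exact Measure.restrict_le_self
    _ ≤ ENNReal.ofReal (r ^ (-α)) * ENNReal.ofReal G +
          ENNReal.ofReal r⁻¹ * ENNReal.ofReal (2 * (r ^ (-α + 1) / (-α + 1))) := by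
        gcongr
        exact lintegral_Ioo_abs_sub_rpow_le (by linarith) hr.le a
    _ = ENNReal.ofReal (2 ^ α * (G + 2 / (1 - α)) * |a| ^ (-α)) := by
        rw [← ENNReal.ofReal_mul (by positivity), ← ENNReal.ofReal_mul (by positivity), hr_mass,
          ← ENNReal.ofReal_add (by positivity) (by positivity), hr_pow]
        ring_nf

lemma image_one_sub_exp_neg_Ioi : (fun u : ℝ => 1 - exp (-u)) '' Ioi 0 = Ioo 0 1 := by
  rw [show (fun u : ℝ => 1 - exp (-u)) = (fun t => 1 - t) ∘ exp ∘ Neg.neg from rfl, image_comp,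
    image_comp, image_neg_Ioi, neg_zero, image_exp_Iio, exp_zero, image_const_sub_Ioo, sub_zero,
    sub_self]

lemma image_exp_sub_one_Ioo_log_two : (fun u : ℝ => exp u - 1) '' Ioo 0 (log 2) = Ioo 0 1 := by
  rw [show (fun u : ℝ => exp u - 1) = (fun t => t - 1) ∘ exp from rfl, image_comp, image_exp_Ioo,
    exp_zero, exp_log two_pos, image_sub_const_Ioo]
  norm_num

lemma exp_neg_mul_one_sub_exp_neg_rpow_le {α u : ℝ} (hα : α ≤ 1) (hu : 0 < u) :
    exp (-u) * (1 - exp (-u)) ^ (α - 1) ≤ u ^ (α - 1) * exp (-(α * u)) := by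
  have hlin : u * exp (-u) ≤ 1 - exp (-u) := by
    have h := mul_le_mul_of_nonneg_right (add_one_le_exp u) (exp_pos (-u)).le
    rw [← exp_add, add_neg_cancel, exp_zero] at h
    linarith
  calc exp (-u) * (1 - exp (-u)) ^ (α - 1) ≤ exp (-u) * (u * exp (-u)) ^ (α - 1) := by
        refine mul_le_mul_of_nonneg_left ?_ (exp_pos _).le
        exact rpow_le_rpow_of_nonpos (by positivity) hlin (by linarith)
    _ = u ^ (α - 1) * exp (-(α * u)) := by
        rw [mul_rpow hu.le (exp_pos _).le, ← exp_mul, mul_left_comm, ← exp_add]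
        ring_nf

lemma exp_mul_exp_sub_one_rpow_le {α u : ℝ} (hα : α ≤ 1) (hu : 0 < u) (hu2 : u < log 2) :
    exp u * (exp u - 1) ^ (α - 1) ≤ 4 * (u ^ (α - 1) * exp (-(α * u))) := by
  have hexp2 : exp u ≤ 2 := by
    rw [← exp_log two_pos]; exact exp_le_exp.2 hu2.le
  have hlin : u ≤ exp u - 1 := by linarith [add_one_le_exp u]
  have hdecay : 1 ≤ 2 * exp (-(α * u)) := by
    have : exp (α * u) ≤ 2 := (exp_le_exp.2 (by nlinarith)).trans hexp2
    rw [exp_neg, le_mul_inv_iff₀ (exp_pos _)]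
    linarith
  calc exp u * (exp u - 1) ^ (α - 1) ≤ 2 * u ^ (α - 1) :=
        mul_le_mul hexp2 (rpow_le_rpow_of_nonpos hu hlin (by linarith))
          (rpow_nonneg (by linarith) _) zero_le_two
    _ ≤ 2 * u ^ (α - 1) * (2 * exp (-(α * u))) := le_mul_of_one_le_right (by positivity) hdecay
    _ = 4 * (u ^ (α - 1) * exp (-(α * u))) := by ring

lemma lintegral_log_one_sub_le {α : ℝ} (hα : α ≤ 1) (a : ℝ) :
    ∫⁻ s in Ioo 0 1, ENNReal.ofReal (s ^ (α - 1) * |a + log (1 - s)| ^ (-α)) ≤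
      ∫⁻ u in Ioi 0, ENNReal.ofReal (u ^ (α - 1) * exp (-(α * u)) * |a - u| ^ (-α)) := by
  have hderiv : ∀ u ∈ Ioi (0 : ℝ),
      HasDerivWithinAt (fun u => 1 - exp (-u)) (exp (-u)) (Ioi 0) u := fun u _ => by
    simpa using (((hasDerivAt_neg u).exp).const_sub 1).hasDerivWithinAt
  have hinj : InjOn (fun u : ℝ => 1 - exp (-u)) (Ioi 0) := fun x _ y _ h => by simpa using h
  rw [← image_one_sub_exp_neg_Ioi,
    lintegral_image_eq_lintegral_abs_deriv_mul measurableSet_Ioi hderiv hinj]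
  refine setLIntegral_mono' measurableSet_Ioi fun u (hu : 0 < u) => ?_
  rw [sub_sub_cancel, log_exp, ← sub_eq_add_neg, abs_of_pos (exp_pos _),
    ← ENNReal.ofReal_mul (exp_pos _).le, ← mul_assoc]
  exact ENNReal.ofReal_le_ofReal (mul_le_mul_of_nonneg_right
    (exp_neg_mul_one_sub_exp_neg_rpow_le hα hu) (by positivity))

lemma lintegral_log_one_add_le {α : ℝ} (hα : α ≤ 1) (a : ℝ) :
    ∫⁻ s in Ioo 0 1, ENNReal.ofReal (s ^ (α - 1) * |a + log (1 + s)| ^ (-α)) ≤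
      4 * ∫⁻ u in Ioi 0, ENNReal.ofReal (u ^ (α - 1) * exp (-(α * u)) * |-a - u| ^ (-α)) := by
  have hderiv : ∀ u ∈ Ioo 0 (log 2),
      HasDerivWithinAt (fun u => exp u - 1) (exp u) (Ioo 0 (log 2)) u := fun u _ =>
    ((hasDerivAt_exp u).sub_const 1).hasDerivWithinAt
  have hinj : InjOn (fun u : ℝ => exp u - 1) (Ioo 0 (log 2)) := fun x _ y _ h => by simpa using h
  rw [← image_exp_sub_one_Ioo_log_two,
    lintegral_image_eq_lintegral_abs_deriv_mul measurableSet_Ioo hderiv hinj,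
    ← lintegral_const_mul' _ _ ENNReal.ofNat_ne_top]
  refine (setLIntegral_mono' measurableSet_Ioo fun u hu => ?_).trans
    (lintegral_mono_set Ioo_subset_Ioi_self)
  rw [add_sub_cancel, log_exp, abs_of_pos (exp_pos _), ← neg_add', abs_neg,
    ← ENNReal.ofReal_mul (exp_pos _).le, ← ENNReal.ofReal_ofNat 4,
    ← ENNReal.ofReal_mul zero_le_four, ← mul_assoc, ← mul_assoc]
  exact ENNReal.ofReal_le_ofReal (mul_le_mul_of_nonneg_right
    (exp_mul_exp_sub_one_rpow_le hα hu.1 hu.2) (by positivity))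

/-- For `α ∈ (0,1)` there is `C > 0` such that for all `a ≠ 0`,
`∫₀¹ s^{α−1} |a + log(1∓s)|^{−α} ds ≤ C|a|^{−α}` (Lebesgue integrals of nonnegative
functions, so the bound in particular asserts finiteness). -/
theorem log_weight_integral_bound (α : ℝ) (hα : α ∈ Set.Ioo (0:ℝ) 1) :
    ∃ C > (0:ℝ), ∀ a : ℝ, a ≠ 0 →
      (∫⁻ s in Set.Ioo (0:ℝ) 1,
          ENNReal.ofReal (s ^ (α - 1) * |a + Real.log (1 - s)| ^ (-α))
        ≤ ENNReal.ofReal (C * |a| ^ (-α)))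
      ∧ (∫⁻ s in Set.Ioo (0:ℝ) 1,
          ENNReal.ofReal (s ^ (α - 1) * |a + Real.log (1 + s)| ^ (-α))
        ≤ ENNReal.ofReal (C * |a| ^ (-α))) := by
  obtain ⟨C, hC, hkernel⟩ := exists_lintegral_Ioi_rpow_mul_exp_neg_mul_abs_sub_rpow_le hα.1 hα.2
  refine ⟨4 * C, by positivity, fun a ha => ⟨?_, ?_⟩⟩
  · calc _ ≤ _ := lintegral_log_one_sub_le hα.2.le a
      _ ≤ ENNReal.ofReal (C * |a| ^ (-α)) := hkernel a ha
      _ ≤ _ := ENNReal.ofReal_le_ofReal (by gcongr; linarith)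
  · calc _ ≤ _ := lintegral_log_one_add_le hα.2.le a
      _ ≤ 4 * ENNReal.ofReal (C * |-a| ^ (-α)) := by
        gcongr
        exact hkernel (-a) (neg_ne_zero.2 ha)
      _ = _ := by
        rw [abs_neg, ← ENNReal.ofReal_ofNat 4, ← ENNReal.ofReal_mul zero_le_four, mul_assoc]
end

section
/- There exists a constant C > 0 such that for every a ∈ ℝ \ {0}: ∫₀¹ s^{−1/2} |a + (1/2) log(1−s²)|^{−1/2} ds ≤ C |a|^{−1/2} and ∫₀¹ s^{−1/2} |a − (1/2) log(1−s²)|^{−1/2} ds ≤ C |a|^{−1/2}. -/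
/-!
Write `g(s) = a + log (1 - s²) / 2`. For `a < 0` we have `|g| ≥ |a|`, and the bound is
immediate. For `a > 0`, `g` vanishes at `s₀` with `1 - s₀² = exp (-2a)`. Where
`1 - s² ≥ exp (-a)` we have `g ≥ a / 2`; elsewhere the mean value theorem for `log` on
`(0, exp (-a)]` gives `|g| ≥ exp a · s |s - s₀| / 2`, while
`s² ≥ 1 - exp (-a) ≥ a exp (-a)`.
Hence `s |g| ≥ (a / 2) min (s, |s - s₀|)` on `(0, 1)`, which bounds the integrand
`(s |g|)^(-1/2)` by `(a / 2)^(-1/2) (s^(-1/2) + |s - s₀|^(-1/2))`, of integral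
`6 (a / 2)^(-1/2)`. The bound with `a - log (1 - s²) / 2` is the one for `-a`.
-/

noncomputable section

open MeasureTheory

namespace LogWeight

open Set Real

variable {r : ℝ}

theorem lintegral_Ioo_zero_one_rpow (hr : -1 < r) :
    ∫⁻ s in Ioo (0 : ℝ) 1, ENNReal.ofReal (s ^ r) = ENNReal.ofReal (1 / (r + 1)) := by
  have hint : IntegrableOn (fun s : ℝ ↦ s ^ r) (Ioo 0 1) :=
    (intervalIntegral.integrableOn_Ioo_rpow_iff zero_lt_one).mpr hr
  rw [← ofReal_integral_eq_lintegral_ofReal hint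
    (ae_restrict_of_forall_mem measurableSet_Ioo fun s hs ↦ rpow_nonneg hs.1.le r),
    ← integral_Ioc_eq_integral_Ioo, ← intervalIntegral.integral_of_le zero_le_one,
    integral_rpow (Or.inl hr), one_rpow, zero_rpow (by linarith)]
  ring_nf

theorem lintegral_Ioo_sub_rpow (hr : -1 < r) (c : ℝ) :
    ∫⁻ s in Ioo c (c + 1), ENNReal.ofReal ((s - c) ^ r) = ENNReal.ofReal (1 / (r + 1)) := by
  have h := (measurePreserving_sub_right volume c).setLIntegral_comp_preimage_emb
    (MeasurableEquiv.subRight c).measurableEmbedding (fun u ↦ ENNReal.ofReal (u ^ r)) (Ioo 0 1)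
  rw [preimage_sub_const_Ioo, zero_add, add_comm] at h
  rw [h, lintegral_Ioo_zero_one_rpow hr]

theorem lintegral_Ioo_rsub_rpow (hr : -1 < r) (c : ℝ) :
    ∫⁻ s in Ioo (c - 1) c, ENNReal.ofReal ((c - s) ^ r) = ENNReal.ofReal (1 / (r + 1)) := by
  have h := (Measure.measurePreserving_sub_left volume c).setLIntegral_comp_preimage_emb
    (MeasurableEquiv.subLeft c).measurableEmbedding (fun u ↦ ENNReal.ofReal (u ^ r)) (Ioo 0 1)
  rw [preimage_const_sub_Ioo, sub_zero] at h
  rw [h, lintegral_Ioo_zero_one_rpow hr]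

theorem lintegral_Ioo_zero_one_abs_sub_rpow_le (hr : -1 < r) {c : ℝ} (hc₀ : 0 ≤ c)
    (hc₁ : c ≤ 1) :
    ∫⁻ s in Ioo (0 : ℝ) 1, ENNReal.ofReal (|s - c| ^ r) ≤ ENNReal.ofReal (2 / (r + 1)) := by
  have hsub : Ioo (0 : ℝ) 1 ⊆ Ioo (c - 1) c ∪ Ico c (c + 1) := fun s hs ↦ by
    rcases lt_or_ge s c with h | h
    · exact Or.inl ⟨by linarith [hs.1], h⟩
    · exact Or.inr ⟨h, by linarith [hs.2]⟩
  have hleft : ∫⁻ s in Ioo (c - 1) c, ENNReal.ofReal (|s - c| ^ r)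
      = ∫⁻ s in Ioo (c - 1) c, ENNReal.ofReal ((c - s) ^ r) :=
    setLIntegral_congr_fun measurableSet_Ioo fun s hs ↦ by
      rw [abs_sub_comm, abs_of_pos (sub_pos.mpr hs.2)]
  have hright : ∫⁻ s in Ico c (c + 1), ENNReal.ofReal (|s - c| ^ r)
      = ∫⁻ s in Ioo c (c + 1), ENNReal.ofReal ((s - c) ^ r) := by
    rw [setLIntegral_congr Ioo_ae_eq_Ico.symm]
    exact setLIntegral_congr_fun measurableSet_Ioo fun s hs ↦ by
      rw [abs_of_pos (sub_pos.mpr hs.1)]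
  have hr' : 0 ≤ 1 / (r + 1) := one_div_nonneg.mpr (by linarith)
  calc ∫⁻ s in Ioo (0 : ℝ) 1, ENNReal.ofReal (|s - c| ^ r)
      ≤ ∫⁻ s in Ioo (c - 1) c ∪ Ico c (c + 1), ENNReal.ofReal (|s - c| ^ r) :=
        lintegral_mono_set hsub
    _ ≤ (∫⁻ s in Ioo (c - 1) c, ENNReal.ofReal (|s - c| ^ r))
        + ∫⁻ s in Ico c (c + 1), ENNReal.ofReal (|s - c| ^ r) := lintegral_union_le _ _ _
    _ = ENNReal.ofReal (2 / (r + 1)) := by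
        rw [hleft, hright, lintegral_Ioo_rsub_rpow hr, lintegral_Ioo_sub_rpow hr,
          ← ENNReal.ofReal_add hr' hr']
        ring_nf

theorem abs_sub_le_mul_abs_log_sub_log {p q M : ℝ} (hp : 0 < p) (hq : 0 < q) (hpM : p ≤ M)
    (hqM : q ≤ M) : |p - q| ≤ M * |log p - log q| := by
  wlog hqp : q ≤ p generalizing p q
  · rw [abs_sub_comm, abs_sub_comm (log p)]
    exact this hq hp hqM hpM (le_of_not_ge hqp)
  have hlog : (p - q) / p ≤ log p - log q := by
    have := one_sub_inv_le_log_of_pos (div_pos hp hq)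
    rwa [inv_div, log_div hp.ne' hq.ne', one_sub_div hp.ne'] at this
  have hdiv : 0 ≤ (p - q) / p := div_nonneg (sub_nonneg.mpr hqp) hp.le
  rw [abs_of_nonneg (sub_nonneg.mpr hqp), abs_of_nonneg (hdiv.trans hlog)]
  calc p - q = p * ((p - q) / p) := by field_simp
    _ ≤ M * (log p - log q) := mul_le_mul hpM hlog hdiv (hp.le.trans hpM)

theorem min_rpow_le_add {x y : ℝ} (hx : 0 ≤ x) (hy : 0 ≤ y) (r : ℝ) :
    min x y ^ r ≤ x ^ r + y ^ r := by
  rcases min_choice x y with h | h <;> rw [h]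
  · linarith [rpow_nonneg hy r]
  · linarith [rpow_nonneg hx r]

variable {a s s₀ : ℝ}

theorem mul_min_le_mul_abs_log_weight (ha : 0 < a) (hs : s ∈ Ioo (0 : ℝ) 1) (hs₀ : 0 ≤ s₀)
    (hs₀a : 1 - s₀ ^ 2 = exp (-(2 * a))) :
    a / 2 * min s |s - s₀| ≤ s * |a + (1 / 2) * log (1 - s ^ 2)| := by
  obtain ⟨hs0, hs1⟩ := hs
  have hu : 0 < 1 - s ^ 2 := by nlinarith
  rcases le_or_gt (exp (-a)) (1 - s ^ 2) with hfar | hnear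
  · have hlog : -a ≤ log (1 - s ^ 2) := by
      rw [← log_exp (-a)]; exact log_le_log (exp_pos _) hfar
    calc a / 2 * min s |s - s₀| ≤ s * (a / 2) := by
          rw [mul_comm]; exact mul_le_mul_of_nonneg_right (min_le_left _ _) (by positivity)
      _ ≤ s * |a + (1 / 2) * log (1 - s ^ 2)| :=
          mul_le_mul_of_nonneg_left (by rw [abs_of_nonneg (by linarith)]; linarith) hs0.le
  · -- `1 - s ^ 2` and `1 - s₀ ^ 2` lie in `(0, exp (-a)]`, where `log` has slope `≥ exp a`
    have hmv := abs_sub_le_mul_abs_log_sub_log hu (exp_pos (-(2 * a))) hnear.le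
      (exp_le_exp.mpr (by linarith))
    rw [log_exp, ← hs₀a, show 1 - s ^ 2 - (1 - s₀ ^ 2) = (s₀ + s) * (s₀ - s) by ring,
      abs_mul, abs_of_nonneg (by positivity : 0 ≤ s₀ + s), abs_sub_comm,
      show log (1 - s ^ 2) - -(2 * a) = 2 * (a + (1 / 2) * log (1 - s ^ 2)) by ring, abs_mul,
      abs_two] at hmv
    have hexp : a * exp (-a) ≤ 1 - exp (-a) := by
      have := add_one_le_exp a
      have h1 : exp a * exp (-a) = 1 := by rw [← exp_add]; simp
      nlinarith [exp_pos (-a)]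
    have hd := abs_nonneg (s - s₀)
    calc a / 2 * min s |s - s₀| ≤ a / 2 * |s - s₀| := by gcongr; exact min_le_right _ _
      _ ≤ s * |a + (1 / 2) * log (1 - s ^ 2)| := by
        have key : exp (-a) * (a * |s - s₀|)
            ≤ exp (-a) * (2 * (s * |a + (1 / 2) * log (1 - s ^ 2)|)) :=
          calc exp (-a) * (a * |s - s₀|) = a * exp (-a) * |s - s₀| := by ring
            _ ≤ s ^ 2 * |s - s₀| := by gcongr; linarith
            _ ≤ s * ((s₀ + s) * |s - s₀|) := by
                nlinarith [mul_nonneg (mul_nonneg hs0.le hs₀) hd]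
            _ ≤ s * (exp (-a) * (2 * |a + (1 / 2) * log (1 - s ^ 2)|)) := by gcongr
            _ = exp (-a) * (2 * (s * |a + (1 / 2) * log (1 - s ^ 2)|)) := by ring
        linarith [le_of_mul_le_mul_left key (exp_pos (-a))]

theorem rpow_mul_abs_log_weight_rpow_le (hr : r < 0) (ha : 0 < a) (hs : s ∈ Ioo (0 : ℝ) 1)
    (hs₀ : 0 ≤ s₀) (hs₀a : 1 - s₀ ^ 2 = exp (-(2 * a))) :
    s ^ r * |a + (1 / 2) * log (1 - s ^ 2)| ^ r ≤ (a / 2) ^ r * (s ^ r + |s - s₀| ^ r) := by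
  rcases eq_or_ne s s₀ with rfl | hne
  · have hzero : a + (1 / 2) * log (1 - s ^ 2) = 0 := by rw [hs₀a, log_exp]; ring
    rw [hzero, abs_zero, zero_rpow hr.ne, mul_zero]
    positivity
  have hmin : 0 < min s |s - s₀| := lt_min hs.1 (abs_pos.mpr (sub_ne_zero.mpr hne))
  calc s ^ r * |a + (1 / 2) * log (1 - s ^ 2)| ^ r
      = (s * |a + (1 / 2) * log (1 - s ^ 2)|) ^ r := (mul_rpow hs.1.le (abs_nonneg _)).symm
    _ ≤ (a / 2 * min s |s - s₀|) ^ r :=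
        rpow_le_rpow_of_nonpos (by positivity) (mul_min_le_mul_abs_log_weight ha hs hs₀ hs₀a)
          hr.le
    _ = (a / 2) ^ r * min s |s - s₀| ^ r := mul_rpow (by positivity) hmin.le
    _ ≤ (a / 2) ^ r * (s ^ r + |s - s₀| ^ r) := by
        gcongr
        exact min_rpow_le_add hs.1.le (abs_nonneg _) r

def logWeightIntegral (r a : ℝ) : ENNReal :=
  ∫⁻ s in Ioo (0 : ℝ) 1, ENNReal.ofReal (s ^ r * |a + (1 / 2) * log (1 - s ^ 2)| ^ r)

theorem logWeightIntegral_le_of_pos (hr₁ : -1 < r) (hr : r < 0) (ha : 0 < a) :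
    logWeightIntegral r a ≤ ENNReal.ofReal ((a / 2) ^ r * (3 / (r + 1))) := by
  set s₀ := √(1 - exp (-(2 * a)))
  have hexp : exp (-(2 * a)) ≤ 1 := exp_le_one_iff.mpr (by linarith)
  have hs₀a : 1 - s₀ ^ 2 = exp (-(2 * a)) := by rw [sq_sqrt (by linarith)]; ring
  have hs₀₁ : s₀ ≤ 1 := sqrt_le_one.mpr (by linarith [exp_pos (-(2 * a))])
  have hr' : 0 < r + 1 := by linarith
  calc logWeightIntegral r a
      ≤ ∫⁻ s in Ioo (0 : ℝ) 1, ENNReal.ofReal ((a / 2) ^ r) *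
          (ENNReal.ofReal (s ^ r) + ENNReal.ofReal (|s - s₀| ^ r)) :=
        setLIntegral_mono' measurableSet_Ioo fun s hs ↦ by
          rw [← ENNReal.ofReal_add (rpow_nonneg hs.1.le r) (by positivity),
            ← ENNReal.ofReal_mul (by positivity)]
          exact ENNReal.ofReal_le_ofReal
            (rpow_mul_abs_log_weight_rpow_le hr ha hs (sqrt_nonneg _) hs₀a)
    _ = ENNReal.ofReal ((a / 2) ^ r) * ((∫⁻ s in Ioo (0 : ℝ) 1, ENNReal.ofReal (s ^ r)) +
          ∫⁻ s in Ioo (0 : ℝ) 1, ENNReal.ofReal (|s - s₀| ^ r)) := by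
        rw [lintegral_const_mul' _ _ ENNReal.ofReal_ne_top, lintegral_add_left (by fun_prop)]
    _ ≤ ENNReal.ofReal ((a / 2) ^ r) *
          (ENNReal.ofReal (1 / (r + 1)) + ENNReal.ofReal (2 / (r + 1))) := by
        gcongr
        · exact (lintegral_Ioo_zero_one_rpow hr₁).le
        · exact lintegral_Ioo_zero_one_abs_sub_rpow_le hr₁ (sqrt_nonneg _) hs₀₁
    _ = ENNReal.ofReal ((a / 2) ^ r * (3 / (r + 1))) := by
        rw [← ENNReal.ofReal_add (by positivity) (by positivity),
          ← ENNReal.ofReal_mul (by positivity)]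
        ring_nf

theorem logWeightIntegral_le_of_neg (hr₁ : -1 < r) (hr : r ≤ 0) (ha : a < 0) :
    logWeightIntegral r a ≤ ENNReal.ofReal (|a| ^ r * (1 / (r + 1))) := by
  calc logWeightIntegral r a
      ≤ ∫⁻ s in Ioo (0 : ℝ) 1, ENNReal.ofReal (|a| ^ r) * ENNReal.ofReal (s ^ r) :=
        setLIntegral_mono' measurableSet_Ioo fun s hs ↦ by
          have hlog : log (1 - s ^ 2) ≤ 0 :=
            log_nonpos (by nlinarith [hs.1, hs.2]) (by nlinarith [hs.1])
          have habs : |a| ≤ |a + (1 / 2) * log (1 - s ^ 2)| := by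
            rw [abs_of_neg ha, abs_of_neg (by linarith)]; linarith
          rw [← ENNReal.ofReal_mul (by positivity), mul_comm (|a| ^ r)]
          exact ENNReal.ofReal_le_ofReal <| mul_le_mul_of_nonneg_left
            (rpow_le_rpow_of_nonpos (abs_pos.mpr ha.ne) habs hr) (rpow_nonneg hs.1.le r)
    _ = ENNReal.ofReal (|a| ^ r * (1 / (r + 1))) := by
        rw [lintegral_const_mul' _ _ ENNReal.ofReal_ne_top, lintegral_Ioo_zero_one_rpow hr₁,
          ← ENNReal.ofReal_mul (by positivity)]

theorem logWeightIntegral_le (hr₁ : -1 < r) (hr : r < 0) (ha : a ≠ 0) :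
    logWeightIntegral r a ≤ ENNReal.ofReal (3 * 2 ^ (-r) / (r + 1) * |a| ^ r) := by
  have hr' : 0 < r + 1 := by linarith
  rcases ha.lt_or_gt with hneg | hpos
  · refine (logWeightIntegral_le_of_neg hr₁ hr.le hneg).trans (ENNReal.ofReal_le_ofReal ?_)
    have h2 : 1 ≤ 3 * (2 : ℝ) ^ (-r) := by
      linarith [one_le_rpow (by norm_num : (1 : ℝ) ≤ 2) (by linarith : 0 ≤ -r)]
    calc |a| ^ r * (1 / (r + 1)) = |a| ^ r / (r + 1) * 1 := by ring
      _ ≤ |a| ^ r / (r + 1) * (3 * 2 ^ (-r)) := by gcongr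
      _ = 3 * 2 ^ (-r) / (r + 1) * |a| ^ r := by ring
  · refine (logWeightIntegral_le_of_pos hr₁ hr hpos).trans_eq (congrArg ENNReal.ofReal ?_)
    rw [abs_of_pos hpos, div_rpow hpos.le zero_le_two, rpow_neg zero_le_two]
    ring

theorem logWeightIntegral_neg (r a : ℝ) :
    logWeightIntegral r (-a) =
      ∫⁻ s in Ioo (0 : ℝ) 1, ENNReal.ofReal (s ^ r * |a - (1 / 2) * log (1 - s ^ 2)| ^ r) :=
  lintegral_congr fun s ↦ by rw [neg_add_eq_sub, ← neg_sub, abs_neg]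

end LogWeight

open LogWeight in
/-- There is `C > 0` such that for all `a ≠ 0`,
`∫₀¹ s^{−1/2} |a ± (1/2)log(1−s²)|^{−1/2} ds ≤ C|a|^{−1/2}` (Lebesgue integrals of
nonnegative functions, so the bound in particular asserts finiteness). -/
theorem log_weight_integral_bound_half :
    ∃ C > (0:ℝ), ∀ a : ℝ, a ≠ 0 →
      (∫⁻ s in Set.Ioo (0:ℝ) 1,
          ENNReal.ofReal (s ^ (-(1:ℝ)/2) * |a + (1/2) * Real.log (1 - s ^ 2)| ^ (-(1:ℝ)/2))
        ≤ ENNReal.ofReal (C * |a| ^ (-(1:ℝ)/2)))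
      ∧ (∫⁻ s in Set.Ioo (0:ℝ) 1,
          ENNReal.ofReal (s ^ (-(1:ℝ)/2) * |a - (1/2) * Real.log (1 - s ^ 2)| ^ (-(1:ℝ)/2))
        ≤ ENNReal.ofReal (C * |a| ^ (-(1:ℝ)/2))) := by
  refine ⟨3 * 2 ^ (-(-(1:ℝ)/2)) / (-(1:ℝ)/2 + 1), by positivity, fun a ha ↦ ⟨?_, ?_⟩⟩
  · exact logWeightIntegral_le (by norm_num) (by norm_num) ha
  · rw [← abs_neg a, ← logWeightIntegral_neg]
    exact logWeightIntegral_le (by norm_num) (by norm_num) (neg_ne_zero.mpr ha)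

end
end

section
/- There exists a constant C > 0 such that: (i) for every f ∈ C¹([0,1], ℝ), ( ∫₀¹ |f(ρ)|¹² ρ²⁸ dρ )^{1/12} ≤ C ( ∫₀¹ (|f(ρ)|² + |f′(ρ)|²) ρ⁵ dρ )^{1/2}; (ii) for every f ∈ C¹([0,1], ℝ), ( ∫₀¹ | ∫_ρ¹ s^{2−1/12} f′(s) ds |¹² ρ⁵ dρ )^{1/12} ≤ C ( ∫₀¹ (|f(ρ)|² + |f′(ρ)|²) ρ⁵ dρ )^{1/2}; (iii) for every f ∈ C²([0,1], ℝ), ( ∫₀¹ |f(ρ)|¹² ρ¹⁶ dρ )^{1/12} ≤ C ( ∫₀¹ (|f(ρ)|² + |f′(ρ)|²) ρ⁵ dρ + ∫₀¹ |f″(ρ) + 5f′(ρ)/ρ|² ρ⁵ dρ )^{1/2}. -/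
noncomputable section

set_option maxHeartbeats 1000000

open MeasureTheory Set

namespace WRB

lemma cs_aux {A B T : ℝ} (hA : 0 ≤ A) (hB : 0 ≤ B)
    (h : ∀ l : ℝ, 0 < l → T ≤ (l * A + B / l) / 2) :
    T ≤ Real.sqrt A * Real.sqrt B := by
  rcases eq_or_lt_of_le hA with hA0 | hApos
  · have hT : T ≤ 0 := by
      refine le_of_forall_sub_le fun ε hε => ?_
      have hl : (0:ℝ) < (B + 1) / ε := by positivity
      have h2 := h _ hl
      have h3 : ((B + 1) / ε * A + B / ((B + 1) / ε)) / 2 ≤ ε := by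
        rw [← hA0]
        rw [div_div_eq_mul_div]
        have h4 : B * ε / (B + 1) ≤ ε := by
          rw [div_le_iff₀ (by linarith)]
          nlinarith
        linarith
      linarith
    calc T ≤ 0 := hT
    _ ≤ _ := by positivity
  rcases eq_or_lt_of_le hB with hB0 | hBpos
  · have hT : T ≤ 0 := by
      refine le_of_forall_sub_le fun ε hε => ?_
      have hl : (0:ℝ) < ε / (A + 1) := by positivity
      have h2 := h _ hl
      have h3 : (ε / (A + 1) * A + B / (ε / (A + 1))) / 2 ≤ ε := by
        rw [← hB0, zero_div]
        have h4 : ε / (A + 1) * A ≤ ε := by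
          rw [div_mul_eq_mul_div, div_le_iff₀ (by linarith)]
          nlinarith
        linarith
      linarith
    calc T ≤ 0 := hT
    _ ≤ _ := by positivity
  obtain ⟨sa, hsa, rfl⟩ : ∃ sa : ℝ, 0 < sa ∧ sa * sa = A :=
    ⟨Real.sqrt A, Real.sqrt_pos.2 hApos, Real.mul_self_sqrt hApos.le⟩
  obtain ⟨sb, hsb, rfl⟩ : ∃ sb : ℝ, 0 < sb ∧ sb * sb = B :=
    ⟨Real.sqrt B, Real.sqrt_pos.2 hBpos, Real.mul_self_sqrt hBpos.le⟩
  rw [Real.sqrt_mul_self hsa.le, Real.sqrt_mul_self hsb.le]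
  have h2 := h (sb / sa) (by positivity)
  have h3 : (sb / sa * (sa * sa) + sb * sb / (sb / sa)) / 2 = sa * sb := by
    field_simp
    ring
  linarith

lemma ftc {f g : ℝ → ℝ} (hf : ContinuousOn f (Icc 0 1))
    (hdf : ∀ x ∈ Ioo (0:ℝ) 1, HasDerivAt f (g x) x)
    (hg : ContinuousOn g (Icc 0 1)) {a b : ℝ} (ha : 0 < a) (hab : a ≤ b) (hb : b ≤ 1) :
    f b - f a = ∫ s in Ioc a b, g s := by
  have hsub : Icc a b ⊆ Icc 0 1 := Icc_subset_Icc ha.le hb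
  have h := intervalIntegral.integral_eq_sub_of_hasDeriv_right_of_le hab
      (hf.mono hsub)
      (fun x hx => (hdf x ⟨ha.trans hx.1, lt_of_lt_of_le hx.2 hb⟩).hasDerivWithinAt)
      ((hg.mono hsub).intervalIntegrable_of_Icc hab)
  rw [intervalIntegral.integral_of_le hab] at h
  exact h.symm

lemma contOn_rpow (c : ℝ) {a b : ℝ} (ha : 0 < a) :
    ContinuousOn (fun s : ℝ => s ^ c) (Icc a b) := fun x hx =>
  (Real.continuousAt_rpow_const x c (Or.inl (ha.trans_le hx.1).ne')).continuousWithinAt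

lemma integrableOn_Ioc_of_contOn {h : ℝ → ℝ} {a b : ℝ} (hc : ContinuousOn h (Icc a b)) :
    IntegrableOn h (Ioc a b) :=
  (hc.integrableOn_Icc).mono_set Ioc_subset_Icc_self

lemma integrableOn_Ioo01_of_contOn {h : ℝ → ℝ} (hc : ContinuousOn h (Icc 0 1)) :
    IntegrableOn h (Ioo (0:ℝ) 1) :=
  (hc.integrableOn_Icc).mono_set Ioo_subset_Icc_self

lemma integrableOn_of_bounded {h : ℝ → ℝ} {C : ℝ}
    (hm : ContinuousOn h (Ioo (0:ℝ) 1)) (hb : ∀ x ∈ Ioo (0:ℝ) 1, |h x| ≤ C) :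
    IntegrableOn h (Ioo (0:ℝ) 1) := by
  refine Integrable.mono' (g := fun _ => C) ?_ (hm.aestronglyMeasurable measurableSet_Ioo) ?_
  · exact integrableOn_const measure_Ioo_lt_top.ne
  · exact (ae_restrict_iff' measurableSet_Ioo).2 (Filter.Eventually.of_forall fun x hx => by
      simpa [Real.norm_eq_abs] using hb x hx)

lemma integral_le_const {φ : ℝ → ℝ} {c : ℝ} (hc : 0 ≤ c)
    (h : ∀ x ∈ Ioo (0:ℝ) 1, φ x ≤ c) :
    ∫ x in Ioo (0:ℝ) 1, φ x ≤ c := by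
  by_cases hint : IntegrableOn φ (Ioo (0:ℝ) 1)
  · have h1 : ∫ x in Ioo (0:ℝ) 1, φ x ≤ ∫ _x in Ioo (0:ℝ) 1, c :=
      setIntegral_mono_on hint (integrableOn_const measure_Ioo_lt_top.ne)
        measurableSet_Ioo h
    have h2 : ∫ _x in Ioo (0:ℝ) 1, c = c := by
      rw [setIntegral_const, Real.volume_real_Ioo]
      norm_num
    linarith
  · rw [integral_undef hint]
    exact hc

-- ∫ s^(-k) over Ioc a b, 0 < a ≤ b, bound

lemma rpow_int_bound {a b k : ℝ} (ha : 0 < a) (hab : a ≤ b) (hk3 : 3 ≤ k) :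
    ∫ s in Ioc a b, s ^ (-k) ≤ a ^ (1 - k) / 2 := by
  rw [← intervalIntegral.integral_of_le hab]
  rw [integral_rpow (Or.inr ⟨by intro h; rw [neg_eq_iff_eq_neg] at h; linarith,
    Set.notMem_uIcc_of_lt ha (ha.trans_le hab)⟩)]
  have hne : -k + 1 < 0 := by linarith
  have hmono : b ^ (-k + 1) ≤ a ^ (-k + 1) :=
    Real.rpow_le_rpow_of_nonpos ha hab hne.le
  have ha1 : (0:ℝ) ≤ a ^ (-k + 1) := (Real.rpow_pos_of_pos ha _).le
  have hb1 : (0:ℝ) ≤ b ^ (-k + 1) := (Real.rpow_pos_of_pos (ha.trans_le hab) _).le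
  have he : (1:ℝ) - k = -k + 1 := by ring
  rw [he]
  calc (b ^ (-k + 1) - a ^ (-k + 1)) / (-k + 1)
      = (a ^ (-k + 1) - b ^ (-k + 1)) / (k - 1) := by
        rw [div_eq_div_iff (by linarith) (by linarith)]; ring
    _ ≤ a ^ (-k + 1) / 2 :=
        div_le_div₀ ha1 (by linarith) (by norm_num) (by linarith)

lemma setIntegral_cs {s : Set ℝ} {u v : ℝ → ℝ} {A B : ℝ}
    (h2u : IntegrableOn (fun x => u x ^ 2) s) (h2v : IntegrableOn (fun x => v x ^ 2) s)
    (huv : IntegrableOn (fun x => u x * v x) s)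
    (hA : ∫ x in s, u x ^ 2 ≤ A) (hB : ∫ x in s, v x ^ 2 ≤ B)
    (hA0 : 0 ≤ A) (hB0 : 0 ≤ B) :
    ∫ x in s, u x * v x ≤ Real.sqrt A * Real.sqrt B := by
  refine cs_aux hA0 hB0 fun l hl => ?_
  have hpt : ∀ x, u x * v x ≤ (l * u x ^ 2 + v x ^ 2 / l) / 2 := by
    intro x
    rw [le_div_iff₀ (by norm_num : (0:ℝ) < 2), ← sub_nonneg]
    have he : l * u x ^ 2 + v x ^ 2 / l - u x * v x * 2 = (l * u x - v x) ^ 2 / l := by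
      field_simp
      ring
    rw [he]
    positivity
  have hcomb : IntegrableOn (fun x => (l * u x ^ 2 + v x ^ 2 / l) / 2) s :=
    ((h2u.const_mul l).add (h2v.div_const l)).div_const 2
  calc ∫ x in s, u x * v x ≤ ∫ x in s, (l * u x ^ 2 + v x ^ 2 / l) / 2 :=
        integral_mono huv hcomb fun x => hpt x
    _ = (l * (∫ x in s, u x ^ 2) + (∫ x in s, v x ^ 2) / l) / 2 := by
        rw [integral_div, integral_add (h2u.const_mul l) (h2v.div_const l),
          MeasureTheory.integral_const_mul, integral_div]
    _ ≤ (l * A + B / l) / 2 := by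
        have h1 : l * (∫ x in s, u x ^ 2) ≤ l * A := by
          exact mul_le_mul_of_nonneg_left hA hl.le
        have h2 : (∫ x in s, v x ^ 2) / l ≤ B / l := by
          exact div_le_div_of_nonneg_right hB hl.le
        linarith

lemma key {f g : ℝ → ℝ} (hf : ContinuousOn f (Icc 0 1))
    (hdf : ∀ x ∈ Ioo (0:ℝ) 1, HasDerivAt f (g x) x)
    (hg : ContinuousOn g (Icc 0 1))
    {k B Q : ℝ} (hk3 : 3 ≤ k) (hk5 : k ≤ 5) (hB0 : 0 ≤ B) (hQ0 : 0 ≤ Q)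
    (hfB : ∫ s in Ioc (1/2 : ℝ) 1, (f s)^2 * s^(5:ℕ) ≤ B)
    (hQ : ∀ a b : ℝ, 0 < a → a ≤ b → b ≤ 1 → ∫ s in Ioc a b, (g s)^2 * s ^ k ≤ Q) :
    ∀ ρ ∈ Ioo (0:ℝ) 1, (f ρ)^2 ≤ 256 * (B + Q) * ρ ^ ((1:ℝ) - k) := by
  have hIcc : Icc (1/2:ℝ) 1 ⊆ Icc 0 1 := Icc_subset_Icc (by norm_num) le_rfl
  obtain ⟨σ, hσmem, hσmin⟩ := isCompact_Icc.exists_isMinOn (nonempty_Icc.2 (by norm_num))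
    ((hf.mono hIcc).pow 2)
  have hsσ : (1/2:ℝ) ≤ σ := hσmem.1
  have hfσ : (f σ)^2 ≤ 64 * B := by
    have hint2 : IntegrableOn (fun s : ℝ => 32 * ((f s)^2 * s^(5:ℕ))) (Ioc (1/2:ℝ) 1) := by
      apply integrableOn_Ioc_of_contOn
      exact continuousOn_const.mul (((hf.mono hIcc).pow 2).mul (continuous_pow 5).continuousOn)
    have hc1 : ∫ _s in Ioc (1/2:ℝ) 1, (f σ)^2 = (1/2) * (f σ)^2 := by
      rw [setIntegral_const, Real.volume_real_Ioc]
      norm_num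
    have hc2 : ∫ _s in Ioc (1/2:ℝ) 1, (f σ)^2 ≤ ∫ s in Ioc (1/2:ℝ) 1, 32 * ((f s)^2 * s^(5:ℕ)) := by
      refine setIntegral_mono_on (integrableOn_const measure_Ioc_lt_top.ne) hint2
        measurableSet_Ioc fun s hs => ?_
      have h1 : (f σ)^2 ≤ (f s)^2 := isMinOn_iff.1 hσmin s (Ioc_subset_Icc_self hs)
      have h2 : ((1:ℝ)/2)^(5:ℕ) ≤ s^(5:ℕ) := pow_le_pow_left₀ (by norm_num) hs.1.le 5
      nlinarith [sq_nonneg (f s)]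
    have hc3 : ∫ s in Ioc (1/2:ℝ) 1, 32 * ((f s)^2 * s^(5:ℕ))
        = 32 * ∫ s in Ioc (1/2:ℝ) 1, (f s)^2 * s^(5:ℕ) := integral_const_mul 32 _
    rw [hc1] at hc2
    rw [hc3] at hc2
    nlinarith [hfB]
  intro ρ hρ
  set a := min ρ σ with ha_def
  set b := max ρ σ with hb_def
  have hσpos : (0:ℝ) < σ := lt_of_lt_of_le (by norm_num) hsσ
  have ha : 0 < a := lt_min hρ.1 hσpos
  have hab : a ≤ b := min_le_max
  have hb1 : b ≤ 1 := max_le hρ.2.le hσmem.2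
  have hρ1k : (1:ℝ) ≤ ρ ^ ((1:ℝ) - k) :=
    Real.one_le_rpow_of_pos_of_le_one_of_nonpos hρ.1 hρ.2.le (by linarith)
  have hIab : Icc a b ⊆ Icc 0 1 := Icc_subset_Icc ha.le hb1
  have hucont : ContinuousOn (fun s : ℝ => s ^ (-(k/2))) (Icc a b) := contOn_rpow _ ha
  have hvcont : ContinuousOn (fun s : ℝ => s ^ (k/2) * |g s|) (Icc a b) :=
    (contOn_rpow _ ha).mul ((hg.mono hIab).abs)
  have hu2 : IntegrableOn (fun s : ℝ => (s ^ (-(k/2)))^2) (Ioc a b) :=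
    integrableOn_Ioc_of_contOn (hucont.pow 2)
  have hv2 : IntegrableOn (fun s : ℝ => (s ^ (k/2) * |g s|)^2) (Ioc a b) :=
    integrableOn_Ioc_of_contOn (hvcont.pow 2)
  have huv : IntegrableOn (fun s : ℝ => (s ^ (-(k/2))) * (s ^ (k/2) * |g s|)) (Ioc a b) :=
    integrableOn_Ioc_of_contOn (hucont.mul hvcont)
  have hA : ∫ s in Ioc a b, (s ^ (-(k/2)))^2 ≤ 8 * ρ ^ ((1:ℝ) - k) := by
    have he : ∀ s ∈ Ioc a b, (s ^ (-(k/2)))^2 = s ^ (-k) := by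
      intro s hs
      have hs0 : (0:ℝ) < s := ha.trans hs.1
      rw [← Real.rpow_natCast (s ^ (-(k/2))) 2, ← Real.rpow_mul hs0.le]
      rw [show (-(k/2) * ((2:ℕ):ℝ)) = -k by push_cast; ring]
    rw [setIntegral_congr_fun measurableSet_Ioc he]
    have hbd := rpow_int_bound ha hab hk3
    rcases le_total ρ σ with hc | hc
    · have haρ : a = ρ := by rw [ha_def]; exact min_eq_left hc
      have hae : a ^ ((1:ℝ)-k) = ρ ^ ((1:ℝ)-k) := by rw [haρ]
      linarith [Real.rpow_pos_of_pos hρ.1 ((1:ℝ)-k), hbd]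
    · have haσ : a = σ := by rw [ha_def]; exact min_eq_right hc
      have h1 : a ^ ((1:ℝ)-k) ≤ (1/2:ℝ) ^ ((1:ℝ)-k) :=
        Real.rpow_le_rpow_of_nonpos (by norm_num) (haσ ▸ hsσ) (by linarith)
      have h2 : (1/2:ℝ) ^ ((1:ℝ)-k) ≤ (1/2:ℝ) ^ (-4:ℝ) :=
        Real.rpow_le_rpow_of_exponent_ge (by norm_num) (by norm_num) (by linarith)
      have h3 : (1/2:ℝ) ^ (-4:ℝ) = 16 := by
        rw [show (-4:ℝ) = ((-4:ℤ):ℝ) by norm_num, Real.rpow_intCast]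
        norm_num
      linarith
  have hBQ : ∫ s in Ioc a b, (s ^ (k/2) * |g s|)^2 ≤ Q := by
    have he : ∀ s ∈ Ioc a b, (s ^ (k/2) * |g s|)^2 = (g s)^2 * s ^ k := by
      intro s hs
      have hs0 : (0:ℝ) < s := ha.trans hs.1
      rw [mul_pow, sq_abs, ← Real.rpow_natCast (s ^ (k/2)) 2, ← Real.rpow_mul hs0.le]
      rw [show (k/2 * ((2:ℕ):ℝ)) = k by push_cast; ring]
      ring
    rw [setIntegral_congr_fun measurableSet_Ioc he]
    exact hQ a b ha hab hb1
  have hcs : ∫ s in Ioc a b, (s ^ (-(k/2))) * (s ^ (k/2) * |g s|)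
      ≤ Real.sqrt (8 * ρ ^ ((1:ℝ)-k)) * Real.sqrt Q :=
    setIntegral_cs hu2 hv2 huv hA hBQ (by positivity) hQ0
  have hgabs : ∫ s in Ioc a b, |g s| = ∫ s in Ioc a b, (s ^ (-(k/2))) * (s ^ (k/2) * |g s|) := by
    refine (setIntegral_congr_fun measurableSet_Ioc fun s hs => ?_).symm
    have hs0 : (0:ℝ) < s := ha.trans hs.1
    rw [← mul_assoc, ← Real.rpow_add hs0]
    norm_num
  have hftc : f b - f a = ∫ s in Ioc a b, g s := ftc hf hdf hg ha hab hb1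
  have habs : |f b - f a| ≤ Real.sqrt (8 * ρ ^ ((1:ℝ)-k)) * Real.sqrt Q := by
    rw [hftc]
    calc |∫ s in Ioc a b, g s| ≤ ∫ s in Ioc a b, |g s| := by
          simpa [Real.norm_eq_abs] using
            norm_integral_le_integral_norm (μ := volume.restrict (Ioc a b)) (f := g)
      _ = _ := hgabs
      _ ≤ _ := hcs
  have hfρσ : |f ρ - f σ| = |f b - f a| := by
    rcases le_total ρ σ with hc | hc
    · rw [ha_def, hb_def, min_eq_left hc, max_eq_right hc, abs_sub_comm]
    · rw [ha_def, hb_def, min_eq_right hc, max_eq_left hc]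
  have hfσabs : |f σ| ≤ Real.sqrt (64 * B) := by
    have h := Real.sqrt_le_sqrt hfσ
    rwa [Real.sqrt_sq_eq_abs] at h
  have hfρ : |f ρ| ≤ Real.sqrt (64*B) + Real.sqrt (8 * ρ ^ ((1:ℝ)-k)) * Real.sqrt Q := by
    have h1 : |f ρ| - |f σ| ≤ |f ρ - f σ| := abs_sub_abs_le_abs_sub _ _
    rw [hfρσ] at h1
    linarith
  have ht1 : Real.sqrt (64*B)^2 = 64*B := Real.sq_sqrt (by linarith)
  have ht2 : (Real.sqrt (8 * ρ ^ ((1:ℝ)-k)) * Real.sqrt Q)^2 = 8 * ρ ^ ((1:ℝ)-k) * Q := by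
    rw [mul_pow, Real.sq_sqrt (by positivity), Real.sq_sqrt hQ0]
  have h2 : (f ρ)^2 ≤ (Real.sqrt (64*B) + Real.sqrt (8 * ρ ^ ((1:ℝ)-k)) * Real.sqrt Q)^2 := by
    rw [← sq_abs]
    exact pow_le_pow_left₀ (abs_nonneg _) hfρ 2
  nlinarith [sq_nonneg (Real.sqrt (64*B) - Real.sqrt (8 * ρ ^ ((1:ℝ)-k)) * Real.sqrt Q),
    mul_nonneg hB0 (by linarith : (0:ℝ) ≤ ρ ^ ((1:ℝ)-k) - 1),
    mul_nonneg hQ0 (by linarith : (0:ℝ) ≤ ρ ^ ((1:ℝ)-k) - 1)]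

lemma ibp {F1 F2 : ℝ → ℝ} (hF1 : ContinuousOn F1 (Icc 0 1)) (hF2 : ContinuousOn F2 (Icc 0 1))
    (hd : ∀ x ∈ Ioo (0:ℝ) 1, HasDerivAt F1 (F2 x) x) {D : ℝ}
    (hD : ∀ e b : ℝ, 0 < e → e ≤ b → b ≤ 1 →
      ∫ s in Ioc e b, (F2 s + 5*F1 s/s)^2 * s^(5:ℕ) ≤ D)
    {a b : ℝ} (ha : 0 < a) (hab : a ≤ b) (hb : b ≤ 1) :
    ∫ s in Ioc a b, (F1 s)^2 * s^(3:ℕ) ≤ D / 5 := by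
  have hwint : ∀ e : ℝ, e ∈ Ioo 0 a →
      ∫ s in Ioc a b, (F1 s)^2 * s^(3:ℕ) ≤ (D + 5 * (F1 e)^2 * e^(4:ℕ)) / 5 := by
    intro e he
    have he0 : (0:ℝ) < e := he.1
    have heb : e ≤ b := le_trans he.2.le hab
    have hsub : Icc e b ⊆ Icc 0 1 := Icc_subset_Icc he0.le hb
    have hder : ∀ x ∈ Ioo e b,
        HasDerivAt (fun s => 5 * ((F1 s)^2 * s^(4:ℕ)))
          (10 * F2 x * F1 x * x^(4:ℕ) + 20 * (F1 x)^2 * x^(3:ℕ)) x := by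
      intro x hx
      have hx01 : x ∈ Ioo (0:ℝ) 1 := ⟨he0.trans hx.1, lt_of_lt_of_le hx.2 hb⟩
      have h1 : HasDerivAt (fun s => (F1 s)^2) (2 * F1 x * F2 x) x := by
        simpa [pow_one] using (hd x hx01).fun_pow 2
      have h2 : HasDerivAt (fun s : ℝ => s^(4:ℕ)) (4*x^(3:ℕ)) x := by
        simpa using hasDerivAt_pow 4 x
      have h3 := (h1.fun_mul h2).const_mul (5:ℝ)
      exact h3.congr_deriv (by ring)
    have hu'cont : ContinuousOn
        (fun x => 10 * F2 x * F1 x * x^(4:ℕ) + 20 * (F1 x)^2 * x^(3:ℕ)) (Icc e b) :=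
      (((continuousOn_const.mul (hF2.mono hsub)).mul (hF1.mono hsub)).mul
        (continuous_pow 4).continuousOn).add
        ((continuousOn_const.mul ((hF1.mono hsub).pow 2)).mul (continuous_pow 3).continuousOn)
    have hucont : ContinuousOn (fun s => 5 * ((F1 s)^2 * s^(4:ℕ))) (Icc e b) :=
      continuousOn_const.mul (((hF1.mono hsub).pow 2).mul (continuous_pow 4).continuousOn)
    have hftc := intervalIntegral.integral_eq_sub_of_hasDeriv_right_of_le heb hucont
      (fun x hx => (hder x hx).hasDerivWithinAt)
      (hu'cont.intervalIntegrable_of_Icc heb)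
    rw [intervalIntegral.integral_of_le heb] at hftc
    -- pointwise identity and integral split
    have hint1 : IntegrableOn (fun s => (F2 s)^2 * s^(5:ℕ)) (Ioc e b) :=
      (((hF2.mono hsub).pow 2).mul (continuous_pow 5).continuousOn).integrableOn_Icc.mono_set
        Ioc_subset_Icc_self
    have hint2 : IntegrableOn
        (fun s => 10 * F2 s * F1 s * s^(4:ℕ) + 20 * (F1 s)^2 * s^(3:ℕ)) (Ioc e b) :=
      hu'cont.integrableOn_Icc.mono_set Ioc_subset_Icc_self
    have hint3 : IntegrableOn (fun s => 5 * ((F1 s)^2 * s^(3:ℕ))) (Ioc e b) :=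
      (continuousOn_const.mul (((hF1.mono hsub).pow 2).mul
        (continuous_pow 3).continuousOn)).integrableOn_Icc.mono_set Ioc_subset_Icc_self
    have hint23 : IntegrableOn
        (fun s => (10 * F2 s * F1 s * s^(4:ℕ) + 20 * (F1 s)^2 * s^(3:ℕ))
          + 5 * ((F1 s)^2 * s^(3:ℕ))) (Ioc e b) :=
      (hu'cont.add (continuousOn_const.mul (((hF1.mono hsub).pow 2).mul
        (continuous_pow 3).continuousOn))).integrableOn_Icc.mono_set Ioc_subset_Icc_self
    have hsplit : ∫ s in Ioc e b, (F2 s + 5*F1 s/s)^2 * s^(5:ℕ)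
        = (∫ s in Ioc e b, (F2 s)^2 * s^(5:ℕ))
          + ((∫ s in Ioc e b, (10 * F2 s * F1 s * s^(4:ℕ) + 20 * (F1 s)^2 * s^(3:ℕ)))
          + (∫ s in Ioc e b, 5 * ((F1 s)^2 * s^(3:ℕ)))) := by
      calc ∫ s in Ioc e b, (F2 s + 5*F1 s/s)^2 * s^(5:ℕ)
          = ∫ s in Ioc e b, ((F2 s)^2 * s^(5:ℕ)
            + ((10 * F2 s * F1 s * s^(4:ℕ) + 20 * (F1 s)^2 * s^(3:ℕ))
              + 5 * ((F1 s)^2 * s^(3:ℕ)))) := by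
            refine setIntegral_congr_fun measurableSet_Ioc fun s hs => ?_
            have hs0 : (0:ℝ) < s := he0.trans hs.1
            field_simp
            ring
        _ = (∫ s in Ioc e b, (F2 s)^2 * s^(5:ℕ))
            + ∫ s in Ioc e b, ((10 * F2 s * F1 s * s^(4:ℕ) + 20 * (F1 s)^2 * s^(3:ℕ))
              + 5 * ((F1 s)^2 * s^(3:ℕ))) := integral_add hint1 hint23
        _ = _ := by rw [integral_add hint2 hint3]
    have hI1 : 0 ≤ ∫ s in Ioc e b, (F2 s)^2 * s^(5:ℕ) :=
      setIntegral_nonneg measurableSet_Ioc fun s hs =>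
        mul_nonneg (sq_nonneg _) (pow_nonneg (he0.trans hs.1).le _)
    have hub : (0:ℝ) ≤ 5 * ((F1 b)^2 * b^(4:ℕ)) := by positivity
    have hDe := hD e b he0 heb hb
    have hJ3 : ∫ s in Ioc e b, 5 * ((F1 s)^2 * s^(3:ℕ))
        = 5 * ∫ s in Ioc e b, (F1 s)^2 * s^(3:ℕ) := integral_const_mul 5 _
    have hmono : ∫ s in Ioc a b, (F1 s)^2 * s^(3:ℕ)
        ≤ ∫ s in Ioc e b, (F1 s)^2 * s^(3:ℕ) := by
      refine setIntegral_mono_set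
        ((((hF1.mono hsub).pow 2).mul (continuous_pow 3).continuousOn).integrableOn_Icc.mono_set
          Ioc_subset_Icc_self)
        ((ae_restrict_iff' measurableSet_Ioc).2 (Filter.Eventually.of_forall fun s hs =>
          mul_nonneg (sq_nonneg _) (pow_nonneg (he0.trans hs.1).le _)))
        ((Ioc_subset_Ioc he.2.le le_rfl).eventuallyLE)
    rw [hsplit, hftc, hJ3] at hDe
    linarith
  have hev : ∀ᶠ e in nhdsWithin (0:ℝ) (Ioi 0), e ∈ Ioo (0:ℝ) a :=
    Ioo_mem_nhdsGT_of_mem ⟨le_rfl, ha⟩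
  have hF1t : Filter.Tendsto F1 (nhdsWithin (0:ℝ) (Ioi 0)) (nhds (F1 0)) := by
    have h0 : ContinuousWithinAt F1 (Icc 0 1) 0 := hF1 0 ⟨le_rfl, zero_le_one⟩
    refine h0.tendsto.mono_left (nhdsWithin_le_iff.2 ?_)
    exact Filter.mem_of_superset (Ioo_mem_nhdsGT zero_lt_one) Ioo_subset_Icc_self
  have hidt : Filter.Tendsto (fun e : ℝ => e) (nhdsWithin (0:ℝ) (Ioi 0)) (nhds 0) :=
    Filter.tendsto_id.mono_left nhdsWithin_le_nhds
  have hlim : Filter.Tendsto (fun e => (D + 5 * (F1 e)^2 * e^(4:ℕ)) / 5)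
      (nhdsWithin (0:ℝ) (Ioi 0)) (nhds ((D + 5 * (F1 0)^2 * (0:ℝ)^(4:ℕ)) / 5)) := by
    exact (Filter.Tendsto.add tendsto_const_nhds
      (((hF1t.pow 2).const_mul 5).mul (hidt.pow 4))).div_const 5
  rw [show (D + 5 * (F1 0)^2 * (0:ℝ)^(4:ℕ)) / 5 = D / 5 by norm_num] at hlim
  exact ge_of_tendsto hlim (hev.mono fun e he => hwint e he)

lemma setup1 {f : ℝ → ℝ} (hf : ContDiffOn ℝ 1 f (Icc 0 1)) :
    ContinuousOn f (Icc 0 1) ∧ ContinuousOn (derivWithin f (Icc 0 1)) (Icc 0 1) ∧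
    (∀ x ∈ Ioo (0:ℝ) 1, HasDerivAt f (derivWithin f (Icc 0 1) x) x) ∧
    (∀ x ∈ Ioo (0:ℝ) 1, deriv f x = derivWithin f (Icc 0 1) x) := by
  have hu : UniqueDiffOn ℝ (Icc (0:ℝ) 1) := uniqueDiffOn_Icc one_pos
  have hde : ∀ x ∈ Ioo (0:ℝ) 1, deriv f x = derivWithin f (Icc 0 1) x := by
    intro x hx
    exact (derivWithin_of_mem_nhds (Icc_mem_nhds hx.1 hx.2)).symm
  refine ⟨hf.continuousOn, hf.continuousOn_derivWithin hu le_rfl, ?_, hde⟩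
  intro x hx
  have hmem : Icc (0:ℝ) 1 ∈ nhds x := Icc_mem_nhds hx.1 hx.2
  have hdiff : DifferentiableAt ℝ f x :=
    ((hf.differentiableOn one_ne_zero) x (Ioo_subset_Icc_self hx)).differentiableAt hmem
  have := hdiff.hasDerivAt
  rwa [hde x hx] at this

lemma setup2 {f : ℝ → ℝ} (hf : ContDiffOn ℝ 2 f (Icc 0 1)) :
    ContinuousOn (derivWithin (derivWithin f (Icc 0 1)) (Icc 0 1)) (Icc 0 1) ∧
    (∀ x ∈ Ioo (0:ℝ) 1, HasDerivAt (derivWithin f (Icc 0 1))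
        (derivWithin (derivWithin f (Icc 0 1)) (Icc 0 1) x) x) ∧
    (∀ x ∈ Ioo (0:ℝ) 1, deriv (deriv f) x
        = derivWithin (derivWithin f (Icc 0 1)) (Icc 0 1) x) := by
  have hu : UniqueDiffOn ℝ (Icc (0:ℝ) 1) := uniqueDiffOn_Icc one_pos
  have hF1 : ContDiffOn ℝ 1 (derivWithin f (Icc 0 1)) (Icc 0 1) :=
    hf.derivWithin hu (by norm_num)
  obtain ⟨hF1c, hF2c, hdF1, hdeF1⟩ := setup1 hF1
  refine ⟨hF2c, hdF1, ?_⟩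
  intro x hx
  have h1 : ∀ y ∈ Ioo (0:ℝ) 1, deriv f y = derivWithin f (Icc 0 1) y :=
    (setup1 (hf.of_le (by norm_num))).2.2.2
  have h2 : deriv (deriv f) x = deriv (derivWithin f (Icc 0 1)) x :=
    Filter.EventuallyEq.deriv_eq (Filter.eventuallyEq_of_mem (isOpen_Ioo.mem_nhds hx) h1)
  rw [h2, hdeF1 x hx]

lemma lhs_pointwise {x ρ K : ℝ} (hρ0 : 0 < ρ) (hρ1 : ρ ≤ 1) (hK0 : 0 ≤ K)
    {w : ℝ} {m : ℕ} (hwm : 6 * w + (m:ℝ) = 4) (hx : x ≤ K * ρ ^ w) (hx0 : 0 ≤ x) :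
    x ^ (6:ℕ) * ρ ^ m ≤ K ^ (6:ℕ) := by
  have h1 : x^(6:ℕ) ≤ (K * ρ ^ w)^(6:ℕ) := pow_le_pow_left₀ hx0 hx 6
  have h2 : (K * ρ^w)^(6:ℕ) = K^(6:ℕ) * (ρ^w)^(6:ℕ) := by ring
  have h3 : (ρ^w)^(6:ℕ) = ρ^(w*6) := by
    rw [← Real.rpow_natCast (ρ^w) 6, ← Real.rpow_mul hρ0.le]
    norm_num
  have h4 : (ρ^w)^(6:ℕ) * ρ^(m:ℕ) = ρ^(w*6 + (m:ℝ)) := by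
    rw [h3, ← Real.rpow_natCast ρ m, ← Real.rpow_add hρ0]
  have h5 : ρ ^ (w*6 + (m:ℝ)) ≤ 1 := by
    have he : w*6 + (m:ℝ) = 4 := by linarith
    rw [he]
    exact Real.rpow_le_one hρ0.le hρ1 (by norm_num)
  calc x^(6:ℕ) * ρ^m ≤ (K * ρ^w)^(6:ℕ) * ρ^m :=
        mul_le_mul_of_nonneg_right h1 (pow_nonneg hρ0.le m)
    _ = K^(6:ℕ) * ((ρ^w)^(6:ℕ) * ρ^m) := by rw [h2]; ring
    _ = K^(6:ℕ) * ρ^(w*6 + (m:ℝ)) := by rw [h4]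
    _ ≤ K^(6:ℕ) * 1 := mul_le_mul_of_nonneg_left h5 (pow_nonneg hK0 6)
    _ = K^(6:ℕ) := mul_one _

lemma final {L R : ℝ} (hR : 0 ≤ R) (hL0 : 0 ≤ L) (h : L ≤ 10^48 * R^6) :
    L ^ ((1:ℝ)/12) ≤ 10000 * R ^ ((1:ℝ)/2) := by
  have h1 : L ^ ((1:ℝ)/12) ≤ ((10:ℝ)^48 * R^6) ^ ((1:ℝ)/12) :=
    Real.rpow_le_rpow hL0 h (by norm_num)
  have h2 : ((10:ℝ)^48 * R^6) ^ ((1:ℝ)/12) = 10000 * R ^ ((1:ℝ)/2) := by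
    rw [Real.mul_rpow (by positivity) (by positivity)]
    congr 1
    · rw [← Real.rpow_natCast (10:ℝ) 48, ← Real.rpow_mul (by norm_num)]
      rw [show ((48:ℕ):ℝ) * ((1:ℝ)/12) = ((4:ℕ):ℝ) by norm_num, Real.rpow_natCast]
      norm_num
    · rw [← Real.rpow_natCast R 6, ← Real.rpow_mul hR]
      norm_num
  linarith

lemma Efacts {f F1 : ℝ → ℝ} (hfc : ContinuousOn f (Icc 0 1))
    (hF1c : ContinuousOn F1 (Icc 0 1)) :
    0 ≤ (∫ ρ in Ioo (0:ℝ) 1, ((f ρ)^2 + (F1 ρ)^2) * ρ^(5:ℕ))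
    ∧ (∫ s in Ioc (1/2:ℝ) 1, (f s)^2 * s^(5:ℕ)
        ≤ ∫ ρ in Ioo (0:ℝ) 1, ((f ρ)^2 + (F1 ρ)^2) * ρ^(5:ℕ))
    ∧ (∀ a b : ℝ, 0 ≤ a → b ≤ 1 → ∫ s in Ioo a b, (F1 s)^2 * s^(5:ℕ)
        ≤ ∫ ρ in Ioo (0:ℝ) 1, ((f ρ)^2 + (F1 ρ)^2) * ρ^(5:ℕ)) := by
  have hEcont : ContinuousOn (fun ρ : ℝ => ((f ρ)^2 + (F1 ρ)^2) * ρ^(5:ℕ)) (Icc 0 1) :=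
    ((hfc.pow 2).add (hF1c.pow 2)).mul (continuous_pow 5).continuousOn
  have hEint : IntegrableOn (fun ρ : ℝ => ((f ρ)^2 + (F1 ρ)^2) * ρ^(5:ℕ)) (Ioo (0:ℝ) 1) :=
    hEcont.integrableOn_Icc.mono_set Ioo_subset_Icc_self
  have hE0 : 0 ≤ ∫ ρ in Ioo (0:ℝ) 1, ((f ρ)^2 + (F1 ρ)^2) * ρ^(5:ℕ) :=
    setIntegral_nonneg measurableSet_Ioo fun x hx =>
      mul_nonneg (by positivity) (pow_nonneg hx.1.le _)
  have hmono : ∀ g : ℝ → ℝ, ContinuousOn g (Icc 0 1) →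
      (∀ x ∈ Ioo (0:ℝ) 1, 0 ≤ g x) →
      (∀ x ∈ Ioo (0:ℝ) 1, g x ≤ ((f x)^2 + (F1 x)^2) * x^(5:ℕ)) →
      ∀ a b : ℝ, 0 ≤ a → b ≤ 1 →
        ∫ s in Ioo a b, g s ≤ ∫ ρ in Ioo (0:ℝ) 1, ((f ρ)^2 + (F1 ρ)^2) * ρ^(5:ℕ) := by
    intro g hgc hg0 hgle a b ha hb
    have hsub : Ioo a b ⊆ Ioo 0 1 := Ioo_subset_Ioo ha hb
    calc ∫ s in Ioo a b, g s ≤ ∫ s in Ioo (0:ℝ) 1, g s :=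
          setIntegral_mono_set (hgc.integrableOn_Icc.mono_set Ioo_subset_Icc_self)
            ((ae_restrict_iff' measurableSet_Ioo).2
              (Filter.Eventually.of_forall fun s hs => hg0 s hs))
            hsub.eventuallyLE
      _ ≤ _ := setIntegral_mono_on (hgc.integrableOn_Icc.mono_set Ioo_subset_Icc_self)
            hEint measurableSet_Ioo hgle
  refine ⟨hE0, ?_, ?_⟩
  · rw [integral_Ioc_eq_integral_Ioo]
    exact hmono (fun s => (f s)^2 * s^(5:ℕ))
      ((hfc.pow 2).mul (continuous_pow 5).continuousOn)
      (fun x hx => mul_nonneg (sq_nonneg _) (pow_nonneg hx.1.le _))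
      (fun x hx => mul_le_mul_of_nonneg_right (by nlinarith [sq_nonneg (F1 x)])
        (pow_nonneg hx.1.le _))
      (1/2) 1 (by norm_num) le_rfl
  · intro a b ha hb
    exact hmono (fun s => (F1 s)^2 * s^(5:ℕ))
      ((hF1c.pow 2).mul (continuous_pow 5).continuousOn)
      (fun x hx => mul_nonneg (sq_nonneg _) (pow_nonneg hx.1.le _))
      (fun x hx => mul_le_mul_of_nonneg_right (by nlinarith [sq_nonneg (f x)])
        (pow_nonneg hx.1.le _))
      a b ha hb

lemma part1 {f : ℝ → ℝ} (hf : ContDiffOn ℝ 1 f (Icc 0 1)) :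
    (∫ ρ in Ioo (0:ℝ) 1, |f ρ| ^ (12:ℕ) * ρ ^ (28:ℕ)) ^ ((1:ℝ)/12)
      ≤ 10000 * ((∫ ρ in Ioo (0:ℝ) 1, (|f ρ| ^ 2 + |deriv f ρ| ^ 2) * ρ ^ 5) ^ ((1:ℝ)/2)) := by
  obtain ⟨hfc, hF1c, hdf, hde⟩ := setup1 hf
  obtain ⟨hE0, hfB, hmono⟩ := Efacts hfc hF1c
  set F1 := derivWithin f (Icc (0:ℝ) 1) with hF1_def
  set E := ∫ ρ in Ioo (0:ℝ) 1, ((f ρ)^2 + (F1 ρ)^2) * ρ^(5:ℕ) with hE_def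
  have hEeq : (∫ ρ in Ioo (0:ℝ) 1, (|f ρ|^2 + |deriv f ρ|^2) * ρ^5) = E :=
    setIntegral_congr_fun measurableSet_Ioo fun x hx => by rw [hde x hx, sq_abs, sq_abs]
  have hQ : ∀ a b : ℝ, 0 < a → a ≤ b → b ≤ 1 →
      ∫ s in Ioc a b, (F1 s)^2 * s ^ (5:ℝ) ≤ E := by
    intro a b ha hab hb
    have he : ∀ s ∈ Ioc a b, (F1 s)^2 * s ^ (5:ℝ) = (F1 s)^2 * s^(5:ℕ) := fun s hs => by
      rw [show (5:ℝ) = ((5:ℕ):ℝ) by norm_num, Real.rpow_natCast]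
    rw [setIntegral_congr_fun measurableSet_Ioc he, integral_Ioc_eq_integral_Ioo]
    exact hmono a b ha.le hb
  have hkey := key hfc hdf hF1c (k := 5) (B := E) (Q := E)
    (by norm_num) le_rfl hE0 hE0 hfB hQ
  have hL : ∫ ρ in Ioo (0:ℝ) 1, |f ρ|^(12:ℕ) * ρ^(28:ℕ) ≤ 10^48 * E^6 := by
    apply integral_le_const (by positivity)
    intro ρ hρ
    have hc := hkey ρ hρ
    rw [show ((1:ℝ) - 5) = -(4:ℝ) by norm_num] at hc
    have hx : (f ρ)^2 ≤ 512*E * ρ^(-(4:ℝ)) := by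
      calc (f ρ)^2 ≤ 256*(E+E)*ρ^(-(4:ℝ)) := hc
        _ = 512*E * ρ^(-(4:ℝ)) := by ring
    have hlp := lhs_pointwise (K := 512*E) (w := -(4:ℝ)) (m := 28) hρ.1 hρ.2.le
      (by linarith) (by norm_num) hx (sq_nonneg _)
    calc |f ρ|^(12:ℕ) * ρ^(28:ℕ) = ((f ρ)^2)^(6:ℕ) * ρ^(28:ℕ) := by
          rw [← sq_abs]; ring
      _ ≤ (512*E)^(6:ℕ) := hlp
      _ = 512^6 * E^6 := by ring
      _ ≤ 10^48 * E^6 := mul_le_mul_of_nonneg_right (by norm_num) (pow_nonneg hE0 6)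
  have hL0 : 0 ≤ ∫ ρ in Ioo (0:ℝ) 1, |f ρ|^(12:ℕ) * ρ^(28:ℕ) :=
    setIntegral_nonneg measurableSet_Ioo fun x hx =>
      mul_nonneg (pow_nonneg (abs_nonneg _) _) (pow_nonneg hx.1.le _)
  rw [hEeq]
  exact final hE0 hL0 hL

lemma part2 {f : ℝ → ℝ} (hf : ContDiffOn ℝ 1 f (Icc 0 1)) :
    (∫ ρ in Ioo (0:ℝ) 1,
        |∫ s in Ioo ρ 1, s ^ ((2:ℝ) - 1/12) * deriv f s| ^ (12:ℕ) * ρ ^ (5:ℕ)) ^ ((1:ℝ)/12)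
      ≤ 10000 * ((∫ ρ in Ioo (0:ℝ) 1, (|f ρ| ^ 2 + |deriv f ρ| ^ 2) * ρ ^ 5) ^ ((1:ℝ)/2)) := by
  obtain ⟨hfc, hF1c, hdf, hde⟩ := setup1 hf
  obtain ⟨hE0, hfB, hmono⟩ := Efacts hfc hF1c
  set F1 := derivWithin f (Icc (0:ℝ) 1) with hF1_def
  set E := ∫ ρ in Ioo (0:ℝ) 1, ((f ρ)^2 + (F1 ρ)^2) * ρ^(5:ℕ) with hE_def
  have hEeq : (∫ ρ in Ioo (0:ℝ) 1, (|f ρ|^2 + |deriv f ρ|^2) * ρ^5) = E :=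
    setIntegral_congr_fun measurableSet_Ioo fun x hx => by rw [hde x hx, sq_abs, sq_abs]
  have hptw : ∀ ρ ∈ Ioo (0:ℝ) 1,
      |∫ s in Ioo ρ 1, s ^ ((2:ℝ) - 1/12) * deriv f s|^2 ≤ 6*E * ρ^(-(1:ℝ)/6) := by
    intro ρ hρ
    have hρ0 : (0:ℝ) < ρ := hρ.1
    have hIsub : Icc ρ 1 ⊆ Icc (0:ℝ) 1 := Icc_subset_Icc hρ0.le le_rfl
    have hgr : (∫ s in Ioo ρ 1, s ^ ((2:ℝ) - 1/12) * deriv f s)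
        = ∫ s in Ioo ρ 1, s ^ ((2:ℝ) - 1/12) * F1 s :=
      setIntegral_congr_fun measurableSet_Ioo fun s hs => by
        rw [hde s ⟨hρ0.trans hs.1, hs.2⟩]
    have hucont : ContinuousOn (fun s : ℝ => s ^ (-(7:ℝ)/12)) (Icc ρ 1) := contOn_rpow _ hρ0
    have hvcont : ContinuousOn (fun s : ℝ => s ^ ((5:ℝ)/2) * |F1 s|) (Icc ρ 1) :=
      (contOn_rpow _ hρ0).mul ((hF1c.mono hIsub).abs)
    have hu2 : IntegrableOn (fun s : ℝ => (s ^ (-(7:ℝ)/12))^2) (Ioo ρ 1) :=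
      (hucont.pow 2).integrableOn_Icc.mono_set Ioo_subset_Icc_self
    have hv2 : IntegrableOn (fun s : ℝ => (s ^ ((5:ℝ)/2) * |F1 s|)^2) (Ioo ρ 1) :=
      (hvcont.pow 2).integrableOn_Icc.mono_set Ioo_subset_Icc_self
    have huv : IntegrableOn
        (fun s : ℝ => (s ^ (-(7:ℝ)/12)) * (s ^ ((5:ℝ)/2) * |F1 s|)) (Ioo ρ 1) :=
      (hucont.mul hvcont).integrableOn_Icc.mono_set Ioo_subset_Icc_self
    have hA : ∫ s in Ioo ρ 1, (s ^ (-(7:ℝ)/12))^2 ≤ 6 * ρ^(-(1:ℝ)/6) := by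
      have he : ∀ s ∈ Ioo ρ 1, (s ^ (-(7:ℝ)/12))^2 = s ^ (-(7:ℝ)/6) := fun s hs => by
        have hs0 : (0:ℝ) < s := hρ0.trans hs.1
        rw [← Real.rpow_natCast (s ^ (-(7:ℝ)/12)) 2, ← Real.rpow_mul hs0.le]
        norm_num
      rw [setIntegral_congr_fun measurableSet_Ioo he, ← integral_Ioc_eq_integral_Ioo,
        ← intervalIntegral.integral_of_le hρ.2.le,
        integral_rpow (Or.inr ⟨by norm_num, Set.notMem_uIcc_of_lt hρ0 one_pos⟩)]
      rw [Real.one_rpow]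
      have ht : ρ ^ (-(7:ℝ)/6 + 1) = ρ ^ (-(1:ℝ)/6) := by norm_num
      rw [ht]
      have htp : (0:ℝ) < ρ ^ (-(1:ℝ)/6) := Real.rpow_pos_of_pos hρ0 _
      have heq : (1 - ρ ^ (-(1:ℝ)/6)) / (-(7:ℝ)/6 + 1) = 6 * ρ ^ (-(1:ℝ)/6) - 6 := by
        ring
      rw [heq]
      linarith
    have hB : ∫ s in Ioo ρ 1, (s ^ ((5:ℝ)/2) * |F1 s|)^2 ≤ E := by
      have he : ∀ s ∈ Ioo ρ 1, (s ^ ((5:ℝ)/2) * |F1 s|)^2 = (F1 s)^2 * s^(5:ℕ) :=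
        fun s hs => by
          have hs0 : (0:ℝ) < s := hρ0.trans hs.1
          rw [mul_pow, sq_abs, ← Real.rpow_natCast (s ^ ((5:ℝ)/2)) 2,
            ← Real.rpow_mul hs0.le,
            show ((5:ℝ)/2 * ((2:ℕ):ℝ)) = ((5:ℕ):ℝ) by push_cast; ring,
            Real.rpow_natCast]
          ring
      rw [setIntegral_congr_fun measurableSet_Ioo he]
      exact hmono ρ 1 hρ0.le le_rfl
    have hcs := setIntegral_cs hu2 hv2 huv hA hB (by positivity) hE0
    have huveq : ∫ s in Ioo ρ 1, s ^ ((2:ℝ) - 1/12) * |F1 s|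
        = ∫ s in Ioo ρ 1, (s ^ (-(7:ℝ)/12)) * (s ^ ((5:ℝ)/2) * |F1 s|) :=
      setIntegral_congr_fun measurableSet_Ioo fun s hs => by
        have hs0 : (0:ℝ) < s := hρ0.trans hs.1
        rw [← mul_assoc, ← Real.rpow_add hs0]
        norm_num
    have habs : |∫ s in Ioo ρ 1, s ^ ((2:ℝ) - 1/12) * F1 s|
        ≤ ∫ s in Ioo ρ 1, s ^ ((2:ℝ) - 1/12) * |F1 s| := by
      calc |∫ s in Ioo ρ 1, s ^ ((2:ℝ) - 1/12) * F1 s|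
          ≤ ∫ s in Ioo ρ 1, |s ^ ((2:ℝ) - 1/12)| * |F1 s| := by
            simpa [Real.norm_eq_abs] using norm_integral_le_integral_norm
              (μ := volume.restrict (Ioo ρ 1)) (f := fun s : ℝ => s ^ ((2:ℝ) - 1/12) * F1 s)
        _ = ∫ s in Ioo ρ 1, s ^ ((2:ℝ) - 1/12) * |F1 s| :=
            setIntegral_congr_fun measurableSet_Ioo fun s hs => by
              rw [abs_of_pos (Real.rpow_pos_of_pos (hρ0.trans hs.1) _)]
    have hfin : |∫ s in Ioo ρ 1, s ^ ((2:ℝ) - 1/12) * deriv f s|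
        ≤ Real.sqrt (6 * ρ^(-(1:ℝ)/6)) * Real.sqrt E := by
      rw [hgr]
      exact le_trans (le_trans habs (le_of_eq huveq)) hcs
    calc |∫ s in Ioo ρ 1, s ^ ((2:ℝ) - 1/12) * deriv f s|^2
        ≤ (Real.sqrt (6 * ρ^(-(1:ℝ)/6)) * Real.sqrt E)^2 :=
          pow_le_pow_left₀ (abs_nonneg _) hfin 2
      _ = 6 * ρ^(-(1:ℝ)/6) * E := by
          rw [mul_pow, Real.sq_sqrt (by positivity), Real.sq_sqrt hE0]
      _ = 6*E * ρ^(-(1:ℝ)/6) := by ring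
  have hL : ∫ ρ in Ioo (0:ℝ) 1,
      |∫ s in Ioo ρ 1, s ^ ((2:ℝ) - 1/12) * deriv f s|^(12:ℕ) * ρ^(5:ℕ)
      ≤ 10^48 * E^6 := by
    apply integral_le_const (by positivity)
    intro ρ hρ
    have hlp := lhs_pointwise (K := 6*E) (w := -(1:ℝ)/6) (m := 5) hρ.1 hρ.2.le
      (by linarith) (by norm_num) (hptw ρ hρ) (sq_nonneg _)
    calc |∫ s in Ioo ρ 1, s ^ ((2:ℝ) - 1/12) * deriv f s|^(12:ℕ) * ρ^(5:ℕ)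
        = (|∫ s in Ioo ρ 1, s ^ ((2:ℝ) - 1/12) * deriv f s|^2)^(6:ℕ) * ρ^(5:ℕ) := by ring
      _ ≤ (6*E)^(6:ℕ) := hlp
      _ = 6^6 * E^6 := by ring
      _ ≤ 10^48 * E^6 := mul_le_mul_of_nonneg_right (by norm_num) (pow_nonneg hE0 6)
  have hL0 : 0 ≤ ∫ ρ in Ioo (0:ℝ) 1,
      |∫ s in Ioo ρ 1, s ^ ((2:ℝ) - 1/12) * deriv f s|^(12:ℕ) * ρ^(5:ℕ) :=
    setIntegral_nonneg measurableSet_Ioo fun x hx =>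
      mul_nonneg (pow_nonneg (abs_nonneg _) _) (pow_nonneg hx.1.le _)
  rw [hEeq]
  exact final hE0 hL0 hL

lemma part3 {f : ℝ → ℝ} (hf : ContDiffOn ℝ 2 f (Icc 0 1)) :
    (∫ ρ in Ioo (0:ℝ) 1, |f ρ| ^ (12:ℕ) * ρ ^ (16:ℕ)) ^ ((1:ℝ)/12)
      ≤ 10000 * (((∫ ρ in Ioo (0:ℝ) 1, (|f ρ| ^ 2 + |deriv f ρ| ^ 2) * ρ ^ 5)
          + ∫ ρ in Ioo (0:ℝ) 1,
              |deriv (deriv f) ρ + 5 * deriv f ρ / ρ| ^ 2 * ρ ^ 5) ^ ((1:ℝ)/2)) := by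
  obtain ⟨hfc, hF1c, hdf, hde⟩ := setup1 (hf.of_le (by norm_num))
  obtain ⟨hF2c, hdF1, hde2⟩ := setup2 hf
  obtain ⟨hE0, hfB, hmono⟩ := Efacts hfc hF1c
  set F1 := derivWithin f (Icc (0:ℝ) 1) with hF1_def
  set F2 := derivWithin F1 (Icc (0:ℝ) 1) with hF2_def
  set E := ∫ ρ in Ioo (0:ℝ) 1, ((f ρ)^2 + (F1 ρ)^2) * ρ^(5:ℕ) with hE_def
  have hEeq : (∫ ρ in Ioo (0:ℝ) 1, (|f ρ|^2 + |deriv f ρ|^2) * ρ^5) = E :=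
    setIntegral_congr_fun measurableSet_Ioo fun x hx => by rw [hde x hx, sq_abs, sq_abs]
  set Dr := ∫ ρ in Ioo (0:ℝ) 1, (F2 ρ + 5 * F1 ρ / ρ)^2 * ρ^(5:ℕ) with hDr_def
  have hDeq : (∫ ρ in Ioo (0:ℝ) 1, |deriv (deriv f) ρ + 5 * deriv f ρ / ρ|^2 * ρ^5) = Dr :=
    setIntegral_congr_fun measurableSet_Ioo fun x hx => by
      rw [hde x hx, hde2 x hx, sq_abs]
  have hDr0 : 0 ≤ Dr := setIntegral_nonneg measurableSet_Ioo fun x hx =>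
    mul_nonneg (sq_nonneg _) (pow_nonneg hx.1.le _)
  obtain ⟨M1, hM1⟩ := isCompact_Icc.exists_bound_of_continuousOn hF1c
  obtain ⟨M2, hM2⟩ := isCompact_Icc.exists_bound_of_continuousOn hF2c
  have hDint : IntegrableOn (fun s : ℝ => (F2 s + 5 * F1 s / s)^2 * s^(5:ℕ))
      (Ioo (0:ℝ) 1) := by
    apply integrableOn_of_bounded (C := 2*M2^2 + 50*M1^2)
    · apply ContinuousOn.mul
      · apply ContinuousOn.pow
        apply ContinuousOn.add (hF2c.mono Ioo_subset_Icc_self)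
        exact ContinuousOn.div (continuousOn_const.mul (hF1c.mono Ioo_subset_Icc_self))
          continuousOn_id (fun x hx => ne_of_gt hx.1)
      · exact (continuous_pow 5).continuousOn
    · intro x hx
      have hx0 : (0:ℝ) < x := hx.1
      have hb1 : |F1 x| ≤ M1 := by
        have := hM1 x (Ioo_subset_Icc_self hx); rwa [Real.norm_eq_abs] at this
      have hb2 : |F2 x| ≤ M2 := by
        have := hM2 x (Ioo_subset_Icc_self hx); rwa [Real.norm_eq_abs] at this
      have hsq1 : (F1 x)^2 ≤ M1^2 := sq_le_sq' (abs_le.1 hb1).1 (abs_le.1 hb1).2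
      have hsq2 : (F2 x)^2 ≤ M2^2 := sq_le_sq' (abs_le.1 hb2).1 (abs_le.1 hb2).2
      have hnn : 0 ≤ (F2 x + 5 * F1 x / x)^2 * x^(5:ℕ) :=
        mul_nonneg (sq_nonneg _) (pow_nonneg hx0.le _)
      rw [abs_of_nonneg hnn]
      have hsplit : (F2 x + 5 * F1 x / x)^2 ≤ 2*(F2 x)^2 + 2*(5 * F1 x / x)^2 := by
        nlinarith [sq_nonneg (F2 x - 5 * F1 x / x)]
      have hc1 : (F2 x + 5 * F1 x / x)^2 * x^(5:ℕ)
          ≤ (2*(F2 x)^2 + 2*(5 * F1 x / x)^2) * x^(5:ℕ) :=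
        mul_le_mul_of_nonneg_right hsplit (pow_nonneg hx0.le _)
      have hre : (2*(F2 x)^2 + 2*(5 * F1 x / x)^2) * x^(5:ℕ)
          = 2*(F2 x)^2 * x^(5:ℕ) + 50*(F1 x)^2 * x^(3:ℕ) := by
        field_simp
        ring
      have hx5 : x^(5:ℕ) ≤ 1 := pow_le_one₀ hx0.le hx.2.le
      have hx3 : x^(3:ℕ) ≤ 1 := pow_le_one₀ hx0.le hx.2.le
      have ht1 : 2*(F2 x)^2 * x^(5:ℕ) ≤ 2*M2^2 := by
        nlinarith [sq_nonneg (F2 x), pow_nonneg hx0.le 5]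
      have ht2 : 50*(F1 x)^2 * x^(3:ℕ) ≤ 50*M1^2 := by
        nlinarith [sq_nonneg (F1 x), pow_nonneg hx0.le 3]
      rw [hre] at hc1
      linarith
  have hDb : ∀ e b : ℝ, 0 < e → e ≤ b → b ≤ 1 →
      ∫ s in Ioc e b, (F2 s + 5*F1 s/s)^2 * s^(5:ℕ) ≤ Dr := by
    intro e b he heb hb
    rw [integral_Ioc_eq_integral_Ioo]
    exact setIntegral_mono_set hDint
      ((ae_restrict_iff' measurableSet_Ioo).2 (Filter.Eventually.of_forall fun s hs =>
        mul_nonneg (sq_nonneg _) (pow_nonneg hs.1.le _)))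
      ((Ioo_subset_Ioo he.le hb).eventuallyLE)
  have hQ : ∀ a b : ℝ, 0 < a → a ≤ b → b ≤ 1 →
      ∫ s in Ioc a b, (F1 s)^2 * s ^ (3:ℝ) ≤ E + Dr := by
    intro a b ha hab hb
    have he : ∀ s ∈ Ioc a b, (F1 s)^2 * s ^ (3:ℝ) = (F1 s)^2 * s^(3:ℕ) := fun s hs => by
      rw [show (3:ℝ) = ((3:ℕ):ℝ) by norm_num, Real.rpow_natCast]
    rw [setIntegral_congr_fun measurableSet_Ioc he]
    have := ibp hF1c hF2c hdF1 hDb ha hab hb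
    linarith
  have hfB' : ∫ s in Ioc (1/2:ℝ) 1, (f s)^2 * s^(5:ℕ) ≤ E + Dr := by linarith
  have hkey := key hfc hdf hF1c (k := 3) (B := E + Dr) (Q := E + Dr)
    le_rfl (by norm_num) (by linarith) (by linarith) hfB' hQ
  have hL : ∫ ρ in Ioo (0:ℝ) 1, |f ρ|^(12:ℕ) * ρ^(16:ℕ) ≤ 10^48 * (E+Dr)^6 := by
    apply integral_le_const (by positivity)
    intro ρ hρ
    have hc := hkey ρ hρ
    rw [show ((1:ℝ) - 3) = -(2:ℝ) by norm_num] at hc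
    have hx : (f ρ)^2 ≤ 512*(E+Dr) * ρ^(-(2:ℝ)) := by
      calc (f ρ)^2 ≤ 256*((E+Dr)+(E+Dr))*ρ^(-(2:ℝ)) := hc
        _ = 512*(E+Dr) * ρ^(-(2:ℝ)) := by ring
    have hlp := lhs_pointwise (K := 512*(E+Dr)) (w := -(2:ℝ)) (m := 16) hρ.1 hρ.2.le
      (by linarith) (by norm_num) hx (sq_nonneg _)
    calc |f ρ|^(12:ℕ) * ρ^(16:ℕ) = ((f ρ)^2)^(6:ℕ) * ρ^(16:ℕ) := by rw [← sq_abs]; ring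
      _ ≤ (512*(E+Dr))^(6:ℕ) := hlp
      _ = 512^6 * (E+Dr)^6 := by ring
      _ ≤ 10^48 * (E+Dr)^6 :=
          mul_le_mul_of_nonneg_right (by norm_num) (pow_nonneg (by linarith) 6)
  have hL0 : 0 ≤ ∫ ρ in Ioo (0:ℝ) 1, |f ρ|^(12:ℕ) * ρ^(16:ℕ) :=
    setIntegral_nonneg measurableSet_Ioo fun x hx =>
      mul_nonneg (pow_nonneg (abs_nonneg _) _) (pow_nonneg hx.1.le _)
  rw [hEeq, hDeq]
  exact final (by linarith) hL0 hL

end WRB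

open MeasureTheory

/-- Weighted radial inequalities on the unit ball `B⁶₁`:
(i) `(∫₀¹ |f|¹² ρ²⁸)^{1/12} ≲ ‖f‖_{H¹}`, (ii) the same bound for the tail integral
`∫_ρ¹ s^{2−1/12} f′(s) ds`, and (iii) `(∫₀¹ |f|¹² ρ¹⁶)^{1/12} ≲ ‖f‖_{H²}`,
with the radial `H¹`/`H²` quantities on the right-hand sides. -/
theorem weighted_L12_radial_bounds :
    ∃ C > (0:ℝ),
      (∀ f : ℝ → ℝ, ContDiffOn ℝ 1 f (Set.Icc 0 1) →
        (∫ ρ in Set.Ioo (0:ℝ) 1, |f ρ| ^ (12:ℕ) * ρ ^ (28:ℕ)) ^ ((1:ℝ)/12)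
          ≤ C * ((∫ ρ in Set.Ioo (0:ℝ) 1, (|f ρ| ^ 2 + |deriv f ρ| ^ 2) * ρ ^ 5) ^ ((1:ℝ)/2)))
      ∧ (∀ f : ℝ → ℝ, ContDiffOn ℝ 1 f (Set.Icc 0 1) →
        (∫ ρ in Set.Ioo (0:ℝ) 1,
            |∫ s in Set.Ioo ρ 1, s ^ ((2:ℝ) - 1/12) * deriv f s| ^ (12:ℕ) * ρ ^ (5:ℕ))
          ^ ((1:ℝ)/12)
          ≤ C * ((∫ ρ in Set.Ioo (0:ℝ) 1, (|f ρ| ^ 2 + |deriv f ρ| ^ 2) * ρ ^ 5) ^ ((1:ℝ)/2)))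
      ∧ (∀ f : ℝ → ℝ, ContDiffOn ℝ 2 f (Set.Icc 0 1) →
        (∫ ρ in Set.Ioo (0:ℝ) 1, |f ρ| ^ (12:ℕ) * ρ ^ (16:ℕ)) ^ ((1:ℝ)/12)
          ≤ C * (((∫ ρ in Set.Ioo (0:ℝ) 1, (|f ρ| ^ 2 + |deriv f ρ| ^ 2) * ρ ^ 5)
              + ∫ ρ in Set.Ioo (0:ℝ) 1,
                  |deriv (deriv f) ρ + 5 * deriv f ρ / ρ| ^ 2 * ρ ^ 5) ^ ((1:ℝ)/2))) := by
  refine ⟨10000, by norm_num, fun f hf => WRB.part1 hf, fun f hf => WRB.part2 hf,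
    fun f hf => WRB.part3 hf⟩
end
end

section
/- There exists a constant C > 0, independent of R, such that for every R > 0 and every u ∈ C¹([0,R], ℝ): ( ∫₀^R |u(r) + r u′(r)|⁴ r dr )^{1/4} ≤ C [ ( ∫₀^R |u′(r)|⁴ r⁵ dr )^{1/4} + ( ∫₀^R |u(r)|¹² r⁵ dr )^{1/12} ]. -/
noncomputable section

open MeasureTheory

section Helpers

lemma myIntegrableOn {R : ℝ} {f : ℝ → ℝ} (hf : ContinuousOn f (Set.Icc 0 R)) :
    IntegrableOn f (Set.Ioo 0 R) := (hf.integrableOn_Icc).mono_set Set.Ioo_subset_Icc_self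

lemma myFiniteMeasure (R : ℝ) : IsFiniteMeasure (volume.restrict (Set.Ioo (0:ℝ) R)) :=
  ⟨by rw [Measure.restrict_apply_univ]; simp [Real.volume_Ioo]⟩

lemma myMemLp {R p : ℝ} {f : ℝ → ℝ} (hf : ContinuousOn f (Set.Icc 0 R)) :
    MemLp f (ENNReal.ofReal p) (volume.restrict (Set.Ioo 0 R)) := by
  haveI := myFiniteMeasure R
  obtain ⟨C, hC⟩ := (isCompact_Icc).exists_bound_of_continuousOn hf
  refine MemLp.of_bound
    ((hf.mono Set.Ioo_subset_Icc_self).aestronglyMeasurable measurableSet_Ioo) C ?_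
  filter_upwards [ae_restrict_mem measurableSet_Ioo] with r hr
  exact hC r (Set.Ioo_subset_Icc_self hr)

lemma myHolder {R p q : ℝ} (hpq : p.HolderConjugate q)
    {f g : ℝ → ℝ} (hf : ContinuousOn f (Set.Icc 0 R)) (hg : ContinuousOn g (Set.Icc 0 R))
    (hf0 : ∀ r ∈ Set.Ioo 0 R, 0 ≤ f r) (hg0 : ∀ r ∈ Set.Ioo 0 R, 0 ≤ g r) :
    ∫ r in Set.Ioo 0 R, f r * g r ≤
      (∫ r in Set.Ioo 0 R, f r ^ p) ^ (1/p) * (∫ r in Set.Ioo 0 R, g r ^ q) ^ (1/q) := by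
  refine MeasureTheory.integral_mul_le_Lp_mul_Lq_of_nonneg hpq ?_ ?_ (myMemLp hf) (myMemLp hg)
  · exact (ae_restrict_iff' measurableSet_Ioo).2 (ae_of_all _ hf0)
  · exact (ae_restrict_iff' measurableSet_Ioo).2 (ae_of_all _ hg0)

lemma myRpowMul {a : ℝ} (ha : 0 ≤ a) (d p : ℝ) : (a ^ d) ^ p = a ^ (d * p) :=
  (Real.rpow_mul ha d p).symm

lemma myAux {a r : ℝ} (ha : 0 ≤ a) (hr : 0 ≤ r) (d c p : ℝ) :
    ((a ^ d * r ^ c) ^ p : ℝ) = a ^ (d * p) * r ^ (c * p) := by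
  rw [Real.mul_rpow (Real.rpow_nonneg ha d) (Real.rpow_nonneg hr c), myRpowMul ha, myRpowMul hr]

lemma myContOn {R : ℝ} {A : ℝ → ℝ} (hA : ContinuousOn A (Set.Icc 0 R)) {d c : ℝ}
    (hd : 0 ≤ d) (hc : 0 ≤ c) :
    ContinuousOn (fun r : ℝ => A r ^ d * r ^ c) (Set.Icc 0 R) :=
  (hA.rpow_const (fun _ _ => Or.inr hd)).mul
    (continuousOn_id.rpow_const (fun _ _ => Or.inr hc))

lemma myHolderApp {R : ℝ} {A B : ℝ → ℝ}
    (hA : ContinuousOn A (Set.Icc 0 R)) (hB : ContinuousOn B (Set.Icc 0 R))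
    (hA0 : ∀ r, 0 ≤ A r) (hB0 : ∀ r, 0 ≤ B r)
    {dA cA dB cB p q : ℝ} (hdA : 0 ≤ dA) (hcA : 0 ≤ cA) (hdB : 0 ≤ dB) (hcB : 0 ≤ cB)
    (hpq : p.HolderConjugate q) :
    ∫ r in Set.Ioo 0 R, (A r ^ dA * r ^ cA) * (B r ^ dB * r ^ cB) ≤
      (∫ r in Set.Ioo 0 R, A r ^ (dA*p) * r ^ (cA*p)) ^ (1/p) *
      (∫ r in Set.Ioo 0 R, B r ^ (dB*q) * r ^ (cB*q)) ^ (1/q) := by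
  have h := myHolder hpq (myContOn hA hdA hcA) (myContOn hB hdB hcB)
    (fun r hr => mul_nonneg (Real.rpow_nonneg (hA0 r) _) (Real.rpow_nonneg hr.1.le _))
    (fun r hr => mul_nonneg (Real.rpow_nonneg (hB0 r) _) (Real.rpow_nonneg hr.1.le _))
  rwa [MeasureTheory.setIntegral_congr_fun measurableSet_Ioo
      (fun r hr => myAux (hA0 r) hr.1.le dA cA p),
    MeasureTheory.setIntegral_congr_fun measurableSet_Ioo
      (fun r hr => myAux (hB0 r) hr.1.le dB cB q)] at h

lemma myRadd {r : ℝ} (hr : 0 < r) {c d : ℝ} (n : ℕ) (h : c + d = (n:ℝ)) :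
    r ^ c * r ^ d = r ^ n := by rw [← Real.rpow_add hr, h, Real.rpow_natCast]

lemma myRnat (a : ℝ) {c : ℝ} (n : ℕ) (h : c = (n:ℝ)) : a ^ c = a ^ n := by
  rw [h, Real.rpow_natCast]

lemma myRadd' {a : ℝ} (ha : 0 ≤ a) {c d e : ℝ} (h : c + d = e) (he : e ≠ 0) :
    a ^ c * a ^ d = a ^ e := by
  rw [← Real.rpow_add' ha (h ▸ he), h]

lemma myFTC {R : ℝ} (hR : 0 < R) {F f : ℝ → ℝ} (hF : ContinuousOn F (Set.Icc 0 R))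
    (hd : ∀ r ∈ Set.Ioo 0 R, HasDerivAt F (f r) r) (hf : ContinuousOn f (Set.Icc 0 R)) :
    ∫ r in Set.Ioo 0 R, f r = F R - F 0 := by
  have hint : IntervalIntegrable f volume 0 R := by
    apply ContinuousOn.intervalIntegrable
    rwa [Set.uIcc_of_le hR.le]
  have h := intervalIntegral.integral_eq_sub_of_hasDerivAt_of_le hR.le hF hd hint
  rwa [intervalIntegral.integral_of_le hR.le, MeasureTheory.integral_Ioc_eq_integral_Ioo] at h

lemma four_ineq (a b : ℝ) : (a+b)^4 ≤ 8*(a^4+b^4) := by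
  nlinarith [sq_nonneg (a-b), sq_nonneg (a+b), sq_nonneg (a^2-b^2), sq_nonneg (a^2+b^2),
    sq_nonneg (a*b)]

lemma final_alg {x D S t : ℝ} (hx : 0 ≤ x) (hD : 0 ≤ D) (hS : 0 ≤ S) (ht : 0 ≤ t)
    (h1 : 2*x^4 ≤ t^2 + 4*(D*x^3)) (h2 : t^3 ≤ 6*(D*(x^2*S^3)) + 3*(x^3*S^3)) :
    x ≤ 4*(D+S) := by
  set M := D + S with hM
  have hM0 : 0 ≤ M := by positivity
  by_cases hxM : x ≤ M
  · linarith
  push_neg at hxM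
  have hDM : D ≤ M := by rw [hM]; linarith
  have hSM : S ≤ M := by rw [hM]; linarith
  have hS3 : S^3 ≤ M^3 := pow_le_pow_left₀ hS hSM 3
  have e1 : D*(x^2*S^3) ≤ M^3*x^3 := by
    have h' : D*S^3 ≤ M*M^3 := mul_le_mul hDM hS3 (by positivity) hM0
    have h'' : D*S^3*x^2 ≤ M*M^3*x^2 := mul_le_mul_of_nonneg_right h' (sq_nonneg x)
    have h''' : M^3*x^2*M ≤ M^3*x^2*x := mul_le_mul_of_nonneg_left hxM.le (by positivity)
    nlinarith [h'', h''']
  have e2 : x^3*S^3 ≤ M^3*x^3 := by nlinarith [hS3, pow_nonneg hx 3]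
  have ht3 : t^3 ≤ (3*(M*x))^3 := by
    have hMx3 : 0 ≤ M^3*x^3 := by positivity
    nlinarith [e1, e2, hMx3]
  have htin : t ≤ 3*(M*x) := le_of_pow_le_pow_left₀ (by norm_num) (by positivity) ht3
  have ht2 : t^2 ≤ (3*(M*x))^2 := by nlinarith [htin, ht]
  have hx0' : 0 < x := lt_of_le_of_lt hM0 hxM
  by_contra hcon
  push_neg at hcon
  have h4M : 4*M < x := by linarith
  have hb1 : 0 < (x - 4*M)*x^3 := mul_pos (by linarith) (pow_pos hx0' 3)
  have hb2 : 0 < ((x-4*M)*(x-4*M))*x^2 :=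
    mul_pos (mul_pos (by linarith) (by linarith)) (pow_pos hx0' 2)
  have hDx : D*x^3 ≤ M*x^3 := mul_le_mul_of_nonneg_right hDM (pow_nonneg hx 3)
  nlinarith [h1, ht2, hDx, hb1, hb2, pow_pos hx0' 4, sq_nonneg M]

end Helpers

set_option maxHeartbeats 1000000 in
/-- Uniformly in `R > 0`, for `u ∈ C¹([0,R])`:
`(∫₀^R |(ru)′|⁴ r dr)^{1/4} ≤ C [(∫₀^R |u′|⁴ r⁵ dr)^{1/4} + (∫₀^R |u|¹² r⁵ dr)^{1/12}]`,
where `(ru)′ = u + ru′`. -/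
theorem radial_derivative_transfer_bound :
    ∃ C > (0:ℝ), ∀ R > (0:ℝ), ∀ u : ℝ → ℝ, ContDiffOn ℝ 1 u (Set.Icc 0 R) →
      (∫ r in Set.Ioo 0 R, |u r + r * deriv u r| ^ (4:ℕ) * r) ^ ((1:ℝ)/4)
        ≤ C * ((∫ r in Set.Ioo 0 R, |deriv u r| ^ (4:ℕ) * r ^ (5:ℕ)) ^ ((1:ℝ)/4)
            + (∫ r in Set.Ioo 0 R, |u r| ^ (12:ℕ) * r ^ (5:ℕ)) ^ ((1:ℝ)/12)) := by
  refine ⟨10, by norm_num, ?_⟩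
  intro R hR u hu
  set g : ℝ → ℝ := derivWithin u (Set.Icc 0 R) with hgdef
  have hu_c : ContinuousOn u (Set.Icc 0 R) := hu.continuousOn
  have hg_c : ContinuousOn g (Set.Icc 0 R) :=
    hu.continuousOn_derivWithin (uniqueDiffOn_Icc hR) le_rfl
  have hderiv : ∀ r ∈ Set.Ioo 0 R, HasDerivAt u (g r) r := by
    intro r hr
    have h1 : Set.Icc (0:ℝ) R ∈ nhds r := Icc_mem_nhds hr.1 hr.2
    exact ((hu.differentiableOn one_ne_zero r
      (Set.Ioo_subset_Icc_self hr)).hasDerivWithinAt).hasDerivAt h1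
  have hgd : ∀ r ∈ Set.Ioo 0 R, deriv u r = g r := fun r hr => (hderiv r hr).deriv
  rw [show (∫ r in Set.Ioo 0 R, |u r + r * deriv u r| ^ (4:ℕ) * r)
      = ∫ r in Set.Ioo 0 R, |u r + r * g r| ^ (4:ℕ) * r from
    setIntegral_congr_fun measurableSet_Ioo (fun r hr => by rw [hgd r hr]),
    show (∫ r in Set.Ioo 0 R, |deriv u r| ^ (4:ℕ) * r ^ (5:ℕ))
      = ∫ r in Set.Ioo 0 R, |g r| ^ (4:ℕ) * r ^ (5:ℕ) from
    setIntegral_congr_fun measurableSet_Ioo (fun r hr => by rw [hgd r hr])]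
  set I := ∫ r in Set.Ioo 0 R, |u r| ^ (4:ℕ) * r with hIdef
  set D4 := ∫ r in Set.Ioo 0 R, |g r| ^ (4:ℕ) * r ^ (5:ℕ) with hD4def
  set S12 := ∫ r in Set.Ioo 0 R, |u r| ^ (12:ℕ) * r ^ (5:ℕ) with hS12def
  have hI0 : 0 ≤ I := setIntegral_nonneg measurableSet_Ioo
    (fun r hr => mul_nonneg (by positivity) hr.1.le)
  have hD40 : 0 ≤ D4 := setIntegral_nonneg measurableSet_Ioo
    (fun r hr => mul_nonneg (by positivity) (pow_nonneg hr.1.le 5))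
  have hS120 : 0 ≤ S12 := setIntegral_nonneg measurableSet_Ioo
    (fun r hr => mul_nonneg (by positivity) (pow_nonneg hr.1.le 5))
  set x := I ^ ((1:ℝ)/4) with hxdef
  set D := D4 ^ ((1:ℝ)/4) with hDdef
  set S := S12 ^ ((1:ℝ)/12) with hSdef
  have hx0 : 0 ≤ x := Real.rpow_nonneg hI0 _
  have hD0 : 0 ≤ D := Real.rpow_nonneg hD40 _
  have hS0 : 0 ≤ S := Real.rpow_nonneg hS120 _
  have hx4 : x ^ (4:ℕ) = I := by
    rw [hxdef, ← Real.rpow_natCast (I ^ ((1:ℝ)/4)) 4, ← Real.rpow_mul hI0]; norm_num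
  have hD44 : D ^ (4:ℕ) = D4 := by
    rw [hDdef, ← Real.rpow_natCast (D4 ^ ((1:ℝ)/4)) 4, ← Real.rpow_mul hD40]; norm_num
  have hx3 : I ^ ((3:ℝ)/4) = x ^ (3:ℕ) := by
    rw [hxdef, ← Real.rpow_natCast (I ^ ((1:ℝ)/4)) 3, ← Real.rpow_mul hI0]; norm_num
  have hx2 : I ^ ((1:ℝ)/2) = x ^ (2:ℕ) := by
    rw [hxdef, ← Real.rpow_natCast (I ^ ((1:ℝ)/4)) 2, ← Real.rpow_mul hI0]; norm_num
  have hS3 : S12 ^ ((1:ℝ)/4) = S ^ (3:ℕ) := by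
    rw [hSdef, ← Real.rpow_natCast (S12 ^ ((1:ℝ)/12)) 3, ← Real.rpow_mul hS120]; norm_num
  -- Hölder 1
  have hJ : (∫ r in Set.Ioo 0 R, |u r| ^ (3:ℕ) * |g r| * r ^ (2:ℕ)) ≤ D * x ^ (3:ℕ) := by
    have key := myHolderApp (R := R) hg_c.abs hu_c.abs (fun r => abs_nonneg _)
      (fun r => abs_nonneg _) (dA := 1) (cA := 5/4) (dB := 3) (cB := 3/4) (p := 4) (q := 4/3)
      (by norm_num) (by norm_num) (by norm_num) (by norm_num) ⟨by norm_num, by norm_num, by norm_num⟩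
    beta_reduce at key
    rw [MeasureTheory.setIntegral_congr_fun (f := fun r : ℝ =>
          (|g r| ^ (1:ℝ) * r ^ ((5:ℝ)/4)) * (|u r| ^ (3:ℝ) * r ^ ((3:ℝ)/4)))
        (g := fun r : ℝ => |u r| ^ (3:ℕ) * |g r| * r ^ (2:ℕ)) measurableSet_Ioo
        (fun r hr => by
          beta_reduce
          rw [mul_mul_mul_comm, myRadd hr.1 2 (by norm_num), Real.rpow_one,
            myRnat _ 3 (by norm_num)]; ring),
      MeasureTheory.setIntegral_congr_fun (f := fun r : ℝ =>
          |g r| ^ ((1:ℝ)*4) * r ^ ((5:ℝ)/4*4))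
        (g := fun r : ℝ => |g r| ^ (4:ℕ) * r ^ (5:ℕ)) measurableSet_Ioo
        (fun r hr => by beta_reduce; rw [myRnat _ 4 (by norm_num), myRnat _ 5 (by norm_num)]),
      MeasureTheory.setIntegral_congr_fun (f := fun r : ℝ =>
          |u r| ^ ((3:ℝ)*(4/3)) * r ^ ((3:ℝ)/4*(4/3)))
        (g := fun r : ℝ => |u r| ^ (4:ℕ) * r) measurableSet_Ioo
        (fun r hr => by beta_reduce; rw [myRnat _ 4 (by norm_num), myRnat _ 1 (by norm_num), pow_one]),
      show (1/((4:ℝ)/3)) = (3:ℝ)/4 by norm_num, ← hIdef, ← hD4def, hx3, ← hDdef] at key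
    exact key
  -- Hölder 2
  have hP : (∫ r in Set.Ioo 0 R, |u r| ^ (6:ℕ) * r ^ (2:ℕ)) ≤ x ^ (3:ℕ) * S ^ (3:ℕ) := by
    have key := myHolderApp (R := R) hu_c.abs hu_c.abs (fun r => abs_nonneg _)
      (fun r => abs_nonneg _) (dA := 3) (cA := 3/4) (dB := 3) (cB := 5/4) (p := 4/3) (q := 4)
      (by norm_num) (by norm_num) (by norm_num) (by norm_num) ⟨by norm_num, by norm_num, by norm_num⟩
    beta_reduce at key
    rw [MeasureTheory.setIntegral_congr_fun (f := fun r : ℝ =>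
          (|u r| ^ (3:ℝ) * r ^ ((3:ℝ)/4)) * (|u r| ^ (3:ℝ) * r ^ ((5:ℝ)/4)))
        (g := fun r : ℝ => |u r| ^ (6:ℕ) * r ^ (2:ℕ)) measurableSet_Ioo
        (fun r hr => by
          beta_reduce
          rw [mul_mul_mul_comm, myRadd hr.1 2 (by norm_num), myRnat _ 3 (by norm_num)]
          ring),
      MeasureTheory.setIntegral_congr_fun (f := fun r : ℝ =>
          |u r| ^ ((3:ℝ)*(4/3)) * r ^ ((3:ℝ)/4*(4/3)))
        (g := fun r : ℝ => |u r| ^ (4:ℕ) * r) measurableSet_Ioo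
        (fun r hr => by beta_reduce
                        rw [myRnat _ 4 (by norm_num), myRnat _ 1 (by norm_num), pow_one]),
      MeasureTheory.setIntegral_congr_fun (f := fun r : ℝ =>
          |u r| ^ ((3:ℝ)*4) * r ^ ((5:ℝ)/4*4))
        (g := fun r : ℝ => |u r| ^ (12:ℕ) * r ^ (5:ℕ)) measurableSet_Ioo
        (fun r hr => by beta_reduce
                        rw [myRnat _ 12 (by norm_num), myRnat _ 5 (by norm_num)]),
      show (1/((4:ℝ)/3)) = (3:ℝ)/4 by norm_num, ← hIdef, ← hS12def, hx3, hS3] at key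
    exact key
  -- Hölder 3
  set W := ∫ r in Set.Ioo 0 R, |u r| ^ ((20:ℝ)/3) * r ^ ((7:ℝ)/3) with hWdef
  have hW0 : 0 ≤ W := setIntegral_nonneg measurableSet_Ioo
    (fun r hr => mul_nonneg (Real.rpow_nonneg (abs_nonneg _) _) (Real.rpow_nonneg hr.1.le _))
  have hQ : (∫ r in Set.Ioo 0 R, |u r| ^ (5:ℕ) * |g r| * r ^ (3:ℕ)) ≤ D * W ^ ((3:ℝ)/4) := by
    have key := myHolderApp (R := R) hg_c.abs hu_c.abs (fun r => abs_nonneg _)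
      (fun r => abs_nonneg _) (dA := 1) (cA := 5/4) (dB := 5) (cB := 7/4) (p := 4) (q := 4/3)
      (by norm_num) (by norm_num) (by norm_num) (by norm_num) ⟨by norm_num, by norm_num, by norm_num⟩
    beta_reduce at key
    rw [MeasureTheory.setIntegral_congr_fun (f := fun r : ℝ =>
          (|g r| ^ (1:ℝ) * r ^ ((5:ℝ)/4)) * (|u r| ^ (5:ℝ) * r ^ ((7:ℝ)/4)))
        (g := fun r : ℝ => |u r| ^ (5:ℕ) * |g r| * r ^ (3:ℕ)) measurableSet_Ioo
        (fun r hr => by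
          beta_reduce
          rw [mul_mul_mul_comm, myRadd hr.1 3 (by norm_num), Real.rpow_one,
            myRnat _ 5 (by norm_num)]
          ring),
      MeasureTheory.setIntegral_congr_fun (f := fun r : ℝ =>
          |g r| ^ ((1:ℝ)*4) * r ^ ((5:ℝ)/4*4))
        (g := fun r : ℝ => |g r| ^ (4:ℕ) * r ^ (5:ℕ)) measurableSet_Ioo
        (fun r hr => by beta_reduce
                        rw [myRnat _ 4 (by norm_num), myRnat _ 5 (by norm_num)]),
      MeasureTheory.setIntegral_congr_fun (f := fun r : ℝ =>
          |u r| ^ ((5:ℝ)*(4/3)) * r ^ ((7:ℝ)/4*(4/3)))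
        (g := fun r : ℝ => |u r| ^ ((20:ℝ)/3) * r ^ ((7:ℝ)/3)) measurableSet_Ioo
        (fun r hr => by
          beta_reduce
          rw [show ((5:ℝ)*(4/3)) = (20:ℝ)/3 by norm_num,
            show ((7:ℝ)/4*(4/3)) = (7:ℝ)/3 by norm_num]),
      show (1/((4:ℝ)/3)) = (3:ℝ)/4 by norm_num, ← hD4def, ← hWdef, ← hDdef] at key
    exact key
  -- Hölder 4
  have hW : W ≤ I ^ ((2:ℝ)/3) * S12 ^ ((1:ℝ)/3) := by
    have key := myHolderApp (R := R) hu_c.abs hu_c.abs (fun r => abs_nonneg _)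
      (fun r => abs_nonneg _) (dA := 8/3) (cA := 2/3) (dB := 4) (cB := 5/3) (p := 3/2) (q := 3)
      (by norm_num) (by norm_num) (by norm_num) (by norm_num) ⟨by norm_num, by norm_num, by norm_num⟩
    beta_reduce at key
    rw [MeasureTheory.setIntegral_congr_fun (f := fun r : ℝ =>
          (|u r| ^ ((8:ℝ)/3) * r ^ ((2:ℝ)/3)) * (|u r| ^ (4:ℝ) * r ^ ((5:ℝ)/3)))
        (g := fun r : ℝ => |u r| ^ ((20:ℝ)/3) * r ^ ((7:ℝ)/3)) measurableSet_Ioo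
        (fun r hr => by
          beta_reduce
          rw [mul_mul_mul_comm, myRadd' (abs_nonneg (u r))
              (show (8:ℝ)/3 + 4 = (20:ℝ)/3 by norm_num) (by norm_num),
            myRadd' hr.1.le (show (2:ℝ)/3 + 5/3 = (7:ℝ)/3 by norm_num) (by norm_num)]),
      MeasureTheory.setIntegral_congr_fun (f := fun r : ℝ =>
          |u r| ^ ((8:ℝ)/3*(3/2)) * r ^ ((2:ℝ)/3*(3/2)))
        (g := fun r : ℝ => |u r| ^ (4:ℕ) * r) measurableSet_Ioo
        (fun r hr => by beta_reduce
                        rw [myRnat _ 4 (by norm_num), myRnat _ 1 (by norm_num), pow_one]),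
      MeasureTheory.setIntegral_congr_fun (f := fun r : ℝ =>
          |u r| ^ ((4:ℝ)*3) * r ^ ((5:ℝ)/3*3))
        (g := fun r : ℝ => |u r| ^ (12:ℕ) * r ^ (5:ℕ)) measurableSet_Ioo
        (fun r hr => by beta_reduce
                        rw [myRnat _ 12 (by norm_num), myRnat _ 5 (by norm_num)]),
      show (1/((3:ℝ)/2)) = (2:ℝ)/3 by norm_num, ← hIdef, ← hS12def, ← hWdef] at key
    exact key
  have hQ2 : (∫ r in Set.Ioo 0 R, |u r| ^ (5:ℕ) * |g r| * r ^ (3:ℕ))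
      ≤ D * (x ^ (2:ℕ) * S ^ (3:ℕ)) := by
    refine hQ.trans (mul_le_mul_of_nonneg_left ?_ hD0)
    calc W ^ ((3:ℝ)/4) ≤ (I ^ ((2:ℝ)/3) * S12 ^ ((1:ℝ)/3)) ^ ((3:ℝ)/4) :=
          Real.rpow_le_rpow hW0 hW (by norm_num)
      _ = x ^ (2:ℕ) * S ^ (3:ℕ) := by
          rw [Real.mul_rpow (Real.rpow_nonneg hI0 _) (Real.rpow_nonneg hS120 _),
            myRpowMul hI0, myRpowMul hS120, show ((2:ℝ)/3*(3/4)) = (1:ℝ)/2 by norm_num,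
            show ((1:ℝ)/3*(3/4)) = (1:ℝ)/4 by norm_num, hx2, hS3]
  -- FTC 1
  have hFTC1 : 4*(∫ r in Set.Ioo 0 R, (u r)^(3:ℕ)*(g r)*r^(2:ℕ))
      + 2*(∫ r in Set.Ioo 0 R, (u r)^(4:ℕ)*r) = (u R)^(4:ℕ) * R^(2:ℕ) := by
    have hint_a : IntegrableOn (fun r : ℝ => (u r)^(3:ℕ)*(g r)*r^(2:ℕ)) (Set.Ioo 0 R) :=
      myIntegrableOn (((hu_c.pow 3).mul hg_c).mul (continuousOn_id.pow 2))
    have hint_b : IntegrableOn (fun r : ℝ => (u r)^(4:ℕ)*r) (Set.Ioo 0 R) :=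
      myIntegrableOn ((hu_c.pow 4).mul continuousOn_id)
    have hF : ∫ r in Set.Ioo 0 R, (4*((u r)^(3:ℕ)*(g r)*r^(2:ℕ)) + 2*((u r)^(4:ℕ)*r))
        = (u R)^(4:ℕ)*R^(2:ℕ) := by
      have hd : ∀ r ∈ Set.Ioo 0 R, HasDerivAt (fun y => (u y)^(4:ℕ) * y^(2:ℕ))
          (4*((u r)^(3:ℕ)*(g r)*r^(2:ℕ)) + 2*((u r)^(4:ℕ)*r)) r := by
        intro r hr
        have h : HasDerivAt (fun y => (u y)^(4:ℕ) * y^(2:ℕ))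
            (((4:ℕ):ℝ) * u r ^ (4 - 1) * g r * r ^ 2 + u r ^ 4 * (((2:ℕ):ℝ) * r ^ (2 - 1))) r :=
          ((hderiv r hr).pow 4).mul (hasDerivAt_pow 2 r)
        convert h using 1
        norm_num; ring
      have hres := myFTC hR ((hu_c.pow 4).mul (continuousOn_id.pow 2)) hd
        ((continuousOn_const.mul (((hu_c.pow 3).mul hg_c).mul (continuousOn_id.pow 2))).add
          (continuousOn_const.mul ((hu_c.pow 4).mul continuousOn_id)))
      simpa using hres
    rw [MeasureTheory.integral_add (hint_a.const_mul 4) (hint_b.const_mul 2),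
      MeasureTheory.integral_const_mul, MeasureTheory.integral_const_mul] at hF
    exact hF
  -- FTC 2
  have hFTC2 : 6*(∫ r in Set.Ioo 0 R, (u r)^(5:ℕ)*(g r)*r^(3:ℕ))
      + 3*(∫ r in Set.Ioo 0 R, (u r)^(6:ℕ)*r^(2:ℕ)) = (u R)^(6:ℕ) * R^(3:ℕ) := by
    have hint_a : IntegrableOn (fun r : ℝ => (u r)^(5:ℕ)*(g r)*r^(3:ℕ)) (Set.Ioo 0 R) :=
      myIntegrableOn (((hu_c.pow 5).mul hg_c).mul (continuousOn_id.pow 3))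
    have hint_b : IntegrableOn (fun r : ℝ => (u r)^(6:ℕ)*r^(2:ℕ)) (Set.Ioo 0 R) :=
      myIntegrableOn ((hu_c.pow 6).mul (continuousOn_id.pow 2))
    have hF : ∫ r in Set.Ioo 0 R, (6*((u r)^(5:ℕ)*(g r)*r^(3:ℕ)) + 3*((u r)^(6:ℕ)*r^(2:ℕ)))
        = (u R)^(6:ℕ)*R^(3:ℕ) := by
      have hd : ∀ r ∈ Set.Ioo 0 R, HasDerivAt (fun y => (u y)^(6:ℕ) * y^(3:ℕ))
          (6*((u r)^(5:ℕ)*(g r)*r^(3:ℕ)) + 3*((u r)^(6:ℕ)*r^(2:ℕ))) r := by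
        intro r hr
        have h : HasDerivAt (fun y => (u y)^(6:ℕ) * y^(3:ℕ))
            (((6:ℕ):ℝ) * u r ^ (6 - 1) * g r * r ^ 3 + u r ^ 6 * (((3:ℕ):ℝ) * r ^ (3 - 1))) r :=
          ((hderiv r hr).pow 6).mul (hasDerivAt_pow 3 r)
        convert h using 1
        norm_num; ring
      have hres := myFTC hR ((hu_c.pow 6).mul (continuousOn_id.pow 3)) hd
        ((continuousOn_const.mul (((hu_c.pow 5).mul hg_c).mul (continuousOn_id.pow 3))).add
          (continuousOn_const.mul ((hu_c.pow 6).mul (continuousOn_id.pow 2))))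
      simpa using hres
    rw [MeasureTheory.integral_add (hint_a.const_mul 6) (hint_b.const_mul 3),
      MeasureTheory.integral_const_mul, MeasureTheory.integral_const_mul] at hF
    exact hF
  -- absolute value bounds
  have habs1 : |∫ r in Set.Ioo 0 R, (u r)^(3:ℕ)*(g r)*r^(2:ℕ)|
      ≤ ∫ r in Set.Ioo 0 R, |u r| ^ (3:ℕ) * |g r| * r ^ (2:ℕ) := by
    have hn := MeasureTheory.norm_integral_le_integral_norm
      (μ := volume.restrict (Set.Ioo 0 R)) (f := fun r : ℝ => (u r)^(3:ℕ)*(g r)*r^(2:ℕ))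
    simp only [Real.norm_eq_abs] at hn
    refine hn.trans (le_of_eq (setIntegral_congr_fun measurableSet_Ioo (fun r hr => ?_)))
    beta_reduce
    rw [abs_mul, abs_mul, abs_pow, abs_pow, sq_abs]
  have habs2 : |∫ r in Set.Ioo 0 R, (u r)^(5:ℕ)*(g r)*r^(3:ℕ)|
      ≤ ∫ r in Set.Ioo 0 R, |u r| ^ (5:ℕ) * |g r| * r ^ (3:ℕ) := by
    have hn := MeasureTheory.norm_integral_le_integral_norm
      (μ := volume.restrict (Set.Ioo 0 R)) (f := fun r : ℝ => (u r)^(5:ℕ)*(g r)*r^(3:ℕ))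
    simp only [Real.norm_eq_abs] at hn
    refine hn.trans (le_of_eq (setIntegral_congr_fun measurableSet_Ioo (fun r hr => ?_)))
    beta_reduce
    rw [abs_mul, abs_mul, abs_pow, abs_pow, abs_of_nonneg hr.1.le]
  have hI' : (∫ r in Set.Ioo 0 R, (u r)^(4:ℕ)*r) = I :=
    setIntegral_congr_fun measurableSet_Ioo
      (fun r hr => by beta_reduce; rw [Even.pow_abs (by decide)])
  have hP' : (∫ r in Set.Ioo 0 R, (u r)^(6:ℕ)*r^(2:ℕ))
      = ∫ r in Set.Ioo 0 R, |u r| ^ (6:ℕ) * r ^ (2:ℕ) :=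
    setIntegral_congr_fun measurableSet_Ioo
      (fun r hr => by beta_reduce; rw [Even.pow_abs (by decide)])
  set t := (u R)^(2:ℕ) * R with htdef
  have ht0 : 0 ≤ t := mul_nonneg (sq_nonneg _) hR.le
  have h1 : 2*x^(4:ℕ) ≤ t^(2:ℕ) + 4*(D*x^(3:ℕ)) := by
    have e : t^(2:ℕ) = (u R)^(4:ℕ) * R^(2:ℕ) := by rw [htdef]; ring
    have hn := neg_abs_le (∫ r in Set.Ioo 0 R, (u r)^(3:ℕ)*(g r)*r^(2:ℕ))
    rw [hx4, ← hI']
    linarith [hFTC1, habs1, hJ, hn, e, hI']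
  have h2 : t^(3:ℕ) ≤ 6*(D*(x^(2:ℕ)*S^(3:ℕ))) + 3*(x^(3:ℕ)*S^(3:ℕ)) := by
    have e : t^(3:ℕ) = (u R)^(6:ℕ) * R^(3:ℕ) := by rw [htdef]; ring
    have hn := neg_abs_le (∫ r in Set.Ioo 0 R, (u r)^(5:ℕ)*(g r)*r^(3:ℕ))
    linarith [hFTC2, habs2, hQ2, hP, e, hP',
      le_abs_self (∫ r in Set.Ioo 0 R, (u r)^(5:ℕ)*(g r)*r^(3:ℕ))]
  have hxb : x ≤ 4*(D+S) := final_alg hx0 hD0 hS0 ht0 h1 h2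
  -- assembly
  have hLb : (∫ r in Set.Ioo 0 R, |u r + r * g r| ^ (4:ℕ) * r) ≤ 8*(I + D4) := by
    have hfc : ContinuousOn (fun r : ℝ => |u r + r * g r| ^ (4:ℕ) * r) (Set.Icc 0 R) :=
      ((hu_c.add (continuousOn_id.mul hg_c)).abs.pow 4).mul continuousOn_id
    have hgc2a : ContinuousOn (fun r : ℝ => |u r| ^ (4:ℕ) * r) (Set.Icc 0 R) :=
      (hu_c.abs.pow 4).mul continuousOn_id
    have hgc2b : ContinuousOn (fun r : ℝ => |g r| ^ (4:ℕ) * r ^ (5:ℕ)) (Set.Icc 0 R) :=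
      (hg_c.abs.pow 4).mul (continuousOn_id.pow 5)
    have hgc2 : ContinuousOn
        (fun r : ℝ => 8 * (|u r| ^ (4:ℕ) * r + |g r| ^ (4:ℕ) * r ^ (5:ℕ))) (Set.Icc 0 R) :=
      continuousOn_const.mul (hgc2a.add hgc2b)
    have hm := setIntegral_mono_on (g := fun r : ℝ =>
        8 * (|u r| ^ (4:ℕ) * r + |g r| ^ (4:ℕ) * r ^ (5:ℕ)))
      (myIntegrableOn hfc) (myIntegrableOn hgc2) measurableSet_Ioo
      (fun r hr => by
        beta_reduce
        rw [Even.pow_abs (by decide : Even 4), Even.pow_abs (by decide : Even 4),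
          Even.pow_abs (by decide : Even 4)]
        calc (u r + r*g r)^(4:ℕ) * r ≤ 8*((u r)^4 + (r*g r)^4) * r :=
              mul_le_mul_of_nonneg_right (four_ineq (u r) (r * g r)) hr.1.le
          _ = 8*((u r)^(4:ℕ)*r + (g r)^(4:ℕ)*r^(5:ℕ)) := by ring)
    rw [MeasureTheory.integral_const_mul,
      MeasureTheory.integral_add (myIntegrableOn hgc2a) (myIntegrableOn hgc2b),
      ← hIdef, ← hD4def] at hm
    exact hm
  have hIL0 : 0 ≤ ∫ r in Set.Ioo 0 R, |u r + r * g r| ^ (4:ℕ) * r :=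
    setIntegral_nonneg measurableSet_Ioo (fun r hr => mul_nonneg (by positivity) hr.1.le)
  calc (∫ r in Set.Ioo 0 R, |u r + r * g r| ^ (4:ℕ) * r) ^ ((1:ℝ)/4)
      ≤ ((2*(x+D))^(4:ℕ)) ^ ((1:ℝ)/4) := by
        refine Real.rpow_le_rpow hIL0 (hLb.trans ?_) (by norm_num)
        rw [← hx4, ← hD44]
        have hmid : 0 ≤ 4*x^3*D + 6*x^2*D^2 + 4*x*D^3 := by positivity
        have hexp : (2*(x+D))^(4:ℕ)
            = 16*(x^4 + (4*x^3*D + 6*x^2*D^2 + 4*x*D^3) + D^4) := by ring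
        linarith [pow_nonneg hx0 4, pow_nonneg hD0 4, hmid, hexp]
    _ = 2*(x+D) := by
        rw [← Real.rpow_natCast (2*(x+D)) 4, myRpowMul (by positivity)]
        norm_num
    _ ≤ 10*(D + S) := by linarith [hxb, hS0, hD0]
end
end
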